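/- arXiv:2106.08082 — 6 statements merged into one kernel-verified Lean document; each statement's English description precedes it below -/
import Mathlib

section
/- (Double first derivative test) Let f be double differentiable on a double open interval (a,b) and let c ∈ (a,b) satisfy f'(c) = 0. (a) If f'(x) < 0 whenever a < x < c or c < x < b, and f'(x) > 0 whenever (a₁,c₂) < x < (c₁,b₂) or (c₁,a₂) < x < (b₁,c₂), then c is a double maximum point for f on (a,b). (b) If f'(x) > 0 whenever a < x < c or c < x < b, and f'(x) < 0 whenever (a₁,c₂) < x < (c₁,b₂) or (c₁,a₂) < x < (b₁,c₂), then c is a double minimum point for f on (a,b). -/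
open Set Filter Topology MeasureTheory

noncomputable section

/-- The double difference of `f` from `a` to `b`:
`Δ_a^b(f) = f(b₁,b₂) − f(b₁,a₂) − f(a₁,b₂) + f(a₁,a₂)`. -/
def dDiff (f : ℝ × ℝ → ℝ) (a b : ℝ × ℝ) : ℝ :=
  f (b.1, b.2) - f (b.1, a.2) - f (a.1, b.2) + f (a.1, a.2)

/-- The double mean slope of `f` from `a` to `b`. -/
def dSlope (f : ℝ × ℝ → ℝ) (a b : ℝ × ℝ) : ℝ :=
  dDiff f a b / ((b.1 - a.1) * (b.2 - a.2))

/-- The double limit of `g` at `a` equals `L`, restricted to the set `S`. -/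
def DoubleLimWithin (g : ℝ × ℝ → ℝ) (S : Set (ℝ × ℝ)) (a : ℝ × ℝ) (L : ℝ) : Prop :=
  ∀ ε > 0, ∃ δ₁ > 0, ∃ δ₂ > 0, ∀ x ∈ S,
    0 < |x.1 - a.1| → |x.1 - a.1| < δ₁ → 0 < |x.2 - a.2| → |x.2 - a.2| < δ₂ →
      |g x - L| < ε

/-- The (unrestricted) double limit of `g` at `a` equals `L`. -/
def DoubleLim (g : ℝ × ℝ → ℝ) (a : ℝ × ℝ) (L : ℝ) : Prop :=
  DoubleLimWithin g Set.univ a L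

/-- `f` has double derivative `L` at `a`, where the double limit of mean slopes is
restricted to the set `S` (this yields the signed/one-sided notions at boundary
points when `S` is a double interval). -/
def HasDoubleDerivWithinAt (f : ℝ × ℝ → ℝ) (S : Set (ℝ × ℝ)) (a : ℝ × ℝ) (L : ℝ) : Prop :=
  DoubleLimWithin (fun x => dSlope f a x) S a L

/-- `f` has double derivative `L` at `a`. -/
def HasDoubleDerivAt (f : ℝ × ℝ → ℝ) (a : ℝ × ℝ) (L : ℝ) : Prop :=
  DoubleLim (fun x => dSlope f a x) a L

/-- `f` is double continuous on the double interval `S₁ × S₂` (at boundary points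
this amounts to the appropriate signed/one-sided double continuity). -/
def DoubleContinuousOn (f : ℝ × ℝ → ℝ) (S₁ S₂ : Set ℝ) : Prop :=
  ∀ a₁ ∈ S₁, ∀ a₂ ∈ S₂, ∃ δ₁ > 0, ∃ δ₂ > 0,
    (∀ x₁ ∈ Set.Ioo (a₁ - δ₁) (a₁ + δ₁) ∩ S₁,
      Filter.Tendsto (fun x₂ => dDiff f (a₁, a₂) (x₁, x₂))
        (nhdsWithin a₂ (S₂ \ {a₂})) (nhds 0)) ∧
    (∀ x₂ ∈ Set.Ioo (a₂ - δ₂) (a₂ + δ₂) ∩ S₂,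
      Filter.Tendsto (fun x₁ => dDiff f (a₁, a₂) (x₁, x₂))
        (nhdsWithin a₁ (S₁ \ {a₁})) (nhds 0))

section Aux

/-- Quantitative estimate from double differentiability. -/
lemma hdd_est {f : ℝ × ℝ → ℝ} {p : ℝ × ℝ} {L : ℝ} (h : HasDoubleDerivAt f p L) :
    ∀ ε > (0:ℝ), ∃ δ₁ > (0:ℝ), ∃ δ₂ > (0:ℝ), ∀ q : ℝ × ℝ,
      0 < |q.1 - p.1| → |q.1 - p.1| < δ₁ → 0 < |q.2 - p.2| → |q.2 - p.2| < δ₂ →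
      |dDiff f p q - L * ((q.1 - p.1) * (q.2 - p.2))| ≤ ε * (|q.1 - p.1| * |q.2 - p.2|) := by
  intro ε hε
  obtain ⟨δ₁, hδ₁, δ₂, hδ₂, H⟩ := h ε hε
  refine ⟨δ₁, hδ₁, δ₂, hδ₂, ?_⟩
  intro q h1 h1' h2 h2'
  have hne : (q.1 - p.1) * (q.2 - p.2) ≠ 0 := by
    have := mul_pos h1 h2
    rw [← abs_mul] at this
    exact fun h => by simp [h] at this
  have hs : |dDiff f p q / ((q.1 - p.1) * (q.2 - p.2)) - L| < ε :=
    H q (Set.mem_univ q) h1 h1' h2 h2'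
  have key : dDiff f p q - L * ((q.1 - p.1) * (q.2 - p.2)) =
      (dDiff f p q / ((q.1 - p.1) * (q.2 - p.2)) - L) * ((q.1 - p.1) * (q.2 - p.2)) := by
    rw [sub_mul _ L, div_mul_cancel₀ _ hne]
  rw [key, abs_mul, abs_mul, ← abs_mul]
  exact mul_le_mul_of_nonneg_right hs.le (abs_nonneg _)

/-- Local-to-global monotonicity principle via a sup argument. -/
lemma local_to_global {α β : ℝ} (R : ℝ → ℝ → Prop)
    (htrans : ∀ s s' s'', α ≤ s → s < s' → s' < s'' → s'' ≤ β → R s s' → R s' s'' → R s s'')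
    (hloc : ∀ s, α ≤ s → s ≤ β → ∃ δ > (0:ℝ), ∀ s', α ≤ s' → s' ≤ β →
      ((s < s' → s' < s + δ → R s s') ∧ (s - δ < s' → s' < s → R s' s))) :
    ∀ s s', α ≤ s → s < s' → s' ≤ β → R s s' := by
  intro s s' hαs hss' hs'β
  set S : Set ℝ := {t | t ∈ Set.Icc s β ∧ ∀ r, s < r → r ≤ t → R s r} with hS
  have hsS : s ∈ S := ⟨⟨le_refl _, hss'.le.trans hs'β⟩,
    fun r h1 h2 => absurd (h1.trans_le h2) (lt_irrefl _)⟩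
  have hne : S.Nonempty := ⟨s, hsS⟩
  have hbdd : BddAbove S := ⟨β, fun t ht => ht.1.2⟩
  have hsT : s ≤ sSup S := le_csSup hbdd hsS
  have hTβ : sSup S ≤ β := csSup_le hne (fun t ht => ht.1.2)
  have hαT : α ≤ sSup S := hαs.trans hsT
  have claim1 : ∀ r, s < r → r < sSup S → R s r := by
    intro r h1 h2
    obtain ⟨t, htS, hrt⟩ := exists_lt_of_lt_csSup hne h2
    exact htS.2 r h1 hrt.le
  have claimT' : s < sSup S → R s (sSup S) := by
    intro hsT'
    obtain ⟨δ, hδ, Hloc⟩ := hloc (sSup S) hαT hTβ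
    set u := (max s (sSup S - δ/2) + sSup S) / 2 with hu
    have hm : max s (sSup S - δ/2) < sSup S := max_lt hsT' (by linarith)
    have hu1 : max s (sSup S - δ/2) < u := by rw [hu]; linarith
    have hu2 : u < sSup S := by rw [hu]; linarith
    have hsu : s < u := (le_max_left _ _).trans_lt hu1
    have hRu : R u (sSup S) := (Hloc u (hαs.trans hsu.le) (hu2.le.trans hTβ)).2
      (lt_of_le_of_lt (by linarith [le_max_right s (sSup S - δ/2)]) hu1) hu2
    exact htrans s u (sSup S) hαs hsu hu2 hTβ (claim1 u hsu hu2) hRu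
  have claimT : ∀ r, s < r → r ≤ sSup S → R s r := by
    intro r h1 h2
    rcases lt_or_eq_of_le h2 with h2 | h2
    · exact claim1 r h1 h2
    · rw [h2]; exact claimT' (h2 ▸ h1)
  have hTb : sSup S = β := by
    by_contra hne'
    have hTβ' : sSup S < β := lt_of_le_of_ne hTβ hne'
    obtain ⟨δ, hδ, Hloc⟩ := hloc (sSup S) hαT hTβ
    set t'' := min β (sSup S + δ/2) with ht''
    have h1 : sSup S < t'' := lt_min hTβ' (by linarith)
    have h2 : t'' ≤ β := min_le_left _ _
    have h3 : t'' < sSup S + δ := (min_le_right _ _).trans_lt (by linarith)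
    have ht''S : t'' ∈ S := by
      refine ⟨⟨hsT.trans h1.le, h2⟩, ?_⟩
      intro r hr1 hr2
      rcases le_or_gt r (sSup S) with hrT | hrT
      · exact claimT r hr1 hrT
      · have hRr : R (sSup S) r := (Hloc r (hαs.trans hr1.le) (hr2.trans h2)).1 hrT
          (lt_of_le_of_lt hr2 h3)
        rcases lt_or_eq_of_le hsT with hsT' | hsT'
        · exact htrans s (sSup S) r hαs hsT' hrT (hr2.trans h2) (claimT' hsT') hRr
        · rw [← hsT'] at hRr; exact hRr
    exact absurd (le_csSup hbdd ht''S) (not_le.mpr h1)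
  exact claimT s' hss' (hs'β.trans_eq hTb.symm)

end Aux
section Strip

/-- Horizontal strip with strictly negative derivative along the segment. -/
lemma stripNeg (f : ℝ × ℝ → ℝ) (t σ0 σ1 : ℝ) (h01 : σ0 < σ1)
    (hder : ∀ s, σ0 ≤ s → s ≤ σ1 → ∃ L < (0:ℝ), HasDoubleDerivAt f (s, t) L) :
    ∃ τ > (0:ℝ), ∀ t', 0 < |t' - t| → |t' - t| < τ →
      ((t < t' → dDiff f (σ0, t) (σ1, t') < 0) ∧
       (t' < t → 0 < dDiff f (σ0, t) (σ1, t'))) := by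
  set R : ℝ → ℝ → Prop := fun s s' =>
    ∃ τ > (0:ℝ), ∀ t', 0 < |t' - t| → |t' - t| < τ →
      ((t < t' → dDiff f (s, t) (s', t') < 0) ∧
       (t' < t → 0 < dDiff f (s, t) (s', t'))) with hR
  have key : ∀ s s', σ0 ≤ s → s < s' → s' ≤ σ1 → R s s' := by
    apply local_to_global R
    · -- transitivity
      rintro s s' s'' _ _ _ _ ⟨τ1, hτ1, H1⟩ ⟨τ2, hτ2, H2⟩
      refine ⟨min τ1 τ2, lt_min hτ1 hτ2, ?_⟩
      intro t' ht1 ht2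
      have e : dDiff f (s, t) (s'', t') = dDiff f (s, t) (s', t') + dDiff f (s', t) (s'', t') := by
        simp only [dDiff]; ring
      have A := H1 t' ht1 (ht2.trans_le (min_le_left _ _))
      have B := H2 t' ht1 (ht2.trans_le (min_le_right _ _))
      constructor
      · intro h; rw [e]; linarith [A.1 h, B.1 h]
      · intro h; rw [e]; linarith [A.2 h, B.2 h]
    · -- locality
      intro s0 hs0 hs1
      obtain ⟨L, hL, hd⟩ := hder s0 hs0 hs1
      obtain ⟨δ₁, hδ₁, δ₂, hδ₂, H⟩ := hdd_est hd (-L/2) (by linarith)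
      refine ⟨δ₁, hδ₁, ?_⟩
      intro s' _ _
      constructor
      · -- right:  s0 < s' < s0 + δ₁, conclude R s0 s'
        intro h1 h2
        refine ⟨δ₂, hδ₂, ?_⟩
        intro t' ht1 ht2
        have habs1 : |s' - s0| = s' - s0 := abs_of_pos (by linarith)
        have hq : |dDiff f (s0, t) (s', t') - L * ((s' - s0) * (t' - t))| ≤
            -L/2 * (|s' - s0| * |t' - t|) :=
          H (s', t') (by rw [habs1] at *; linarith) (by rw [habs1] at *; linarith) ht1 ht2
        rw [habs1, abs_le] at hq
        constructor
        · intro h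
          have habs2 : |t' - t| = t' - t := abs_of_pos (by linarith)
          rw [habs2] at hq
          linarith [hq.2, mul_neg_of_neg_of_pos hL (mul_pos (show (0:ℝ) < s' - s0 by linarith) (show (0:ℝ) < t' - t by linarith))]
        · intro h
          have habs2 : |t' - t| = t - t' := by rw [abs_sub_comm]; exact abs_of_pos (by linarith)
          rw [habs2] at hq
          linarith [hq.1, mul_neg_of_neg_of_pos hL (mul_pos (show (0:ℝ) < s' - s0 by linarith) (show (0:ℝ) < t - t' by linarith))]
      · -- left: s0 - δ₁ < s' < s0, conclude R s' s0
        intro h1 h2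
        refine ⟨δ₂, hδ₂, ?_⟩
        intro t' ht1 ht2
        have habs1 : |s' - s0| = s0 - s' := by rw [abs_sub_comm]; exact abs_of_pos (by linarith)
        have hq : |dDiff f (s0, t) (s', t') - L * ((s' - s0) * (t' - t))| ≤
            -L/2 * (|s' - s0| * |t' - t|) :=
          H (s', t') (by rw [habs1] at *; linarith) (by rw [habs1] at *; linarith) ht1 ht2
        rw [habs1, abs_le] at hq
        have e : dDiff f (s', t) (s0, t') = -dDiff f (s0, t) (s', t') := by
          simp only [dDiff]; ring
        constructor
        · intro h
          have habs2 : |t' - t| = t' - t := abs_of_pos (by linarith)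
          rw [habs2] at hq
          show dDiff f (s', t) (s0, t') < 0
          rw [e]
          linarith [hq.1, mul_neg_of_neg_of_pos hL (mul_pos (show (0:ℝ) < s0 - s' by linarith) (show (0:ℝ) < t' - t by linarith))]
        · intro h
          have habs2 : |t' - t| = t - t' := by rw [abs_sub_comm]; exact abs_of_pos (by linarith)
          rw [habs2] at hq
          show 0 < dDiff f (s', t) (s0, t')
          rw [e]
          linarith [hq.2, mul_neg_of_neg_of_pos hL (mul_pos (show (0:ℝ) < s0 - s' by linarith) (show (0:ℝ) < t - t' by linarith))]
  exact key σ0 σ1 le_rfl h01 le_rfl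

/-- A closed rectangle where the double derivative is everywhere negative has
negative double difference. -/
lemma rectNeg (f : ℝ × ℝ → ℝ) (u1 u2 v1 v2 : ℝ) (h1 : u1 < v1) (h2 : u2 < v2)
    (hder : ∀ p : ℝ × ℝ, u1 ≤ p.1 → p.1 ≤ v1 → u2 ≤ p.2 → p.2 ≤ v2 →
      ∃ L < (0:ℝ), HasDoubleDerivAt f p L) :
    dDiff f (u1, u2) (v1, v2) < 0 := by
  set R : ℝ → ℝ → Prop := fun s s' => dDiff f (u1, s) (v1, s') < 0 with hR
  have key : ∀ s s', u2 ≤ s → s < s' → s' ≤ v2 → R s s' := by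
    apply local_to_global R
    · rintro s s' s'' _ _ _ _ A B
      have e : dDiff f (u1, s) (v1, s'') = dDiff f (u1, s) (v1, s') + dDiff f (u1, s') (v1, s'') := by
        simp only [dDiff]; ring
      show dDiff f (u1, s) (v1, s'') < 0
      rw [e]
      exact add_neg A B
    · intro t0 ht0 ht1
      obtain ⟨τ, hτ, H⟩ := stripNeg f t0 u1 v1 h1 (fun s hs hs' => hder (s, t0) hs hs' ht0 ht1)
      refine ⟨τ, hτ, ?_⟩
      intro t' _ _
      constructor
      · intro ha hb
        have habs : |t' - t0| = t' - t0 := abs_of_pos (by linarith)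
        exact (H t' (by rw [habs]; linarith) (by rw [habs]; linarith)).1 ha
      · intro ha hb
        have habs : |t' - t0| = t0 - t' := by rw [abs_sub_comm]; exact abs_of_pos (by linarith)
        have := (H t' (by rw [habs]; linarith) (by rw [habs]; linarith)).2 hb
        have e : dDiff f (u1, t') (v1, t0) = -dDiff f (u1, t0) (v1, t') := by
          simp only [dDiff]; ring
        show dDiff f (u1, t') (v1, t0) < 0
        rw [e]; linarith
  exact key u2 v2 le_rfl h2 le_rfl

end Strip
section Bdd

/-- Horizontal strip along a segment where the double derivative merely exists:
the double difference is `O(t'-t)`. -/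
lemma stripBdd (f : ℝ × ℝ → ℝ) (t σ0 σ1 : ℝ) (h01 : σ0 < σ1)
    (hder : ∀ s, σ0 ≤ s → s ≤ σ1 → ∃ L, HasDoubleDerivAt f (s, t) L) :
    ∃ C, ∃ τ > (0:ℝ), ∀ t', t < t' → t' < t + τ →
      |dDiff f (σ0, t) (σ1, t')| ≤ C * (t' - t) := by
  set R : ℝ → ℝ → Prop := fun s s' =>
    ∃ C, ∃ τ > (0:ℝ), ∀ t', t < t' → t' < t + τ →
      |dDiff f (s, t) (s', t')| ≤ C * (t' - t) with hR
  have key : ∀ s s', σ0 ≤ s → s < s' → s' ≤ σ1 → R s s' := by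
    apply local_to_global R
    · rintro s s' s'' _ _ _ _ ⟨C1, τ1, hτ1, H1⟩ ⟨C2, τ2, hτ2, H2⟩
      refine ⟨C1 + C2, min τ1 τ2, lt_min hτ1 hτ2, ?_⟩
      intro t' ht1 ht2
      have e : dDiff f (s, t) (s'', t') = dDiff f (s, t) (s', t') + dDiff f (s', t) (s'', t') := by
        simp only [dDiff]; ring
      have A := H1 t' ht1 (by linarith [min_le_left τ1 τ2])
      have B := H2 t' ht1 (by linarith [min_le_right τ1 τ2])
      calc |dDiff f (s, t) (s'', t')| ≤ |dDiff f (s, t) (s', t')| + |dDiff f (s', t) (s'', t')| := by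
            rw [e]; exact abs_add_le _ _
        _ ≤ C1 * (t' - t) + C2 * (t' - t) := add_le_add A B
        _ = (C1 + C2) * (t' - t) := by ring
    · intro s0 hs0 hs1
      obtain ⟨L, hd⟩ := hder s0 hs0 hs1
      obtain ⟨δ₁, hδ₁, δ₂, hδ₂, H⟩ := hdd_est hd 1 one_pos
      refine ⟨δ₁, hδ₁, ?_⟩
      intro s' _ _
      constructor
      · intro h1 h2
        refine ⟨(|L| + 1) * (s' - s0), δ₂, hδ₂, ?_⟩
        intro t' ht1 ht2
        have habs1 : |s' - s0| = s' - s0 := abs_of_pos (by linarith)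
        have habs2 : |t' - t| = t' - t := abs_of_pos (by linarith)
        have hq : |dDiff f (s0, t) (s', t') - L * ((s' - s0) * (t' - t))| ≤
            1 * (|s' - s0| * |t' - t|) :=
          H (s', t') (by rw [habs1] at *; linarith) (by rw [habs1] at *; linarith)
            (by rw [habs2] at *; linarith) (by rw [habs2] at *; linarith)
        rw [habs1, habs2] at hq
        have tri : |dDiff f (s0, t) (s', t')| ≤
            |dDiff f (s0, t) (s', t') - L * ((s' - s0) * (t' - t))| + |L * ((s' - s0) * (t' - t))| := by
          have := abs_add_le (dDiff f (s0, t) (s', t') - L * ((s' - s0) * (t' - t)))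
            (L * ((s' - s0) * (t' - t)))
          simpa using this
        have habsL : |L * ((s' - s0) * (t' - t))| = |L| * ((s' - s0) * (t' - t)) := by
          rw [abs_mul, abs_of_pos (mul_pos (by linarith : (0:ℝ) < s' - s0) (by linarith : (0:ℝ) < t' - t))]
        rw [habsL] at tri
        nlinarith [abs_nonneg L]
      · intro h1 h2
        refine ⟨(|L| + 1) * (s0 - s'), δ₂, hδ₂, ?_⟩
        intro t' ht1 ht2
        have habs1 : |s' - s0| = s0 - s' := by rw [abs_sub_comm]; exact abs_of_pos (by linarith)
        have habs2 : |t' - t| = t' - t := abs_of_pos (by linarith)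
        have hq : |dDiff f (s0, t) (s', t') - L * ((s' - s0) * (t' - t))| ≤
            1 * (|s' - s0| * |t' - t|) :=
          H (s', t') (by rw [habs1] at *; linarith) (by rw [habs1] at *; linarith)
            (by rw [habs2] at *; linarith) (by rw [habs2] at *; linarith)
        rw [habs1, habs2] at hq
        have e : dDiff f (s', t) (s0, t') = -dDiff f (s0, t) (s', t') := by
          simp only [dDiff]; ring
        rw [e, abs_neg]
        have tri : |dDiff f (s0, t) (s', t')| ≤
            |dDiff f (s0, t) (s', t') - L * ((s' - s0) * (t' - t))| + |L * ((s' - s0) * (t' - t))| := by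
          have := abs_add_le (dDiff f (s0, t) (s', t') - L * ((s' - s0) * (t' - t)))
            (L * ((s' - s0) * (t' - t)))
          simpa using this
        have habsL : |L * ((s' - s0) * (t' - t))| = |L| * ((s0 - s') * (t' - t)) := by
          rw [abs_mul]
          congr 1
          rw [abs_sub_comm s' s0] at habs1
          rw [show (s' - s0) * (t' - t) = -((s0 - s') * (t' - t)) by ring, abs_neg,
            abs_of_pos (mul_pos (by linarith : (0:ℝ) < s0 - s') (by linarith : (0:ℝ) < t' - t))]
        rw [habsL] at tri
        nlinarith [abs_nonneg L]
  exact key σ0 σ1 le_rfl h01 le_rfl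

/-- Bottom strip starting at the corner height is nonpositive. -/
lemma bottomNonpos (f : ℝ × ℝ → ℝ) (c1 c2 b1 b2 σ0 σ1 t0 : ℝ)
    (hs0 : c1 < σ0) (h01 : σ0 < σ1) (hs1 : σ1 < b1) (ht0 : c2 < t0) (ht0b : t0 < b2)
    (hquad : ∀ p : ℝ × ℝ, c1 < p.1 → p.1 < b1 → c2 < p.2 → p.2 < b2 →
      ∃ L < (0:ℝ), HasDoubleDerivAt f p L)
    (hseg : ∀ s, c1 < s → s < b1 → ∃ L, HasDoubleDerivAt f (s, c2) L) :
    dDiff f (σ0, c2) (σ1, t0) ≤ 0 := by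
  obtain ⟨C, τ, hτ, H⟩ := stripBdd f c2 σ0 σ1 h01
    (fun s hs hs' => hseg s (hs0.trans_le hs) (lt_of_le_of_lt hs' hs1))
  by_contra hcon
  push_neg at hcon
  set D := dDiff f (σ0, c2) (σ1, t0) with hD
  set t' := c2 + min (min (τ/2) ((t0 - c2)/2)) (D / (2 * (|C| + 1))) with ht'
  have hDpos : 0 < D := hcon
  have hCpos : 0 < |C| + 1 := by positivity
  have hmin : 0 < min (min (τ/2) ((t0 - c2)/2)) (D / (2 * (|C| + 1))) := by
    apply lt_min (lt_min (by linarith) (by linarith))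
    positivity
  have h1 : c2 < t' := by rw [ht']; linarith
  have h2 : t' < t0 := by
    rw [ht']
    have : min (min (τ/2) ((t0 - c2)/2)) (D / (2 * (|C| + 1))) ≤ (t0 - c2)/2 :=
      le_trans (min_le_left _ _) (min_le_right _ _)
    linarith
  have h3 : t' < c2 + τ := by
    rw [ht']
    have : min (min (τ/2) ((t0 - c2)/2)) (D / (2 * (|C| + 1))) ≤ τ/2 :=
      le_trans (min_le_left _ _) (min_le_left _ _)
    linarith
  have h4 : t' - c2 ≤ D / (2 * (|C| + 1)) := by rw [ht']; simp [min_le_right]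
  have hstrip := H t' h1 h3
  have hrect : dDiff f (σ0, t') (σ1, t0) < 0 := by
    apply rectNeg f σ0 t' σ1 t0 h01 h2
    intro p hp1 hp2 hp3 hp4
    exact hquad p (hs0.trans_le hp1) (lt_of_le_of_lt hp2 hs1)
      (h1.trans_le hp3) (lt_of_le_of_lt hp4 ht0b)
  have e : D = dDiff f (σ0, c2) (σ1, t') + dDiff f (σ0, t') (σ1, t0) := by
    rw [hD]; simp only [dDiff]; ring
  have hb : dDiff f (σ0, c2) (σ1, t') ≤ |C| * (t' - c2) := by
    calc dDiff f (σ0, c2) (σ1, t') ≤ |dDiff f (σ0, c2) (σ1, t')| := le_abs_self _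
      _ ≤ C * (t' - c2) := hstrip
      _ ≤ |C| * (t' - c2) := mul_le_mul_of_nonneg_right (le_abs_self C) (by linarith)
  have hlast : |C| * (t' - c2) ≤ |C| * (D / (2 * (|C| + 1))) :=
    mul_le_mul_of_nonneg_left h4 (abs_nonneg C)
  have hfrac : |C| * (D / (2 * (|C| + 1))) < D := by
    rw [div_eq_inv_mul, ← mul_assoc]
    have h5 : |C| * (2 * (|C| + 1))⁻¹ < 1 := by
      rw [mul_inv_lt_iff₀ (by positivity)]
      nlinarith [abs_nonneg C]
    nlinarith [abs_nonneg C]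
  have : D < D := by
    calc D = dDiff f (σ0, c2) (σ1, t') + dDiff f (σ0, t') (σ1, t0) := e
      _ < dDiff f (σ0, c2) (σ1, t') := by linarith
      _ ≤ |C| * (t' - c2) := hb
      _ ≤ |C| * (D / (2 * (|C| + 1))) := hlast
      _ < D := hfrac
  exact absurd this (lt_irrefl D)
end Bdd
section Core

/-- Coordinate swap. -/
def pswap (f : ℝ × ℝ → ℝ) : ℝ × ℝ → ℝ := fun y => f (y.2, y.1)

lemma dDiff_pswap (f : ℝ × ℝ → ℝ) (u v : ℝ × ℝ) :
    dDiff (pswap f) u v = dDiff f (u.2, u.1) (v.2, v.1) := by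
  simp only [dDiff, pswap]; ring

lemma dSlope_pswap (f : ℝ × ℝ → ℝ) (u v : ℝ × ℝ) :
    dSlope (pswap f) u v = dSlope f (u.2, u.1) (v.2, v.1) := by
  show dDiff (pswap f) u v / ((v.1 - u.1) * (v.2 - u.2)) =
    dDiff f (u.2, u.1) (v.2, v.1) / ((v.2 - u.2) * (v.1 - u.1))
  rw [dDiff_pswap, mul_comm]

lemma hdd_pswap {f : ℝ × ℝ → ℝ} {p : ℝ × ℝ} {L : ℝ}
    (h : HasDoubleDerivAt f (p.2, p.1) L) : HasDoubleDerivAt (pswap f) p L := by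
  intro ε hε
  obtain ⟨δ₁, h1, δ₂, h2, H⟩ := h ε hε
  refine ⟨δ₂, h2, δ₁, h1, ?_⟩
  intro q _ a b c d
  have := H (q.2, q.1) (Set.mem_univ _) c d a b
  simpa [dSlope_pswap] using this

/-- Left strip starting at the corner is nonpositive. -/
lemma leftNonpos (f : ℝ × ℝ → ℝ) (c1 c2 b1 b2 τ0 τ1 s0 : ℝ)
    (ht0 : c2 < τ0) (h01 : τ0 < τ1) (ht1 : τ1 < b2) (hs0 : c1 < s0) (hs0b : s0 < b1)
    (hquad : ∀ p : ℝ × ℝ, c1 < p.1 → p.1 < b1 → c2 < p.2 → p.2 < b2 →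
      ∃ L < (0:ℝ), HasDoubleDerivAt f p L)
    (hseg : ∀ t, c2 < t → t < b2 → ∃ L, HasDoubleDerivAt f (c1, t) L) :
    dDiff f (c1, τ0) (s0, τ1) ≤ 0 := by
  have key : dDiff (pswap f) (τ0, c1) (τ1, s0) ≤ 0 := by
    apply bottomNonpos (pswap f) c2 c1 b2 b1 τ0 τ1 s0 ht0 h01 ht1 hs0 hs0b
    · intro p hp1 hp2 hp3 hp4
      obtain ⟨L, hL, hd⟩ := hquad (p.2, p.1) hp3 hp4 hp1 hp2
      exact ⟨L, hL, hdd_pswap hd⟩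
    · intro t htc htb
      obtain ⟨L, hd⟩ := hseg t htc htb
      exact ⟨L, hdd_pswap (p := (t, c1)) hd⟩
  rw [dDiff_pswap] at key
  exact key

/-- Core lemma: strict negativity on the upper-right quadrant. -/
lemma core (f : ℝ × ℝ → ℝ) (c1 c2 b1 b2 : ℝ)
    (hcorner : HasDoubleDerivAt f (c1, c2) 0)
    (hquad : ∀ p : ℝ × ℝ, c1 < p.1 → p.1 < b1 → c2 < p.2 → p.2 < b2 →
      ∃ L < (0:ℝ), HasDoubleDerivAt f p L)
    (hbot : ∀ s, c1 < s → s < b1 → ∃ L, HasDoubleDerivAt f (s, c2) L)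
    (hleft : ∀ t, c2 < t → t < b2 → ∃ L, HasDoubleDerivAt f (c1, t) L) :
    ∀ x1 x2, c1 < x1 → x1 < b1 → c2 < x2 → x2 < b2 → dDiff f (c1, c2) (x1, x2) < 0 := by
  intro x1 x2 hx1 hx1b hx2 hx2b
  set u01 := (c1 + x1) / 2 with hu01
  set u02 := (c2 + x2) / 2 with hu02
  have hu01a : c1 < u01 := by rw [hu01]; linarith
  have hu01b : u01 < x1 := by rw [hu01]; linarith
  have hu02a : c2 < u02 := by rw [hu02]; linarith
  have hu02b : u02 < x2 := by rw [hu02]; linarith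
  have hquad' : ∀ (l1 r1 l2 r2 : ℝ), c1 < l1 → l1 < r1 → r1 < b1 → c2 < l2 → l2 < r2 → r2 < b2 →
      dDiff f (l1, l2) (r1, r2) < 0 := by
    intro l1 r1 l2 r2 a1 a2 a3 a4 a5 a6
    apply rectNeg f l1 l2 r1 r2 a2 a5
    intro p p1 p2 p3 p4
    exact hquad p (a1.trans_le p1) (lt_of_le_of_lt p2 a3) (a4.trans_le p3) (lt_of_le_of_lt p4 a6)
  set η := -dDiff f (u01, u02) (x1, x2) with hη
  have hηpos : 0 < η := by
    rw [hη, neg_pos]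
    exact hquad' u01 x1 u02 x2 hu01a hu01b hx1b hu02a hu02b hx2b
  obtain ⟨δ₁, hδ₁, δ₂, hδ₂, Hc⟩ := hdd_est hcorner 1 one_pos
  set e1 := min (min δ₁ 2) (u01 - c1) with he1
  set e2 := min (min δ₂ (η/2)) (u02 - c2) with he2
  have he1p : 0 < e1 := lt_min (lt_min hδ₁ two_pos) (by linarith)
  have he2p : 0 < e2 := lt_min (lt_min hδ₂ (by linarith)) (by linarith)
  set u1 := c1 + e1 / 2 with hu1
  set u2 := c2 + e2 / 2 with hu2
  have hu1a : c1 < u1 := by rw [hu1]; linarith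
  have hu1b : u1 < u01 := by
    rw [hu1]; have : e1 ≤ u01 - c1 := min_le_right _ _; linarith
  have hu2a : c2 < u2 := by rw [hu2]; linarith
  have hu2b : u2 < u02 := by
    rw [hu2]; have : e2 ≤ u02 - c2 := min_le_right _ _; linarith
  -- corner bound
  have hc : |dDiff f (c1, c2) (u1, u2)| ≤ (u1 - c1) * (u2 - c2) := by
    have habs1 : |u1 - c1| = u1 - c1 := abs_of_pos (by linarith)
    have habs2 : |u2 - c2| = u2 - c2 := abs_of_pos (by linarith)
    have he1d : e1 ≤ δ₁ := (min_le_left _ _).trans (min_le_left _ _)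
    have he2d : e2 ≤ δ₂ := (min_le_left _ _).trans (min_le_left _ _)
    have := Hc (u1, u2) (by rw [habs1] at *; linarith) (by rw [habs1] at *; simp only [hu1]; linarith)
      (by rw [habs2] at *; linarith) (by rw [habs2] at *; simp only [hu2]; linarith)
    have e0 : (0:ℝ) * (((u1, u2) : ℝ × ℝ).1 - c1) = 0 := by ring
    calc |dDiff f (c1, c2) (u1, u2)| = |dDiff f (c1, c2) (u1, u2) - 0 * ((u1 - c1) * (u2 - c2))| := by
          rw [zero_mul, sub_zero]
      _ ≤ 1 * (|u1 - c1| * |u2 - c2|) := this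
      _ = (u1 - c1) * (u2 - c2) := by rw [habs1, habs2]; ring
  have hcsmall : (u1 - c1) * (u2 - c2) < η / 2 := by
    have h1 : u1 - c1 = e1 / 2 := by rw [hu1]; ring
    have h2 : u2 - c2 = e2 / 2 := by rw [hu2]; ring
    have h3 : e2 ≤ η / 2 := (min_le_left _ _).trans (min_le_right _ _)
    have h4 : e1 ≤ 2 := (min_le_left _ _).trans (min_le_right _ _)
    rw [h1, h2]
    nlinarith
  clear_value u01 u02 η e1 e2 u1 u2
  -- strips
  have hbottom : dDiff f (u1, c2) (x1, u2) ≤ 0 :=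
    bottomNonpos f c1 c2 b1 b2 u1 x1 u2 hu1a (hu1b.trans hu01b) hx1b hu2a
      (hu2b.trans (hu02b.trans hx2b)) hquad hbot
  have hleftS : dDiff f (c1, u2) (u1, x2) ≤ 0 :=
    leftNonpos f c1 c2 b1 b2 u2 x2 u1 hu2a (hu2b.trans hu02b) hx2b hu1a
      (hu1b.trans (hu01b.trans hx1b)) hquad hleft
  -- middle rectangle
  have hmid : dDiff f (u1, u2) (x1, x2) < -η := by
    have E2 : dDiff f (u1, u2) (x1, x2) = dDiff f (u1, u2) (u01, u02) +
        dDiff f (u01, u2) (x1, u02) + dDiff f (u1, u02) (u01, x2) +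
        dDiff f (u01, u02) (x1, x2) := by
      simp only [dDiff]; ring
    have p1 := hquad' u1 u01 u2 u02 hu1a hu1b (hu01b.trans hx1b) hu2a hu2b (hu02b.trans hx2b)
    have p2 := hquad' u01 x1 u2 u02 hu01a hu01b hx1b hu2a hu2b (hu02b.trans hx2b)
    have p3 := hquad' u1 u01 u02 x2 hu1a hu1b (hu01b.trans hx1b) (hu2a.trans hu2b) hu02b hx2b
    have p4 : dDiff f (u01, u02) (x1, x2) = -η := by rw [hη]; ring
    rw [E2, p4]; linarith
  have E1 : dDiff f (c1, c2) (x1, x2) = dDiff f (c1, c2) (u1, u2) +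
      dDiff f (u1, c2) (x1, u2) + dDiff f (c1, u2) (u1, x2) +
      dDiff f (u1, u2) (x1, x2) := by
    simp only [dDiff]; ring
  have habs := le_abs_self (dDiff f (c1, c2) (u1, u2))
  rw [E1]
  linarith

end Core
section Transfer

lemma hdd_neg {f : ℝ × ℝ → ℝ} {p : ℝ × ℝ} {L : ℝ} (h : HasDoubleDerivAt f p L) :
    HasDoubleDerivAt (fun y => -(f y)) p (-L) := by
  intro ε hε
  obtain ⟨δ₁, h1, δ₂, h2, H⟩ := h ε hε
  refine ⟨δ₁, h1, δ₂, h2, ?_⟩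
  intro q _ a b c d
  have hq := H q (Set.mem_univ _) a b c d
  have e : dSlope (fun y => -(f y)) p q = -dSlope f p q := by
    simp only [dSlope, dDiff]; ring
  show |dSlope (fun y => -(f y)) p q - (-L)| < ε
  rw [e, show -dSlope f p q - (-L) = -(dSlope f p q - L) by ring, abs_neg]
  exact hq

lemma hdd_refl1 {f : ℝ × ℝ → ℝ} {p : ℝ × ℝ} {L : ℝ}
    (h : HasDoubleDerivAt f (-p.1, p.2) L) :
    HasDoubleDerivAt (fun y => f (-y.1, y.2)) p (-L) := by
  intro ε hε
  obtain ⟨δ₁, h1, δ₂, h2, H⟩ := h ε hε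
  refine ⟨δ₁, h1, δ₂, h2, ?_⟩
  intro q _ a b c d
  have hq := H (-q.1, q.2) (Set.mem_univ _)
    (by show 0 < |(-q.1) - (-p.1)|; rw [show (-q.1) - (-p.1) = -(q.1 - p.1) by ring, abs_neg]; exact a)
    (by show |(-q.1) - (-p.1)| < δ₁; rw [show (-q.1) - (-p.1) = -(q.1 - p.1) by ring, abs_neg]; exact b)
    c d
  have e : dSlope (fun y => f (-y.1, y.2)) p q = -dSlope f (-p.1, p.2) (-q.1, q.2) := by
    simp only [dSlope, dDiff]
    rw [show ((-q.1) - (-p.1)) = -(q.1 - p.1) by ring, neg_mul, div_neg, neg_neg]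
  show |dSlope (fun y => f (-y.1, y.2)) p q - (-L)| < ε
  rw [e, show -dSlope f (-p.1, p.2) (-q.1, q.2) - (-L) = -(dSlope f (-p.1, p.2) (-q.1, q.2) - L) by ring,
    abs_neg]
  exact hq

lemma hdd_refl2 {f : ℝ × ℝ → ℝ} {p : ℝ × ℝ} {L : ℝ}
    (h : HasDoubleDerivAt f (p.1, -p.2) L) :
    HasDoubleDerivAt (fun y => f (y.1, -y.2)) p (-L) := by
  intro ε hε
  obtain ⟨δ₁, h1, δ₂, h2, H⟩ := h ε hε
  refine ⟨δ₁, h1, δ₂, h2, ?_⟩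
  intro q _ a b c d
  have hq := H (q.1, -q.2) (Set.mem_univ _) a b
    (by show 0 < |(-q.2) - (-p.2)|; rw [show (-q.2) - (-p.2) = -(q.2 - p.2) by ring, abs_neg]; exact c)
    (by show |(-q.2) - (-p.2)| < δ₂; rw [show (-q.2) - (-p.2) = -(q.2 - p.2) by ring, abs_neg]; exact d)
  have e : dSlope (fun y => f (y.1, -y.2)) p q = -dSlope f (p.1, -p.2) (q.1, -q.2) := by
    simp only [dSlope, dDiff]
    rw [show ((-q.2) - (-p.2)) = -(q.2 - p.2) by ring, mul_neg, div_neg, neg_neg]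
  show |dSlope (fun y => f (y.1, -y.2)) p q - (-L)| < ε
  rw [e, show -dSlope f (p.1, -p.2) (q.1, -q.2) - (-L) = -(dSlope f (p.1, -p.2) (q.1, -q.2) - L) by ring,
    abs_neg]
  exact hq

lemma hdd_refl12 {f : ℝ × ℝ → ℝ} {p : ℝ × ℝ} {L : ℝ}
    (h : HasDoubleDerivAt f (-p.1, -p.2) L) :
    HasDoubleDerivAt (fun y => f (-y.1, -y.2)) p L := by
  intro ε hε
  obtain ⟨δ₁, h1, δ₂, h2, H⟩ := h ε hε
  refine ⟨δ₁, h1, δ₂, h2, ?_⟩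
  intro q _ a b c d
  have hq := H (-q.1, -q.2) (Set.mem_univ _)
    (by show 0 < |(-q.1) - (-p.1)|; rw [show (-q.1) - (-p.1) = -(q.1 - p.1) by ring, abs_neg]; exact a)
    (by show |(-q.1) - (-p.1)| < δ₁; rw [show (-q.1) - (-p.1) = -(q.1 - p.1) by ring, abs_neg]; exact b)
    (by show 0 < |(-q.2) - (-p.2)|; rw [show (-q.2) - (-p.2) = -(q.2 - p.2) by ring, abs_neg]; exact c)
    (by show |(-q.2) - (-p.2)| < δ₂; rw [show (-q.2) - (-p.2) = -(q.2 - p.2) by ring, abs_neg]; exact d)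
  have e : dSlope (fun y => f (-y.1, -y.2)) p q = dSlope f (-p.1, -p.2) (-q.1, -q.2) := by
    simp only [dSlope, dDiff]
    rw [show ((-q.1) - (-p.1)) = -(q.1 - p.1) by ring, show ((-q.2) - (-p.2)) = -(q.2 - p.2) by ring,
      neg_mul_neg]
  show |dSlope (fun y => f (-y.1, -y.2)) p q - L| < ε
  rw [e]
  exact hq

end Transfer
section Main

private lemma mem_prod_Ioo {a b : ℝ × ℝ} {p1 p2 : ℝ} (h1 : a.1 < p1) (h2 : p1 < b.1)
    (h3 : a.2 < p2) (h4 : p2 < b.2) : (p1, p2) ∈ Set.Ioo a.1 b.1 ×ˢ Set.Ioo a.2 b.2 :=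
  Set.mem_prod.mpr ⟨Set.mem_Ioo.mpr ⟨h1, h2⟩, Set.mem_Ioo.mpr ⟨h3, h4⟩⟩

lemma partA (f f' : ℝ × ℝ → ℝ) (a b c : ℝ × ℝ)
    (hdiff : ∀ x ∈ Set.Ioo a.1 b.1 ×ˢ Set.Ioo a.2 b.2, HasDoubleDerivAt f x (f' x))
    (hc : c ∈ Set.Ioo a.1 b.1 ×ˢ Set.Ioo a.2 b.2)
    (hc0 : f' c = 0)
    (h1 : ∀ x : ℝ × ℝ,
        ((a.1 < x.1 ∧ x.1 < c.1 ∧ a.2 < x.2 ∧ x.2 < c.2) ∨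
         (c.1 < x.1 ∧ x.1 < b.1 ∧ c.2 < x.2 ∧ x.2 < b.2)) → f' x < 0)
    (h2 : ∀ x : ℝ × ℝ,
        ((a.1 < x.1 ∧ x.1 < c.1 ∧ c.2 < x.2 ∧ x.2 < b.2) ∨
         (c.1 < x.1 ∧ x.1 < b.1 ∧ a.2 < x.2 ∧ x.2 < c.2)) → 0 < f' x) :
    ∀ x ∈ Set.Ioo a.1 b.1 ×ˢ Set.Ioo a.2 b.2, x.1 ≠ c.1 → x.2 ≠ c.2 → dDiff f c x < 0 := by
  obtain ⟨⟨hca1, hcb1⟩, hca2, hcb2⟩ := hc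
  have hcmem : c ∈ Set.Ioo a.1 b.1 ×ˢ Set.Ioo a.2 b.2 := mem_prod_Ioo hca1 hcb1 hca2 hcb2
  have hder0 : HasDoubleDerivAt f c 0 := by
    have h := hdiff c hcmem; rw [hc0] at h; exact h
  intro x hx hne1 hne2
  obtain ⟨⟨hxa1, hxb1⟩, hxa2, hxb2⟩ := hx
  rcases hne1.lt_or_gt with hx1 | hx1 <;> rcases hne2.lt_or_gt with hx2 | hx2
  · -- x.1 < c.1, x.2 < c.2 : lower-left, use y ↦ f (-y.1, -y.2)
    have key := core (fun y => f (-y.1, -y.2)) (-c.1) (-c.2) (-a.1) (-a.2)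
      (by
        apply hdd_refl12 (p := (-c.1, -c.2)) (L := 0)
        show HasDoubleDerivAt f (-(-c.1), -(-c.2)) 0
        rw [neg_neg, neg_neg]; exact hder0)
      (by
        intro p p1 p2 p3 p4
        refine ⟨f' (-p.1, -p.2), h1 (-p.1, -p.2) (Or.inl ⟨show a.1 < -p.1 by linarith,
          show -p.1 < c.1 by linarith, show a.2 < -p.2 by linarith, show -p.2 < c.2 by linarith⟩), ?_⟩
        exact hdd_refl12 (p := p) (hdiff (-p.1, -p.2) (mem_prod_Ioo (p1 := -p.1) (p2 := -p.2)
          (by linarith) (by linarith) (by linarith) (by linarith))))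
      (by
        intro s s1 s2
        refine ⟨f' (-s, -(-c.2)), ?_⟩
        exact hdd_refl12 (p := (s, -c.2)) (hdiff (-s, -(-c.2)) (by
          rw [neg_neg]
          exact mem_prod_Ioo (by linarith) (by linarith) hca2 hcb2)))
      (by
        intro t t1 t2
        refine ⟨f' (-(-c.1), -t), ?_⟩
        exact hdd_refl12 (p := (-c.1, t)) (hdiff (-(-c.1), -t) (by
          rw [neg_neg]
          exact mem_prod_Ioo hca1 hcb1 (by linarith) (by linarith))))
      (-x.1) (-x.2) (by linarith) (by linarith) (by linarith) (by linarith)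
    have e : dDiff (fun y => f (-y.1, -y.2)) (-c.1, -c.2) (-x.1, -x.2) = dDiff f c x := by
      simp only [dDiff, neg_neg]
    rw [← e]; exact key
  · -- x.1 < c.1, c.2 < x.2 : upper-left, use y ↦ f (-y.1, y.2)
    have key := core (fun y => f (-y.1, y.2)) (-c.1) c.2 (-a.1) b.2
      (by
        have h' := hdd_refl1 (p := (-c.1, c.2)) (L := 0) (by
          show HasDoubleDerivAt f (-(-c.1), c.2) 0
          rw [neg_neg]; exact hder0)
        rw [neg_zero] at h'; exact h')
      (by
        intro p p1 p2 p3 p4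
        refine ⟨-(f' (-p.1, p.2)), ?_, ?_⟩
        · have := h2 (-p.1, p.2) (Or.inl ⟨show a.1 < -p.1 by linarith,
            show -p.1 < c.1 by linarith, p3, p4⟩); linarith
        · exact hdd_refl1 (p := p) (hdiff (-p.1, p.2)
            (mem_prod_Ioo (p1 := -p.1) (p2 := p.2) (by linarith) (by linarith) (by linarith) (by linarith))))
      (by
        intro s s1 s2
        refine ⟨-(f' (-s, c.2)), ?_⟩
        exact hdd_refl1 (p := (s, c.2)) (hdiff (-s, c.2)
          (mem_prod_Ioo (by linarith) (by linarith) hca2 hcb2)))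
      (by
        intro t t1 t2
        refine ⟨-(f' (c.1, t)), ?_⟩
        apply hdd_refl1 (p := (-c.1, t))
        show HasDoubleDerivAt f (-(-c.1), t) (f' (c.1, t))
        rw [neg_neg]
        exact hdiff (c.1, t) (mem_prod_Ioo hca1 hcb1 (by linarith) (by linarith)))
      (-x.1) x.2 (by linarith) (by linarith) (by linarith) (by linarith)
    have e : dDiff (fun y => f (-y.1, y.2)) (-c.1, c.2) (-x.1, x.2) = dDiff f c x := by
      simp only [dDiff, neg_neg]
    rw [← e]; exact key
  · -- c.1 < x.1, x.2 < c.2 : lower-right, use y ↦ f (y.1, -y.2)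
    have key := core (fun y => f (y.1, -y.2)) c.1 (-c.2) b.1 (-a.2)
      (by
        have h' := hdd_refl2 (p := (c.1, -c.2)) (L := 0) (by
          show HasDoubleDerivAt f (c.1, -(-c.2)) 0
          rw [neg_neg]; exact hder0)
        rw [neg_zero] at h'; exact h')
      (by
        intro p p1 p2 p3 p4
        refine ⟨-(f' (p.1, -p.2)), ?_, ?_⟩
        · have := h2 (p.1, -p.2) (Or.inr ⟨p1, p2, show a.2 < -p.2 by linarith,
            show -p.2 < c.2 by linarith⟩); linarith
        · exact hdd_refl2 (p := p) (hdiff (p.1, -p.2)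
            (mem_prod_Ioo (p1 := p.1) (p2 := -p.2) (by linarith) (by linarith) (by linarith) (by linarith))))
      (by
        intro s s1 s2
        refine ⟨-(f' (s, c.2)), ?_⟩
        apply hdd_refl2 (p := (s, -c.2))
        show HasDoubleDerivAt f (s, -(-c.2)) (f' (s, c.2))
        rw [neg_neg]
        exact hdiff (s, c.2) (mem_prod_Ioo (by linarith) (by linarith) hca2 hcb2))
      (by
        intro t t1 t2
        refine ⟨-(f' (c.1, -t)), ?_⟩
        exact hdd_refl2 (p := (c.1, t)) (hdiff (c.1, -t)
          (mem_prod_Ioo hca1 hcb1 (by linarith) (by linarith))))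
      x.1 (-x.2) (by linarith) (by linarith) (by linarith) (by linarith)
    have e : dDiff (fun y => f (y.1, -y.2)) (c.1, -c.2) (x.1, -x.2) = dDiff f c x := by
      simp only [dDiff, neg_neg]
    rw [← e]; exact key
  · -- c.1 < x.1, c.2 < x.2 : upper-right, direct
    have key := core f c.1 c.2 b.1 b.2 hder0
      (by
        intro p p1 p2 p3 p4
        exact ⟨f' p, h1 p (Or.inr ⟨p1, p2, p3, p4⟩),
          hdiff p (mem_prod_Ioo (by linarith) p2 (by linarith) p4)⟩)
      (by
        intro s s1 s2
        exact ⟨f' (s, c.2), hdiff (s, c.2) (mem_prod_Ioo (by linarith) (by linarith) hca2 hcb2)⟩)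
      (by
        intro t t1 t2
        exact ⟨f' (c.1, t), hdiff (c.1, t) (mem_prod_Ioo hca1 hcb1 (by linarith) (by linarith))⟩)
      x.1 x.2 hx1 hxb1 hx2 hxb2
    exact key

end Main
/-- double first derivative test. -/
theorem stmt14 (f f' : ℝ × ℝ → ℝ) (a b c : ℝ × ℝ)
    (hab1 : a.1 < b.1) (hab2 : a.2 < b.2)
    (hdiff : ∀ x ∈ Set.Ioo a.1 b.1 ×ˢ Set.Ioo a.2 b.2, HasDoubleDerivAt f x (f' x))
    (hc : c ∈ Set.Ioo a.1 b.1 ×ˢ Set.Ioo a.2 b.2)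
    (hc0 : f' c = 0) :
    (((∀ x : ℝ × ℝ,
        ((a.1 < x.1 ∧ x.1 < c.1 ∧ a.2 < x.2 ∧ x.2 < c.2) ∨
         (c.1 < x.1 ∧ x.1 < b.1 ∧ c.2 < x.2 ∧ x.2 < b.2)) → f' x < 0) →
      (∀ x : ℝ × ℝ,
        ((a.1 < x.1 ∧ x.1 < c.1 ∧ c.2 < x.2 ∧ x.2 < b.2) ∨
         (c.1 < x.1 ∧ x.1 < b.1 ∧ a.2 < x.2 ∧ x.2 < c.2)) → 0 < f' x) →
      ∀ x ∈ Set.Ioo a.1 b.1 ×ˢ Set.Ioo a.2 b.2, x.1 ≠ c.1 → x.2 ≠ c.2 →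
        dDiff f c x < 0) ∧
     ((∀ x : ℝ × ℝ,
        ((a.1 < x.1 ∧ x.1 < c.1 ∧ a.2 < x.2 ∧ x.2 < c.2) ∨
         (c.1 < x.1 ∧ x.1 < b.1 ∧ c.2 < x.2 ∧ x.2 < b.2)) → 0 < f' x) →
      (∀ x : ℝ × ℝ,
        ((a.1 < x.1 ∧ x.1 < c.1 ∧ c.2 < x.2 ∧ x.2 < b.2) ∨
         (c.1 < x.1 ∧ x.1 < b.1 ∧ a.2 < x.2 ∧ x.2 < c.2)) → f' x < 0) →
      ∀ x ∈ Set.Ioo a.1 b.1 ×ˢ Set.Ioo a.2 b.2, x.1 ≠ c.1 → x.2 ≠ c.2 →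
        0 < dDiff f c x)) := by
  constructor
  · intro h1 h2
    exact partA f f' a b c hdiff hc hc0 h1 h2
  · intro h1 h2 x hx hne1 hne2
    have key := partA (fun y => -(f y)) (fun y => -(f' y)) a b c
      (fun y hy => hdd_neg (hdiff y hy)) hc (by show -(f' c) = 0; rw [hc0]; ring)
      (fun y hy => by have := h1 y hy; simpa using this)
      (fun y hy => by have := h2 y hy; simpa using this)
      x hx hne1 hne2
    have e : dDiff (fun y => -(f y)) c x = -dDiff f c x := by
      simp only [dDiff]; ring
    rw [e] at key
    linarith
end
end

section
/- Let f be defined on a double interval I, and let F and G be double primitive functions of f on I. Then there is a double constant function H on I with G = F + H; in particular Δ_a^b(G) = Δ_a^b(F) for all a, b ∈ I. -/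
open Set Filter Topology MeasureTheory

noncomputable section

def dd (f : ℝ × ℝ → ℝ) (a₁ a₂ b₁ b₂ : ℝ) : ℝ :=
  f (b₁, b₂) - f (b₁, a₂) - f (a₁, b₂) + f (a₁, a₂)

lemma dd_add (f : ℝ × ℝ → ℝ) (u₁ u₂ v₁ v₂ m₁ m₂ : ℝ) :
    dd f u₁ u₂ v₁ v₂ =
      dd f u₁ u₂ m₁ m₂ + dd f m₁ u₂ v₁ m₂ + dd f u₁ m₂ m₁ v₂ + dd f m₁ m₂ v₁ v₂ := by
  simp only [dd]; ring

def Qrel (D : ℝ × ℝ → ℝ) (r r' : ℝ × ℝ × ℝ × ℝ) : Prop :=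
  (r'.1 = r.1 ∨ r'.1 = (r.1 + r.2.2.1) / 2) ∧
  (r'.2.1 = r.2.1 ∨ r'.2.1 = (r.2.1 + r.2.2.2) / 2) ∧
  r'.2.2.1 - r'.1 = (r.2.2.1 - r.1) / 2 ∧
  r'.2.2.2 - r'.2.1 = (r.2.2.2 - r.2.1) / 2 ∧
  |dd D r.1 r.2.1 r.2.2.1 r.2.2.2| / 4 ≤ |dd D r'.1 r'.2.1 r'.2.2.1 r'.2.2.2|

lemma stepQ (D : ℝ × ℝ → ℝ) (r : ℝ × ℝ × ℝ × ℝ) : ∃ r', Qrel D r r' := by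
  obtain ⟨u₁, u₂, v₁, v₂⟩ := r
  set m₁ := (u₁ + v₁) / 2 with hm₁
  set m₂ := (u₂ + v₂) / 2 with hm₂
  have hadd := dd_add D u₁ u₂ v₁ v₂ m₁ m₂
  have key : |dd D u₁ u₂ v₁ v₂| / 4 ≤ |dd D u₁ u₂ m₁ m₂| ∨
      |dd D u₁ u₂ v₁ v₂| / 4 ≤ |dd D m₁ u₂ v₁ m₂| ∨
      |dd D u₁ u₂ v₁ v₂| / 4 ≤ |dd D u₁ m₂ m₁ v₂| ∨
      |dd D u₁ u₂ v₁ v₂| / 4 ≤ |dd D m₁ m₂ v₁ v₂| := by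
    by_contra h
    push_neg at h
    obtain ⟨h1, h2, h3, h4⟩ := h
    have t1 := abs_add_le (dd D u₁ u₂ m₁ m₂ + dd D m₁ u₂ v₁ m₂ + dd D u₁ m₂ m₁ v₂)
      (dd D m₁ m₂ v₁ v₂)
    have t2 := abs_add_le (dd D u₁ u₂ m₁ m₂ + dd D m₁ u₂ v₁ m₂) (dd D u₁ m₂ m₁ v₂)
    have t3 := abs_add_le (dd D u₁ u₂ m₁ m₂) (dd D m₁ u₂ v₁ m₂)
    rw [hadd] at *
    linarith
  rcases key with k | k | k | k
  · exact ⟨(u₁, u₂, m₁, m₂), Or.inl rfl, Or.inl rfl, by rw [hm₁]; ring, by rw [hm₂]; ring, k⟩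
  · exact ⟨(m₁, u₂, v₁, m₂), Or.inr rfl, Or.inl rfl, by rw [hm₁]; ring, by rw [hm₂]; ring, k⟩
  · exact ⟨(u₁, m₂, m₁, v₂), Or.inl rfl, Or.inr rfl, by rw [hm₁]; ring, by rw [hm₂]; ring, k⟩
  · exact ⟨(m₁, m₂, v₁, v₂), Or.inr rfl, Or.inr rfl, by rw [hm₁]; ring, by rw [hm₂]; ring, k⟩

noncomputable def nxt (D : ℝ × ℝ → ℝ) (r : ℝ × ℝ × ℝ × ℝ) : ℝ × ℝ × ℝ × ℝ :=
  (stepQ D r).choose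

lemma nxt_spec (D : ℝ × ℝ → ℝ) (r : ℝ × ℝ × ℝ × ℝ) : Qrel D r (nxt D r) :=
  (stepQ D r).choose_spec

noncomputable def bseq (D : ℝ × ℝ → ℝ) (r₀ : ℝ × ℝ × ℝ × ℝ) (n : ℕ) : ℝ × ℝ × ℝ × ℝ :=
  (nxt D)^[n] r₀

lemma sq_zero (D : ℝ × ℝ → ℝ) (r₀ : ℝ × ℝ × ℝ × ℝ) : bseq D r₀ 0 = r₀ := rfl

lemma sq_spec (D : ℝ × ℝ → ℝ) (r₀ : ℝ × ℝ × ℝ × ℝ) (n : ℕ) :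
    Qrel D (bseq D r₀ n) (bseq D r₀ (n + 1)) := by
  have h : bseq D r₀ (n + 1) = nxt D (bseq D r₀ n) := Function.iterate_succ_apply' _ _ _
  rw [h]
  exact nxt_spec D (bseq D r₀ n)
lemma oneD (u x : ℕ → ℝ) (h0 : u 0 ≤ x 0)
    (hrec : ∀ n, (u (n+1) = u n ∨ u (n+1) = (u n + x n)/2) ∧
      x (n+1) - u (n+1) = (x n - u n)/2) :
    (∀ n, x n - u n = (x 0 - u 0)/2^n) ∧ Monotone u ∧ Antitone x ∧
    (∀ m n, u m ≤ x n) := by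
  have hlen : ∀ n, x n - u n = (x 0 - u 0)/2^n := by
    intro n
    induction n with
    | zero => simp
    | succ n ih => rw [(hrec n).2, ih, pow_succ]; ring
  have hlen0 : ∀ n, 0 ≤ x n - u n := by
    intro n; rw [hlen n]; exact div_nonneg (by linarith) (by positivity)
  have hu : Monotone u := by
    apply monotone_nat_of_le_succ
    intro n
    rcases (hrec n).1 with h | h
    · exact h.ge
    · have := hlen0 n; linarith [h.le]
  have hx : Antitone x := by
    apply antitone_nat_of_succ_le
    intro n
    have h2 := (hrec n).2
    rcases (hrec n).1 with h | h
    · have := hlen0 n; linarith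
    · linarith
  refine ⟨hlen, hu, hx, fun m n => ?_⟩
  rcases le_total m n with h | h
  · have := hlen0 n; have := hu h; linarith
  · have := hlen0 m; have := hx h; linarith

lemma dd_comm (f : ℝ × ℝ → ℝ) (a₁ a₂ b₁ b₂ : ℝ) :
    dd f a₁ a₂ b₁ b₂ = dd f b₁ b₂ a₁ a₂ := by simp only [dd]; ring

lemma dd_flip₁ (f : ℝ × ℝ → ℝ) (a₁ a₂ b₁ b₂ : ℝ) :
    dd f a₁ a₂ b₁ b₂ = -dd f b₁ a₂ a₁ b₂ := by simp only [dd]; ring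

lemma dd_flip₂ (f : ℝ × ℝ → ℝ) (a₁ a₂ b₁ b₂ : ℝ) :
    dd f a₁ a₂ b₁ b₂ = -dd f a₁ b₂ b₁ a₂ := by simp only [dd]; ring

set_option maxHeartbeats 1000000 in
lemma key0 (D : ℝ × ℝ → ℝ) (S : Set (ℝ × ℝ))
    (hD : ∀ x ∈ S, HasDoubleDerivWithinAt D S x 0)
    (a₁ a₂ b₁ b₂ : ℝ) (h1 : a₁ ≤ b₁) (h2 : a₂ ≤ b₂)
    (hsub : Set.Icc a₁ b₁ ×ˢ Set.Icc a₂ b₂ ⊆ S) :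
    dd D a₁ a₂ b₁ b₂ = 0 := by
  by_contra hne
  have hc : 0 < |dd D a₁ a₂ b₁ b₂| := abs_pos.2 hne
  have hlt1 : a₁ < b₁ := by
    rcases lt_or_eq_of_le h1 with h | h
    · exact h
    · exact absurd (by rw [← h]; simp only [dd]; ring) hne
  have hlt2 : a₂ < b₂ := by
    rcases lt_or_eq_of_le h2 with h | h
    · exact h
    · exact absurd (by rw [← h]; simp only [dd]; ring) hne
  set c := |dd D a₁ a₂ b₁ b₂| with hcdef
  -- the bisection sequence
  set r₀ : ℝ × ℝ × ℝ × ℝ := (a₁, a₂, b₁, b₂) with hr₀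
  set U : ℕ → ℝ := fun n => (bseq D r₀ n).1 with hU
  set V : ℕ → ℝ := fun n => (bseq D r₀ n).2.1 with hV
  set X : ℕ → ℝ := fun n => (bseq D r₀ n).2.2.1 with hX
  set Y : ℕ → ℝ := fun n => (bseq D r₀ n).2.2.2 with hY
  have hU0 : U 0 = a₁ := rfl
  have hV0 : V 0 = a₂ := rfl
  have hX0 : X 0 = b₁ := rfl
  have hY0 : Y 0 = b₂ := rfl
  have hrec := fun n => sq_spec D r₀ n
  have hrec1 : ∀ n, (U (n+1) = U n ∨ U (n+1) = (U n + X n)/2) ∧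
      X (n+1) - U (n+1) = (X n - U n)/2 := fun n => ⟨(hrec n).1, (hrec n).2.2.1⟩
  have hrec2 : ∀ n, (V (n+1) = V n ∨ V (n+1) = (V n + Y n)/2) ∧
      Y (n+1) - V (n+1) = (Y n - V n)/2 := fun n => ⟨(hrec n).2.1, (hrec n).2.2.2.1⟩
  have habs : ∀ n, |dd D (U n) (V n) (X n) (Y n)| / 4 ≤
      |dd D (U (n+1)) (V (n+1)) (X (n+1)) (Y (n+1))| := fun n => (hrec n).2.2.2.2
  obtain ⟨hlen1, hUm, hXm, hUX⟩ := oneD U X (by rw [hU0, hX0]; exact h1) hrec1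
  obtain ⟨hlen2, hVm, hYm, hVY⟩ := oneD V Y (by rw [hV0, hY0]; exact h2) hrec2
  rw [hU0, hX0] at hlen1
  rw [hV0, hY0] at hlen2
  -- lower bound on |dd| on the n-th rectangle
  have hddn : ∀ n, c / 4^n ≤ |dd D (U n) (V n) (X n) (Y n)| := by
    intro n
    induction n with
    | zero => rw [hU0, hV0, hX0, hY0]; simp [hcdef]
    | succ n ih =>
      calc c / 4^(n+1) = (c / 4^n) / 4 := by rw [pow_succ]; ring
        _ ≤ |dd D (U n) (V n) (X n) (Y n)| / 4 := by linarith
        _ ≤ _ := habs n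
  -- the limit point
  have hbddU : BddAbove (Set.range U) := ⟨b₁, by rintro _ ⟨m, rfl⟩; have := hUX m 0; rwa [hX0] at this⟩
  have hbddV : BddAbove (Set.range V) := ⟨b₂, by rintro _ ⟨m, rfl⟩; have := hVY m 0; rwa [hY0] at this⟩
  set x₁ : ℝ := ⨆ n, U n with hx₁def
  set x₂ : ℝ := ⨆ n, V n with hx₂def
  have hx₁u : ∀ n, U n ≤ x₁ := fun n => le_ciSup hbddU n
  have hx₂u : ∀ n, V n ≤ x₂ := fun n => le_ciSup hbddV n
  have hx₁v : ∀ n, x₁ ≤ X n := fun n => ciSup_le (fun m => hUX m n)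
  have hx₂v : ∀ n, x₂ ≤ Y n := fun n => ciSup_le (fun m => hVY m n)
  have hx₁I : x₁ ∈ Set.Icc a₁ b₁ := ⟨by rw [← hU0]; exact hx₁u 0, by rw [← hX0]; exact hx₁v 0⟩
  have hx₂I : x₂ ∈ Set.Icc a₂ b₂ := ⟨by rw [← hV0]; exact hx₂u 0, by rw [← hY0]; exact hx₂v 0⟩
  have hxS : ((x₁, x₂) : ℝ × ℝ) ∈ S := hsub ⟨hx₁I, hx₂I⟩
  -- apply the zero-derivative hypothesis
  set ε : ℝ := c / (2 * ((b₁ - a₁) * (b₂ - a₂))) with hεdef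
  have hε : 0 < ε := by
    apply div_pos hc
    have : 0 < (b₁ - a₁) * (b₂ - a₂) := mul_pos (by linarith) (by linarith)
    linarith
  have hder := hD (x₁, x₂) hxS
  unfold HasDoubleDerivWithinAt DoubleLimWithin at hder
  obtain ⟨δ₁, hδ₁, δ₂, hδ₂, hder⟩ := hder ε hε
  -- the local estimate, valid also on degenerate rectangles
  have hest : ∀ y₁ y₂ : ℝ, y₁ ∈ Set.Icc a₁ b₁ → y₂ ∈ Set.Icc a₂ b₂ →
      |y₁ - x₁| < δ₁ → |y₂ - x₂| < δ₂ →
      |dd D x₁ x₂ y₁ y₂| ≤ ε * (|y₁ - x₁| * |y₂ - x₂|) := by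
    intro y₁ y₂ hy1 hy2 hd1 hd2
    rcases eq_or_ne y₁ x₁ with h | h
    · have h0 : dd D x₁ x₂ y₁ y₂ = 0 := by rw [h]; simp only [dd]; ring
      rw [h0, abs_zero]; positivity
    rcases eq_or_ne y₂ x₂ with h' | h'
    · have h0 : dd D x₁ x₂ y₁ y₂ = 0 := by rw [h']; simp only [dd]; ring
      rw [h0, abs_zero]; positivity
    have h1' : 0 < |y₁ - x₁| := abs_pos.2 (sub_ne_zero.2 h)
    have h2' : 0 < |y₂ - x₂| := abs_pos.2 (sub_ne_zero.2 h')
    have hlt := hder (y₁, y₂) (hsub ⟨hy1, hy2⟩) h1' hd1 h2' hd2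
    have heq : (fun y => dSlope D (x₁, x₂) y) (y₁, y₂) - 0 =
        dd D x₁ x₂ y₁ y₂ / ((y₁ - x₁) * (y₂ - x₂)) := by
      simp only [dSlope, dDiff, dd, sub_zero]
    rw [heq, abs_div] at hlt
    have hpos : 0 < |(y₁ - x₁) * (y₂ - x₂)| := by
      rw [abs_mul]; exact mul_pos h1' h2'
    rw [div_lt_iff₀ hpos] at hlt
    rw [abs_mul] at hlt
    nlinarith [hlt]
  -- choose n with the rectangle small enough
  have htend : ∀ d : ℝ, ∀ δ : ℝ, 0 < δ → ∀ᶠ n : ℕ in Filter.atTop, d / 2^n < δ := by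
    intro d δ hδ
    have h := tendsto_pow_atTop_nhds_zero_of_lt_one (by norm_num : (0:ℝ) ≤ 1/2)
      (by norm_num : (1:ℝ)/2 < 1)
    have h2 : Filter.Tendsto (fun n : ℕ => d * (1/2)^n) Filter.atTop (nhds 0) := by
      simpa using h.const_mul d
    have h3 := h2.eventually_lt_const hδ
    refine h3.mono fun n hn => ?_
    have : d / 2^n = d * (1/2)^n := by
      rw [one_div, inv_pow, div_eq_mul_inv]
    rwa [this]
  obtain ⟨n, hn1, hn2⟩ :=
    (((htend (b₁ - a₁) δ₁ hδ₁).and (htend (b₂ - a₂) δ₂ hδ₂))).exists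
  -- all corners of the n-th rectangle are close to x and inside the big rectangle
  have hUb : a₁ ≤ U n := by rw [← hU0]; exact hUm (Nat.zero_le n)
  have hXb : X n ≤ b₁ := by rw [← hX0]; exact hXm (Nat.zero_le n)
  have hVb : a₂ ≤ V n := by rw [← hV0]; exact hVm (Nat.zero_le n)
  have hYb : Y n ≤ b₂ := by rw [← hY0]; exact hYm (Nat.zero_le n)
  have hUI : U n ∈ Set.Icc a₁ b₁ := ⟨hUb, le_trans (hUX n n) hXb⟩
  have hXI : X n ∈ Set.Icc a₁ b₁ := ⟨le_trans hUb (hUX n n), hXb⟩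
  have hVI : V n ∈ Set.Icc a₂ b₂ := ⟨hVb, le_trans (hVY n n) hYb⟩
  have hYI : Y n ∈ Set.Icc a₂ b₂ := ⟨le_trans hVb (hVY n n), hYb⟩
  have lU : |U n - x₁| = x₁ - U n := by rw [abs_sub_comm, abs_of_nonneg (by linarith [hx₁u n])]
  have lX : |X n - x₁| = X n - x₁ := abs_of_nonneg (by linarith [hx₁v n])
  have lV : |V n - x₂| = x₂ - V n := by rw [abs_sub_comm, abs_of_nonneg (by linarith [hx₂u n])]
  have lY : |Y n - x₂| = Y n - x₂ := abs_of_nonneg (by linarith [hx₂v n])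
  have hL1 := hlen1 n
  have hL2 := hlen2 n
  have dU : |U n - x₁| < δ₁ := by rw [lU]; have := hx₁v n; linarith
  have dX : |X n - x₁| < δ₁ := by rw [lX]; have := hx₁u n; linarith
  have dV : |V n - x₂| < δ₂ := by rw [lV]; have := hx₂v n; linarith
  have dY : |Y n - x₂| < δ₂ := by rw [lY]; have := hx₂u n; linarith
  -- split the n-th rectangle at (x₁, x₂)
  have hsplit := dd_add D (U n) (V n) (X n) (Y n) x₁ x₂
  have e1 : |dd D (U n) (V n) x₁ x₂| = |dd D x₁ x₂ (U n) (V n)| := by rw [dd_comm]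
  have e2 : |dd D x₁ (V n) (X n) x₂| = |dd D x₁ x₂ (X n) (V n)| := by
    rw [dd_flip₂ D x₁ (V n) (X n) x₂, abs_neg]
  have e3 : |dd D (U n) x₂ x₁ (Y n)| = |dd D x₁ x₂ (U n) (Y n)| := by
    rw [dd_flip₁ D (U n) x₂ x₁ (Y n), abs_neg]
  have E1 := hest (U n) (V n) hUI hVI dU dV
  have E2 := hest (X n) (V n) hXI hVI dX dV
  have E3 := hest (U n) (Y n) hUI hYI dU dY
  have E4 := hest (X n) (Y n) hXI hYI dX dY
  have tri : |dd D (U n) (V n) (X n) (Y n)| ≤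
      |dd D (U n) (V n) x₁ x₂| + |dd D x₁ (V n) (X n) x₂| +
      |dd D (U n) x₂ x₁ (Y n)| + |dd D x₁ x₂ (X n) (Y n)| := by
    rw [hsplit]
    have t1 := abs_add_le (dd D (U n) (V n) x₁ x₂ + dd D x₁ (V n) (X n) x₂ +
      dd D (U n) x₂ x₁ (Y n)) (dd D x₁ x₂ (X n) (Y n))
    have t2 := abs_add_le (dd D (U n) (V n) x₁ x₂ + dd D x₁ (V n) (X n) x₂)
      (dd D (U n) x₂ x₁ (Y n))
    have t3 := abs_add_le (dd D (U n) (V n) x₁ x₂) (dd D x₁ (V n) (X n) x₂)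
    linarith
  rw [e1, e2, e3] at tri
  -- combine everything
  have hsum : |dd D (U n) (V n) (X n) (Y n)| ≤
      ε * ((b₁ - a₁) / 2^n * ((b₂ - a₂) / 2^n)) := by
    have expand : |U n - x₁| * |V n - x₂| + |X n - x₁| * |V n - x₂| +
        (|U n - x₁| * |Y n - x₂|) + |X n - x₁| * |Y n - x₂| =
        (X n - U n) * (Y n - V n) := by
      rw [lU, lX, lV, lY]; ring
    calc |dd D (U n) (V n) (X n) (Y n)| ≤ _ := tri
      _ ≤ ε * (|U n - x₁| * |V n - x₂|) + ε * (|X n - x₁| * |V n - x₂|) +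
          ε * (|U n - x₁| * |Y n - x₂|) + ε * (|X n - x₁| * |Y n - x₂|) := by linarith
      _ = ε * ((X n - U n) * (Y n - V n)) := by rw [← expand]; ring
      _ = ε * ((b₁ - a₁) / 2^n * ((b₂ - a₂) / 2^n)) := by rw [hL1, hL2]
  have h4n : (4:ℝ)^n = 2^n * 2^n := by
    rw [← mul_pow]; norm_num
  have hfin : c / 4^n ≤ ε * ((b₁ - a₁) * (b₂ - a₂)) / 4^n := by
    calc c / 4^n ≤ |dd D (U n) (V n) (X n) (Y n)| := hddn n
      _ ≤ ε * ((b₁ - a₁) / 2^n * ((b₂ - a₂) / 2^n)) := hsum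
      _ = ε * ((b₁ - a₁) * (b₂ - a₂)) / 4^n := by rw [h4n]; field_simp
  have hεval : ε * ((b₁ - a₁) * (b₂ - a₂)) = c / 2 := by
    rw [hεdef]
    have hne' : (b₁ - a₁) * (b₂ - a₂) ≠ 0 :=
      ne_of_gt (mul_pos (by linarith) (by linarith))
    rw [div_mul_eq_mul_div, mul_div_mul_right _ _ hne']
  rw [hεval] at hfin
  have h4pos : (0:ℝ) < 4^n := by positivity
  rw [div_le_div_iff₀ h4pos h4pos] at hfin
  nlinarith [hfin, hc, h4pos]

/-- two double primitives of the same function on a double interval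
differ by a double constant function; in particular they have the same double
differences. -/
theorem stmt15 (f F G : ℝ × ℝ → ℝ) (I₁ I₂ : Set ℝ)
    (hI₁ : I₁.OrdConnected) (hI₂ : I₂.OrdConnected)
    (hF : ∀ x ∈ I₁ ×ˢ I₂, HasDoubleDerivWithinAt F (I₁ ×ˢ I₂) x (f x))
    (hG : ∀ x ∈ I₁ ×ˢ I₂, HasDoubleDerivWithinAt G (I₁ ×ˢ I₂) x (f x)) :
    (∃ H : ℝ × ℝ → ℝ,
      (∀ p ∈ I₁ ×ˢ I₂, ∀ q ∈ I₁ ×ˢ I₂, dDiff H p q = 0) ∧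
      (∀ x ∈ I₁ ×ˢ I₂, G x = F x + H x)) ∧
    (∀ p ∈ I₁ ×ˢ I₂, ∀ q ∈ I₁ ×ˢ I₂, dDiff G p q = dDiff F p q) := by
  set D : ℝ × ℝ → ℝ := fun y => G y - F y with hDdef
  have hD : ∀ x ∈ I₁ ×ˢ I₂, HasDoubleDerivWithinAt D (I₁ ×ˢ I₂) x 0 := by
    intro x hx
    unfold HasDoubleDerivWithinAt DoubleLimWithin
    intro ε hε
    have hF' := hF x hx
    have hG' := hG x hx
    unfold HasDoubleDerivWithinAt DoubleLimWithin at hF' hG'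
    obtain ⟨δ₁, hδ₁, δ₂, hδ₂, hFe⟩ := hF' (ε/2) (by linarith)
    obtain ⟨η₁, hη₁, η₂, hη₂, hGe⟩ := hG' (ε/2) (by linarith)
    refine ⟨min δ₁ η₁, lt_min hδ₁ hη₁, min δ₂ η₂, lt_min hδ₂ hη₂, ?_⟩
    intro y hy p1 p2 p3 p4
    have hA := hFe y hy p1 (lt_of_lt_of_le p2 (min_le_left _ _)) p3
      (lt_of_lt_of_le p4 (min_le_left _ _))
    have hB := hGe y hy p1 (lt_of_lt_of_le p2 (min_le_right _ _)) p3
      (lt_of_lt_of_le p4 (min_le_right _ _))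
    show |dSlope D x y - 0| < ε
    have heq : dSlope D x y - 0 = (dSlope G x y - f x) - (dSlope F x y - f x) := by
      simp only [dSlope, dDiff, hDdef]
      ring
    rw [heq]
    calc |(dSlope G x y - f x) - (dSlope F x y - f x)| ≤
        |dSlope G x y - f x| + |dSlope F x y - f x| := abs_sub _ _
      _ < ε := by
        simp only at hA hB
        linarith
  have hzero : ∀ p ∈ I₁ ×ˢ I₂, ∀ q ∈ I₁ ×ˢ I₂, dDiff D p q = 0 := by
    intro p hp q hq
    have hsub : Set.Icc (p.1 ⊓ q.1) (p.1 ⊔ q.1) ×ˢ Set.Icc (p.2 ⊓ q.2) (p.2 ⊔ q.2) ⊆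
        I₁ ×ˢ I₂ := by
      apply Set.prod_mono
      · exact hI₁.uIcc_subset hp.1 hq.1
      · exact hI₂.uIcc_subset hp.2 hq.2
    have h0 := key0 D (I₁ ×ˢ I₂) hD (p.1 ⊓ q.1) (p.2 ⊓ q.2) (p.1 ⊔ q.1) (p.2 ⊔ q.2)
      inf_le_sup inf_le_sup hsub
    have hpq : dDiff D p q = dd D p.1 p.2 q.1 q.2 := rfl
    rcases le_total p.1 q.1 with h₁ | h₁ <;> rcases le_total p.2 q.2 with h₂ | h₂
    · rw [inf_eq_left.2 h₁, sup_eq_right.2 h₁, inf_eq_left.2 h₂, sup_eq_right.2 h₂] at h0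
      rw [hpq]; exact h0
    · rw [inf_eq_left.2 h₁, sup_eq_right.2 h₁, inf_eq_right.2 h₂, sup_eq_left.2 h₂] at h0
      rw [hpq, dd_flip₂, h0, neg_zero]
    · rw [inf_eq_right.2 h₁, sup_eq_left.2 h₁, inf_eq_left.2 h₂, sup_eq_right.2 h₂] at h0
      rw [hpq, dd_flip₁, h0, neg_zero]
    · rw [inf_eq_right.2 h₁, sup_eq_left.2 h₁, inf_eq_right.2 h₂, sup_eq_left.2 h₂] at h0
      rw [hpq, dd_comm, h0]
  refine ⟨⟨D, hzero, fun x hx => by simp only [hDdef]; ring⟩, ?_⟩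
  intro p hp q hq
  have h := hzero p hp q hq
  have hdiff : dDiff G p q - dDiff F p q = dDiff D p q := by
    simp only [dDiff, hDdef]; ring
  linarith
end
end

section
/- Let f be defined on a double interval I and suppose f has a double primitive function F on I. Fix a ∈ I and define G : I → ℝ by G(x) := ∫_a^x f (the double Newton integral). Then (a) Δ_b^x(G) = Δ_b^x(F) for all b, x ∈ I, and (b) G is double differentiable on I with G'(b) = f(b) for every b ∈ I. -/
open Set Filter Topology MeasureTheory

noncomputable section

/-- the double Newton integral `G(x) = ∫_a^x f = Δ_a^x(F)` satisfies
`Δ_b^x(G) = Δ_b^x(F)` and is a double primitive of `f` on `I`. -/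
theorem stmt16 (f F : ℝ × ℝ → ℝ) (I₁ I₂ : Set ℝ)
    (hI₁ : I₁.OrdConnected) (hI₂ : I₂.OrdConnected)
    (hF : ∀ x ∈ I₁ ×ˢ I₂, HasDoubleDerivWithinAt F (I₁ ×ˢ I₂) x (f x))
    (a : ℝ × ℝ) (ha : a ∈ I₁ ×ˢ I₂) :
    (∀ b ∈ I₁ ×ˢ I₂, ∀ x ∈ I₁ ×ˢ I₂,
      dDiff (fun y => dDiff F a y) b x = dDiff F b x) ∧
    (∀ b ∈ I₁ ×ˢ I₂,
      HasDoubleDerivWithinAt (fun y => dDiff F a y) (I₁ ×ˢ I₂) b (f b)) := by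
  have key : ∀ b x : ℝ × ℝ, dDiff (fun y => dDiff F a y) b x = dDiff F b x := by
    intro b x; simp only [dDiff]; ring
  refine ⟨fun b _ x _ => key b x, fun b hb => ?_⟩
  have h := hF b hb
  simpa only [HasDoubleDerivWithinAt, dSlope, key] using h
end
end

section
/- (Mean value theorem for double Newton integrals) Let a, b ∈ ℝ² with a < b, and let f : [a,b] → ℝ have a double primitive function F on [a,b]. Then there exists c ∈ (a,b) such that ∫_a^b f = f(c)·(b₁−a₁)(b₂−a₂). -/
open Set Filter Topology MeasureTheory

noncomputable section

namespace Stmt17Aux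

open Set


/-- Anchored estimate: restatement of the double derivative condition. -/
lemma anchored (f F : ℝ × ℝ → ℝ) (S : Set (ℝ × ℝ)) (c : ℝ × ℝ)
    (hc : HasDoubleDerivWithinAt F S c (f c)) {ε : ℝ} (hε : 0 < ε) :
    ∃ δ > 0, ∀ x ∈ S, |x.1 - c.1| < δ → |x.2 - c.2| < δ →
      |dDiff F c x - f c * ((x.1 - c.1) * (x.2 - c.2))| ≤ ε * (|x.1 - c.1| * |x.2 - c.2|) := by
  obtain ⟨δ₁, hδ₁, δ₂, hδ₂, h⟩ := hc ε hε
  refine ⟨min δ₁ δ₂, lt_min hδ₁ hδ₂, fun x hx h1 h2 => ?_⟩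
  rcases eq_or_ne x.1 c.1 with he | he1
  · have h0 : dDiff F c x = 0 := by simp only [dDiff]; rw [he]; ring
    rw [h0, he]
    simp
  rcases eq_or_ne x.2 c.2 with he | he2
  · have h0 : dDiff F c x = 0 := by simp only [dDiff]; rw [he]; ring
    rw [h0, he]
    simp
  have hw : (x.1 - c.1) * (x.2 - c.2) ≠ 0 :=
    mul_ne_zero (sub_ne_zero.2 he1) (sub_ne_zero.2 he2)
  have hsl : |dSlope F c x - f c| < ε :=
    h x hx (abs_pos.2 (sub_ne_zero.2 he1)) (lt_of_lt_of_le h1 (min_le_left _ _))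
      (abs_pos.2 (sub_ne_zero.2 he2)) (lt_of_lt_of_le h2 (min_le_right _ _))
  have hd : dDiff F c x = dSlope F c x * ((x.1 - c.1) * (x.2 - c.2)) := by
    rw [dSlope, div_mul_cancel₀ _ hw]
  calc |dDiff F c x - f c * ((x.1 - c.1) * (x.2 - c.2))|
      = |dSlope F c x - f c| * |(x.1 - c.1) * (x.2 - c.2)| := by
        rw [hd, ← sub_mul, abs_mul]
    _ ≤ ε * (|x.1 - c.1| * |x.2 - c.2|) := by
        rw [abs_mul]
        exact mul_le_mul_of_nonneg_right hsl.le (by positivity)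

/-- Rectangle estimate around a contained point. -/
lemma rect_est (f F : ℝ × ℝ → ℝ) (S₁ S₂ : Set ℝ) (c : ℝ × ℝ)
    (hc : HasDoubleDerivWithinAt F (S₁ ×ˢ S₂) c (f c)) {ε : ℝ} (hε : 0 < ε) :
    ∃ δ > 0, ∀ p q : ℝ × ℝ, p ∈ S₁ ×ˢ S₂ → q ∈ S₁ ×ˢ S₂ →
      p.1 ≤ c.1 → c.1 ≤ q.1 → p.2 ≤ c.2 → c.2 ≤ q.2 →
      q.1 - p.1 < δ → q.2 - p.2 < δ →
      |dDiff F p q - f c * ((q.1 - p.1) * (q.2 - p.2))| ≤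
        4 * ε * ((q.1 - p.1) * (q.2 - p.2)) := by
  obtain ⟨δ, hδ, h⟩ := anchored f F (S₁ ×ˢ S₂) c hc hε
  refine ⟨δ, hδ, fun p q hp hq hp1 hq1 hp2 hq2 hs1 hs2 => ?_⟩
  have hpq1 : p.1 ≤ q.1 := le_trans hp1 hq1
  have hpq2 : p.2 ≤ q.2 := le_trans hp2 hq2
  -- four corners
  have m1 : ((p.1, p.2) : ℝ × ℝ) ∈ S₁ ×ˢ S₂ := ⟨hp.1, hp.2⟩
  have m2 : ((q.1, p.2) : ℝ × ℝ) ∈ S₁ ×ˢ S₂ := ⟨hq.1, hp.2⟩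
  have m3 : ((p.1, q.2) : ℝ × ℝ) ∈ S₁ ×ˢ S₂ := ⟨hp.1, hq.2⟩
  have m4 : ((q.1, q.2) : ℝ × ℝ) ∈ S₁ ×ˢ S₂ := ⟨hq.1, hq.2⟩
  have b1 : |p.1 - c.1| ≤ q.1 - p.1 := by rw [abs_sub_comm, abs_of_nonneg (by linarith)]; linarith
  have b2 : |q.1 - c.1| ≤ q.1 - p.1 := by rw [abs_of_nonneg (by linarith)]; linarith
  have b3 : |p.2 - c.2| ≤ q.2 - p.2 := by rw [abs_sub_comm, abs_of_nonneg (by linarith)]; linarith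
  have b4 : |q.2 - c.2| ≤ q.2 - p.2 := by rw [abs_of_nonneg (by linarith)]; linarith
  have d1 : |p.1 - c.1| < δ := lt_of_le_of_lt b1 hs1
  have d2 : |q.1 - c.1| < δ := lt_of_le_of_lt b2 hs1
  have d3 : |p.2 - c.2| < δ := lt_of_le_of_lt b3 hs2
  have d4 : |q.2 - c.2| < δ := lt_of_le_of_lt b4 hs2
  have e1 := h _ m1 d1 d3
  have e2 := h _ m2 d2 d3
  have e3 := h _ m3 d1 d4
  have e4 := h _ m4 d2 d4
  simp only at e1 e2 e3 e4
  have key : dDiff F p q - f c * ((q.1 - p.1) * (q.2 - p.2)) =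
      (dDiff F c (q.1, q.2) - f c * ((q.1 - c.1) * (q.2 - c.2)))
      - (dDiff F c (q.1, p.2) - f c * ((q.1 - c.1) * (p.2 - c.2)))
      - (dDiff F c (p.1, q.2) - f c * ((p.1 - c.1) * (q.2 - c.2)))
      + (dDiff F c (p.1, p.2) - f c * ((p.1 - c.1) * (p.2 - c.2))) := by
    simp only [dDiff]; ring
  have harea : (0:ℝ) ≤ (q.1 - p.1) * (q.2 - p.2) :=
    mul_nonneg (by linarith) (by linarith)
  have bb1 : |p.1 - c.1| * |p.2 - c.2| ≤ (q.1 - p.1) * (q.2 - p.2) :=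
    mul_le_mul b1 b3 (abs_nonneg _) (by linarith)
  have bb2 : |q.1 - c.1| * |p.2 - c.2| ≤ (q.1 - p.1) * (q.2 - p.2) :=
    mul_le_mul b2 b3 (abs_nonneg _) (by linarith)
  have bb3 : |p.1 - c.1| * |q.2 - c.2| ≤ (q.1 - p.1) * (q.2 - p.2) :=
    mul_le_mul b1 b4 (abs_nonneg _) (by linarith)
  have bb4 : |q.1 - c.1| * |q.2 - c.2| ≤ (q.1 - p.1) * (q.2 - p.2) :=
    mul_le_mul b2 b4 (abs_nonneg _) (by linarith)
  have E1 := le_trans e1 (mul_le_mul_of_nonneg_left bb1 hε.le)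
  have E2 := le_trans e2 (mul_le_mul_of_nonneg_left bb2 hε.le)
  have E3 := le_trans e3 (mul_le_mul_of_nonneg_left bb3 hε.le)
  have E4 := le_trans e4 (mul_le_mul_of_nonneg_left bb4 hε.le)
  rw [key]
  set A := dDiff F c (q.1, q.2) - f c * ((q.1 - c.1) * (q.2 - c.2)) with hA
  set B := dDiff F c (q.1, p.2) - f c * ((q.1 - c.1) * (p.2 - c.2)) with hB
  set C := dDiff F c (p.1, q.2) - f c * ((p.1 - c.1) * (q.2 - c.2)) with hC
  set D := dDiff F c (p.1, p.2) - f c * ((p.1 - c.1) * (p.2 - c.2)) with hD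
  have h1 : |A - B - C + D| ≤ |A - B - C| + |D| := abs_add_le _ _
  have h2 : |A - B - C| ≤ |A - B| + |C| := by
    simpa [sub_eq_add_neg, abs_neg] using abs_add_le (A - B) (-C)
  have h3 : |A - B| ≤ |A| + |B| := by
    simpa [sub_eq_add_neg, abs_neg] using abs_add_le A (-B)
  have := abs_nonneg A
  linarith



lemma dDiff_telescope (F : ℝ × ℝ → ℝ) (y₀ y : ℝ) (g : ℕ → ℝ) (n : ℕ) :
    dDiff F (g 0, y₀) (g n, y) = ∑ j ∈ Finset.range n, dDiff F (g j, y₀) (g (j+1), y) := by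
  induction n with
  | zero => simp only [Finset.range_zero, Finset.sum_empty, dDiff]; ring
  | succ n ih => rw [Finset.sum_range_succ, ← ih]; simp only [dDiff]; ring

/-- Strip estimate: thin horizontal strips have small double difference,
uniformly in horizontal position. -/
lemma strip (f F : ℝ × ℝ → ℝ) (a b : ℝ × ℝ) (hab1 : a.1 < b.1)
    (hF : ∀ x ∈ Set.Icc a.1 b.1 ×ˢ Set.Icc a.2 b.2,
      HasDoubleDerivWithinAt F (Set.Icc a.1 b.1 ×ˢ Set.Icc a.2 b.2) x (f x))
    (y₀ : ℝ) (hy₀ : y₀ ∈ Icc a.2 b.2) :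
    ∃ δ > 0, ∃ C : ℝ, ∀ u v y : ℝ, a.1 ≤ u → u ≤ v → v ≤ b.1 → y ∈ Icc a.2 b.2 →
      |y - y₀| < δ → |dDiff F (u, y₀) (v, y)| ≤ C * |y - y₀| := by
  classical
  set S := Icc a.1 b.1 ×ˢ Icc a.2 b.2 with hS
  have h1 : ∀ x : Icc a.1 b.1, ∃ δ > 0, ∀ z ∈ S, |z.1 - (x:ℝ)| < δ → |z.2 - y₀| < δ →
      |dDiff F ((x:ℝ), y₀) z - f ((x:ℝ), y₀) * ((z.1 - (x:ℝ)) * (z.2 - y₀))| ≤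
        1 * (|z.1 - (x:ℝ)| * |z.2 - y₀|) := by
    intro x
    exact anchored f F S ((x:ℝ), y₀) (hF _ ⟨x.2, hy₀⟩) one_pos
  choose d hd hP using h1
  have hKc : IsCompact (Icc a.1 b.1) := isCompact_Icc
  have hcov : Icc a.1 b.1 ⊆ ⋃ x : Icc a.1 b.1, Metric.ball (x:ℝ) (d x) := fun z hz =>
    Set.mem_iUnion.2 ⟨⟨z, hz⟩, Metric.mem_ball_self (hd _)⟩
  obtain ⟨T, hT⟩ := hKc.elim_finite_subcover (fun x : Icc a.1 b.1 => Metric.ball (x:ℝ) (d x))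
    (fun _ => Metric.isOpen_ball) hcov
  have hTne : T.Nonempty := by
    have ha : a.1 ∈ Icc a.1 b.1 := ⟨le_refl _, hab1.le⟩
    obtain ⟨i, hi, _⟩ := Set.mem_iUnion₂.1 (hT ha)
    exact ⟨i, hi⟩
  obtain ⟨r, hr, hleb⟩ := lebesgue_number_lemma_of_metric (ι := T)
    (c := fun i => Metric.ball ((i : Icc a.1 b.1) : ℝ) (d i)) hKc
    (fun _ => Metric.isOpen_ball)
    (by
      intro z hz
      obtain ⟨i, hi, hzi⟩ := Set.mem_iUnion₂.1 (hT hz)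
      exact Set.mem_iUnion.2 ⟨⟨i, hi⟩, hzi⟩)
  set δ' : ℝ := T.inf' hTne d with hδ'
  have hδ'pos : 0 < δ' := by
    rw [hδ']; exact (Finset.lt_inf'_iff hTne).2 fun i _ => hd i
  set D : ℝ := T.sup' hTne d with hD
  have hDpos : 0 < D := by
    rw [hD]; exact lt_of_lt_of_le (hd hTne.choose) (Finset.le_sup' d hTne.choose_spec)
  set Cf : ℝ := T.sup' hTne (fun i => |f ((i:ℝ), y₀)|) with hCf
  have hCf0 : 0 ≤ Cf := by
    rw [hCf]
    exact le_trans (abs_nonneg _)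
      (Finset.le_sup' (fun i : Icc a.1 b.1 => |f ((i:ℝ), y₀)|) hTne.choose_spec)
  obtain ⟨N, hN⟩ := exists_nat_gt ((b.1 - a.1)/r)
  have hNpos : 0 < (N:ℝ) := lt_trans (div_pos (by linarith) hr) hN
  refine ⟨δ', hδ'pos, (N:ℝ) * (2 * (Cf + 1) * D), fun u v y hu huv hv hy hyy => ?_⟩
  set L : ℝ := (v - u) / N with hL
  have hL0 : 0 ≤ L := div_nonneg (by linarith) hNpos.le
  have hNL : (N:ℝ) * L = v - u := by
    rw [hL]; field_simp
  have hLr : L < r := by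
    have h2 : L ≤ (b.1 - a.1) / N := by
      rw [hL]; gcongr <;> linarith
    have h3 : (b.1 - a.1) / N < r := by
      rw [div_lt_iff₀ hNpos]
      rw [div_lt_iff₀ hr] at hN
      linarith
    linarith
  set t : ℕ → ℝ := fun j => u + j * L with ht
  have htmono : ∀ j : ℕ, j ≤ N → u ≤ t j ∧ t j ≤ v := by
    intro j hj
    have hjN : (j:ℝ) ≤ N := Nat.cast_le.2 hj
    constructor
    · have : 0 ≤ (j:ℝ) * L := mul_nonneg (Nat.cast_nonneg j) hL0
      simp only [ht]; linarith
    · have : (j:ℝ) * L ≤ (N:ℝ) * L := mul_le_mul_of_nonneg_right hjN hL0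
      simp only [ht]; linarith
  have tel := dDiff_telescope F y₀ y t N
  have ht0 : t 0 = u := by simp [ht]
  have htN : t N = v := by simp only [ht]; rw [hNL]; ring
  rw [ht0, htN] at tel
  rw [tel]
  have piece : ∀ j ∈ Finset.range N,
      |dDiff F (t j, y₀) (t (j+1), y)| ≤ 2 * (Cf + 1) * D * |y - y₀| := by
    intro j hj
    have hjN : j < N := Finset.mem_range.1 hj
    have hb1 := htmono j hjN.le
    have hb2 := htmono (j+1) hjN
    obtain ⟨i, hball⟩ := hleb (t j) ⟨by linarith, by linarith⟩
    have hi1 : |t j - ((i : Icc a.1 b.1) : ℝ)| < d i := by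
      have := hball (Metric.mem_ball_self hr)
      rwa [Metric.mem_ball, Real.dist_eq] at this
    have hstep : t (j+1) - t j = L := by simp only [ht]; push_cast; ring
    have hi2 : |t (j+1) - ((i : Icc a.1 b.1) : ℝ)| < d i := by
      have hmem : t (j+1) ∈ Metric.ball (t j) r := by
        rw [Metric.mem_ball, Real.dist_eq, hstep, abs_of_nonneg hL0]; exact hLr
      have := hball hmem
      rwa [Metric.mem_ball, Real.dist_eq] at this
    have hyd : |y - y₀| < d i := by
      refine lt_of_lt_of_le hyy ?_
      rw [hδ']
      exact Finset.inf'_le d i.2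
    have est : ∀ s : ℝ, a.1 ≤ s → s ≤ b.1 → |s - ((i : Icc a.1 b.1) : ℝ)| < d i →
        |dDiff F (((i : Icc a.1 b.1) : ℝ), y₀) (s, y)| ≤ (Cf + 1) * D * |y - y₀| := by
      intro s hs1 hs2 hsd
      have hzS : ((s, y) : ℝ × ℝ) ∈ S := ⟨⟨hs1, hs2⟩, hy⟩
      have hest := hP i (s, y) hzS hsd hyd
      simp only at hest
      have hfb : |f (((i : Icc a.1 b.1) : ℝ), y₀)| ≤ Cf := by
        rw [hCf]
        exact Finset.le_sup' (fun i : Icc a.1 b.1 => |f ((i:ℝ), y₀)|) i.2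
      have hsD : |s - ((i : Icc a.1 b.1) : ℝ)| ≤ D := by
        rw [hD]
        exact le_trans hsd.le (Finset.le_sup' d i.2)
      have habs : |f (((i : Icc a.1 b.1) : ℝ), y₀) * ((s - ((i : Icc a.1 b.1) : ℝ)) * (y - y₀))|
          = |f (((i : Icc a.1 b.1) : ℝ), y₀)| * (|s - ((i : Icc a.1 b.1) : ℝ)| * |y - y₀|) := by
        rw [abs_mul, abs_mul]
      have h0 : (0:ℝ) ≤ |y - y₀| := abs_nonneg _
      have h0' : (0:ℝ) ≤ |s - ((i : Icc a.1 b.1) : ℝ)| := abs_nonneg _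
      calc |dDiff F (((i : Icc a.1 b.1) : ℝ), y₀) (s, y)|
          ≤ |dDiff F (((i : Icc a.1 b.1) : ℝ), y₀) (s, y) -
              f (((i : Icc a.1 b.1) : ℝ), y₀) * ((s - ((i : Icc a.1 b.1) : ℝ)) * (y - y₀))| +
            |f (((i : Icc a.1 b.1) : ℝ), y₀) * ((s - ((i : Icc a.1 b.1) : ℝ)) * (y - y₀))| := by
            simpa using abs_add_le
              (dDiff F (((i : Icc a.1 b.1) : ℝ), y₀) (s, y) -
                f (((i : Icc a.1 b.1) : ℝ), y₀) * ((s - ((i : Icc a.1 b.1) : ℝ)) * (y - y₀)))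
              (f (((i : Icc a.1 b.1) : ℝ), y₀) * ((s - ((i : Icc a.1 b.1) : ℝ)) * (y - y₀)))
        _ ≤ (Cf + 1) * D * |y - y₀| := by
            rw [habs] at *
            nlinarith [hest, mul_le_mul hfb hsD h0' hCf0]
    have hpid : dDiff F (t j, y₀) (t (j+1), y) =
        dDiff F (((i : Icc a.1 b.1) : ℝ), y₀) (t (j+1), y) -
        dDiff F (((i : Icc a.1 b.1) : ℝ), y₀) (t j, y) := by
      simp only [dDiff]; ring
    rw [hpid]
    have e1 := est (t (j+1)) (by linarith) (by linarith) hi2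
    have e2 := est (t j) (by linarith) (by linarith) hi1
    calc |dDiff F (((i : Icc a.1 b.1) : ℝ), y₀) (t (j+1), y) -
        dDiff F (((i : Icc a.1 b.1) : ℝ), y₀) (t j, y)|
        ≤ |dDiff F (((i : Icc a.1 b.1) : ℝ), y₀) (t (j+1), y)| +
          |dDiff F (((i : Icc a.1 b.1) : ℝ), y₀) (t j, y)| := by
          simpa [sub_eq_add_neg, abs_neg] using
            abs_add_le (dDiff F (((i : Icc a.1 b.1) : ℝ), y₀) (t (j+1), y))
              (-(dDiff F (((i : Icc a.1 b.1) : ℝ), y₀) (t j, y)))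
      _ ≤ 2 * (Cf + 1) * D * |y - y₀| := by linarith
  calc |∑ j ∈ Finset.range N, dDiff F (t j, y₀) (t (j+1), y)|
      ≤ ∑ j ∈ Finset.range N, |dDiff F (t j, y₀) (t (j+1), y)| :=
        Finset.abs_sum_le_sum_abs _ _
    _ ≤ ∑ _j ∈ Finset.range N, 2 * (Cf + 1) * D * |y - y₀| := Finset.sum_le_sum piece
    _ = (N:ℝ) * (2 * (Cf + 1) * D) * |y - y₀| := by
        rw [Finset.sum_const, Finset.card_range, nsmul_eq_mul]; ring

lemma transposeDD (F : ℝ × ℝ → ℝ) (S₁ S₂ : Set ℝ) (c : ℝ × ℝ) (L : ℝ)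
    (h : HasDoubleDerivWithinAt F (S₁ ×ˢ S₂) c L) :
    HasDoubleDerivWithinAt (fun z => F (z.2, z.1)) (S₂ ×ˢ S₁) (c.2, c.1) L := by
  intro ε hε
  obtain ⟨δ₁, h1, δ₂, h2, h⟩ := h ε hε
  refine ⟨δ₂, h2, δ₁, h1, fun x hx p1 p2 p3 p4 => ?_⟩
  have heq : dSlope (fun z => F (z.2, z.1)) (c.2, c.1) x = dSlope F c (x.2, x.1) := by
    simp only [dSlope, dDiff]; ring
  simp only [heq]
  exact h (x.2, x.1) ⟨hx.2, hx.1⟩ p3 p4 p1 p2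

lemma strip' (f F : ℝ × ℝ → ℝ) (a b : ℝ × ℝ) (hab2 : a.2 < b.2)
    (hF : ∀ x ∈ Set.Icc a.1 b.1 ×ˢ Set.Icc a.2 b.2,
      HasDoubleDerivWithinAt F (Set.Icc a.1 b.1 ×ˢ Set.Icc a.2 b.2) x (f x))
    (x₀ : ℝ) (hx₀ : x₀ ∈ Icc a.1 b.1) :
    ∃ δ > 0, ∃ C : ℝ, ∀ u v x : ℝ, a.2 ≤ u → u ≤ v → v ≤ b.2 → x ∈ Icc a.1 b.1 →
      |x - x₀| < δ → |dDiff F (x₀, u) (x, v)| ≤ C * |x - x₀| := by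
  have hFt : ∀ x ∈ Set.Icc a.2 b.2 ×ˢ Set.Icc a.1 b.1,
      HasDoubleDerivWithinAt (fun z => F (z.2, z.1))
        (Set.Icc a.2 b.2 ×ˢ Set.Icc a.1 b.1) x ((fun z => f (z.2, z.1)) x) := by
    intro x hx
    have := transposeDD F _ _ (x.2, x.1) (f (x.2, x.1)) (hF (x.2, x.1) ⟨hx.2, hx.1⟩)
    simpa using this
  obtain ⟨δ, hδ, C, hC⟩ := strip (fun z => f (z.2, z.1)) (fun z => F (z.2, z.1))
    (a.2, a.1) (b.2, b.1) hab2 hFt x₀ hx₀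
  refine ⟨δ, hδ, C, fun u v x hu huv hv hx hxx => ?_⟩
  have := hC u v x hu huv hv hx hxx
  have heq : dDiff (fun z => F (z.2, z.1)) (u, x₀) (v, x) = dDiff F (x₀, u) (x, v) := by
    simp only [dDiff]; ring
  rwa [heq] at this

/-- Continuity of `x ↦ dDiff F a x` on the closed rectangle. -/
lemma Hcont (f F : ℝ × ℝ → ℝ) (a b : ℝ × ℝ) (hab1 : a.1 < b.1) (hab2 : a.2 < b.2)
    (hF : ∀ x ∈ Set.Icc a.1 b.1 ×ˢ Set.Icc a.2 b.2,
      HasDoubleDerivWithinAt F (Set.Icc a.1 b.1 ×ˢ Set.Icc a.2 b.2) x (f x)) :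
    ContinuousOn (fun x => dDiff F a x) (Set.Icc a.1 b.1 ×ˢ Set.Icc a.2 b.2) := by
  rw [Metric.continuousOn_iff]
  intro x hx ε hε
  obtain ⟨δ₁, hδ₁, C₁, hC₁⟩ := strip f F a b hab1 hF x.2 hx.2
  obtain ⟨δ₂, hδ₂, C₂, hC₂⟩ := strip' f F a b hab2 hF x.1 hx.1
  set C : ℝ := |C₁| + |C₂| + 1 with hCdef
  have hC : 0 < C := by positivity
  clear_value C
  refine ⟨min (min δ₁ δ₂) (ε / (2*C)), by positivity, fun x' hx' hdist => ?_⟩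
  have hd1 : dist x'.1 x.1 ≤ dist x' x := by
    rw [Prod.dist_eq]; exact le_max_left _ _
  have hd2 : dist x'.2 x.2 ≤ dist x' x := by
    rw [Prod.dist_eq]; exact le_max_right _ _
  rw [Real.dist_eq] at hd1 hd2
  have hlt1 : |x'.1 - x.1| < min (min δ₁ δ₂) (ε / (2*C)) := lt_of_le_of_lt hd1 hdist
  have hlt2 : |x'.2 - x.2| < min (min δ₁ δ₂) (ε / (2*C)) := lt_of_le_of_lt hd2 hdist
  have key : dDiff F a x' - dDiff F a x =
      dDiff F (a.1, x.2) (x'.1, x'.2) + dDiff F (x.1, a.2) (x'.1, x.2) := by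
    simp only [dDiff]; ring
  have e1 : |dDiff F (a.1, x.2) (x'.1, x'.2)| ≤ C₁ * |x'.2 - x.2| := by
    have := hC₁ a.1 x'.1 x'.2 (le_refl _) hx'.1.1 hx'.1.2 hx'.2
      (lt_of_lt_of_le hlt2 ((min_le_left _ _).trans (min_le_left _ _)))
    simpa using this
  have e2 : |dDiff F (x.1, a.2) (x'.1, x.2)| ≤ C₂ * |x'.1 - x.1| := by
    have := hC₂ a.2 x.2 x'.1 (le_refl _) hx.2.1 hx.2.2 hx'.1
      (lt_of_lt_of_le hlt1 ((min_le_left _ _).trans (min_le_right _ _)))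
    simpa using this
  have b1 : C₁ * |x'.2 - x.2| ≤ C * |x'.2 - x.2| :=
    mul_le_mul_of_nonneg_right (by rw [hCdef]; cases abs_cases C₁ with
      | inl h => cases abs_cases C₂ with
        | inl h2 => linarith [abs_nonneg C₂]
        | inr h2 => linarith [abs_nonneg C₂]
      | inr h => linarith [abs_nonneg C₁, abs_nonneg C₂]) (abs_nonneg _)
  have b2 : C₂ * |x'.1 - x.1| ≤ C * |x'.1 - x.1| :=
    mul_le_mul_of_nonneg_right (by rw [hCdef]; linarith [le_abs_self C₂, abs_nonneg C₁]) (abs_nonneg _)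
  have s1 : C * |x'.2 - x.2| < C * (ε / (2*C)) :=
    mul_lt_mul_of_pos_left (lt_of_lt_of_le hlt2 (min_le_right _ _)) hC
  have s2 : C * |x'.1 - x.1| < C * (ε / (2*C)) :=
    mul_lt_mul_of_pos_left (lt_of_lt_of_le hlt1 (min_le_right _ _)) hC
  have hCe : C * (ε / (2*C)) = ε / 2 := by field_simp
  rw [Real.dist_eq]
  have tri : |dDiff F a x' - dDiff F a x| ≤
      |dDiff F (a.1, x.2) (x'.1, x'.2)| + |dDiff F (x.1, a.2) (x'.1, x.2)| := by
    rw [key]; exact abs_add_le _ _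
  show |dDiff F a x' - dDiff F a x| < ε
  linarith

set_option maxHeartbeats 1000000 in
/-- Halving step: inside any subrectangle there is a rectangle with half the side
lengths and the same double mean slope. -/
lemma step (f F : ℝ × ℝ → ℝ) (a b : ℝ × ℝ) (hab1 : a.1 < b.1) (hab2 : a.2 < b.2)
    (hF : ∀ x ∈ Set.Icc a.1 b.1 ×ˢ Set.Icc a.2 b.2,
      HasDoubleDerivWithinAt F (Set.Icc a.1 b.1 ×ˢ Set.Icc a.2 b.2) x (f x))
    (p q : ℝ × ℝ) (hp : p ∈ Set.Icc a.1 b.1 ×ˢ Set.Icc a.2 b.2)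
    (hq : q ∈ Set.Icc a.1 b.1 ×ˢ Set.Icc a.2 b.2) (h1 : p.1 < q.1) (h2 : p.2 < q.2) :
    ∃ p' q' : ℝ × ℝ, p.1 ≤ p'.1 ∧ p.2 ≤ p'.2 ∧ q'.1 ≤ q.1 ∧ q'.2 ≤ q.2 ∧
      q'.1 - p'.1 = (q.1 - p.1)/2 ∧ q'.2 - p'.2 = (q.2 - p.2)/2 ∧
      dSlope F p' q' = dSlope F p q := by
  classical
  set S := Set.Icc a.1 b.1 ×ˢ Set.Icc a.2 b.2 with hS
  set w : ℝ := (q.1 - p.1)/2 with hw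
  set h : ℝ := (q.2 - p.2)/2 with hh
  have hwpos : 0 < w := by rw [hw]; linarith
  have hhpos : 0 < h := by rw [hh]; linarith
  have hq1 : q.1 = p.1 + w + w := by rw [hw]; ring
  have hq2 : q.2 = p.2 + h + h := by rw [hh]; ring
  set K : Set (ℝ × ℝ) := Set.Icc (0:ℝ) 1 ×ˢ Set.Icc (0:ℝ) 1 with hK
  set Ψ : ℝ × ℝ → ℝ := fun z =>
    (dDiff F a ((p.1+w) + z.1*w, (p.2+h) + z.2*h)
      - dDiff F a ((p.1+w) + z.1*w, p.2 + z.2*h)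
      - dDiff F a (p.1 + z.1*w, (p.2+h) + z.2*h)
      + dDiff F a (p.1 + z.1*w, p.2 + z.2*h)) / (w*h) with hΨ
  have hwh : w * h ≠ 0 := ne_of_gt (mul_pos hwpos hhpos)
  -- membership facts
  have hmem : ∀ (A B : ℝ), p.1 ≤ A → A + w ≤ q.1 → p.2 ≤ B → B + h ≤ q.2 →
      ∀ z ∈ K, (A + z.1*w, B + z.2*h) ∈ S := by
    intro A B hA1 hA2 hB1 hB2 z hz
    have hz1 : 0 ≤ z.1 ∧ z.1 ≤ 1 := ⟨hz.1.1, hz.1.2⟩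
    have hz2 : 0 ≤ z.2 ∧ z.2 ≤ 1 := ⟨hz.2.1, hz.2.2⟩
    have e1 : 0 ≤ z.1*w := mul_nonneg hz1.1 hwpos.le
    have e2 : z.1*w ≤ w := by nlinarith
    have e3 : 0 ≤ z.2*h := mul_nonneg hz2.1 hhpos.le
    have e4 : z.2*h ≤ h := by nlinarith
    refine ⟨⟨?_, ?_⟩, ?_, ?_⟩
    · show a.1 ≤ A + z.1*w; linarith [hp.1.1]
    · show A + z.1*w ≤ b.1; linarith [hq.1.2]
    · show a.2 ≤ B + z.2*h; linarith [hp.2.1]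
    · show B + z.2*h ≤ b.2; linarith [hq.2.2]
  have hHc := Hcont f F a b hab1 hab2 hF
  have hterm : ∀ (A B : ℝ), p.1 ≤ A → A + w ≤ q.1 → p.2 ≤ B → B + h ≤ q.2 →
      ContinuousOn (fun z : ℝ × ℝ => dDiff F a (A + z.1*w, B + z.2*h)) K := by
    intro A B hA1 hA2 hB1 hB2
    exact hHc.comp (by fun_prop) (hmem A B hA1 hA2 hB1 hB2)
  have hc1 : ContinuousOn Ψ K := by
    rw [hΨ]
    apply ContinuousOn.div_const
    apply ContinuousOn.add
    apply ContinuousOn.sub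
    apply ContinuousOn.sub
    · exact hterm (p.1+w) (p.2+h) (by linarith) (by linarith [hq1]) (by linarith)
        (by linarith [hq2])
    · exact hterm (p.1+w) p.2 (by linarith) (by linarith [hq1]) (le_refl _) (by linarith [hq2])
    · exact hterm p.1 (p.2+h) (le_refl _) (by linarith [hq1]) (by linarith) (by linarith [hq2])
    · exact hterm p.1 p.2 (le_refl _) (by linarith [hq1]) (le_refl _) (by linarith [hq2])
  -- corner values sum to 4 * slope
  have hsum : Ψ (0,0) + Ψ (1,0) + Ψ (0,1) + Ψ (1,1) = 4 * dSlope F p q := by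
    rw [hΨ]
    norm_num
    rw [dSlope, hq1, hq2]
    have harea : ((p.1 + w + w) - p.1) * ((p.2 + h + h) - p.2) = 4 * (w * h) := by ring
    rw [harea]
    field_simp
    simp only [dDiff]
    rw [hq1, hq2]
    ring
  have hK00 : ((0:ℝ),(0:ℝ)) ∈ K := ⟨⟨le_refl _, zero_le_one⟩, ⟨le_refl _, zero_le_one⟩⟩
  have hK10 : ((1:ℝ),(0:ℝ)) ∈ K := ⟨⟨zero_le_one, le_refl _⟩, ⟨le_refl _, zero_le_one⟩⟩
  have hK01 : ((0:ℝ),(1:ℝ)) ∈ K := ⟨⟨le_refl _, zero_le_one⟩, ⟨zero_le_one, le_refl _⟩⟩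
  have hK11 : ((1:ℝ),(1:ℝ)) ∈ K := ⟨⟨zero_le_one, le_refl _⟩, ⟨zero_le_one, le_refl _⟩⟩
  set m : ℝ := dSlope F p q with hm
  have hlo : ∃ z ∈ K, Ψ z ≤ m := by
    rcases le_total (Ψ (0,0)) m with hc | hc
    · exact ⟨(0,0), hK00, hc⟩
    rcases le_total (Ψ (1,0)) m with hc2 | hc2
    · exact ⟨(1,0), hK10, hc2⟩
    rcases le_total (Ψ (0,1)) m with hc3 | hc3
    · exact ⟨(0,1), hK01, hc3⟩
    exact ⟨(1,1), hK11, by linarith⟩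
  have hhi : ∃ z ∈ K, m ≤ Ψ z := by
    rcases le_total m (Ψ (0,0)) with hc | hc
    · exact ⟨(0,0), hK00, hc⟩
    rcases le_total m (Ψ (1,0)) with hc2 | hc2
    · exact ⟨(1,0), hK10, hc2⟩
    rcases le_total m (Ψ (0,1)) with hc3 | hc3
    · exact ⟨(0,1), hK01, hc3⟩
    exact ⟨(1,1), hK11, by linarith⟩
  obtain ⟨zlo, hzlo, hlo'⟩ := hlo
  obtain ⟨zhi, hzhi, hhi'⟩ := hhi
  have hconn : IsPreconnected K := by
    rw [hK]
    exact ((convex_Icc (0:ℝ) 1).prod (convex_Icc (0:ℝ) 1)).isPreconnected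
  have hmem' : m ∈ Set.Icc (Ψ zlo) (Ψ zhi) := ⟨hlo', hhi'⟩
  obtain ⟨z, hzK, hz⟩ := hconn.intermediate_value hzlo hzhi hc1 hmem'
  refine ⟨(p.1 + z.1*w, p.2 + z.2*h), ((p.1+w) + z.1*w, (p.2+h) + z.2*h),
    ?_, ?_, ?_, ?_,
    by show ((p.1+w) + z.1*w) - (p.1 + z.1*w) = w; ring,
    by show ((p.2+h) + z.2*h) - (p.2 + z.2*h) = h; ring, ?_⟩
  · show p.1 ≤ p.1 + z.1*w; nlinarith [hzK.1.1, hwpos]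
  · show p.2 ≤ p.2 + z.2*h; nlinarith [hzK.2.1, hhpos]
  · show (p.1+w) + z.1*w ≤ q.1
    rw [hq1]; nlinarith [hzK.1.2, hwpos]
  · show (p.2+h) + z.2*h ≤ q.2
    rw [hq2]; nlinarith [hzK.2.2, hhpos]
  · rw [← hz]
    simp only [hΨ]
    rw [dSlope]
    show dDiff F (p.1 + z.1*w, p.2 + z.2*h) ((p.1+w) + z.1*w, (p.2+h) + z.2*h) /
        ((((p.1+w) + z.1*w) - (p.1 + z.1*w)) * (((p.2+h) + z.2*h) - (p.2 + z.2*h))) = _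
    have harea : (((p.1+w) + z.1*w) - (p.1 + z.1*w)) * (((p.2+h) + z.2*h) - (p.2 + z.2*h))
        = w * h := by ring
    rw [harea]
    congr 1
    simp only [dDiff]
    ring

set_option maxHeartbeats 1000000 in
/-- Inside any subrectangle there is a point where `f` equals the mean slope. -/
lemma exists_point (f F : ℝ × ℝ → ℝ) (a b : ℝ × ℝ) (hab1 : a.1 < b.1) (hab2 : a.2 < b.2)
    (hF : ∀ x ∈ Set.Icc a.1 b.1 ×ˢ Set.Icc a.2 b.2,
      HasDoubleDerivWithinAt F (Set.Icc a.1 b.1 ×ˢ Set.Icc a.2 b.2) x (f x))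
    (p q : ℝ × ℝ) (hp : p ∈ Set.Icc a.1 b.1 ×ˢ Set.Icc a.2 b.2)
    (hq : q ∈ Set.Icc a.1 b.1 ×ˢ Set.Icc a.2 b.2) (h1 : p.1 < q.1) (h2 : p.2 < q.2) :
    ∃ c : ℝ × ℝ, p.1 ≤ c.1 ∧ c.1 ≤ q.1 ∧ p.2 ≤ c.2 ∧ c.2 ≤ q.2 ∧ f c = dSlope F p q := by
  classical
  set S := Set.Icc a.1 b.1 ×ˢ Set.Icc a.2 b.2 with hS
  set μ := dSlope F p q with hμ
  have hstep : ∀ r : (ℝ×ℝ)×(ℝ×ℝ),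
      (r.1 ∈ S ∧ r.2 ∈ S ∧ r.1.1 < r.2.1 ∧ r.1.2 < r.2.2 ∧ dSlope F r.1 r.2 = μ) →
      ∃ r' : (ℝ×ℝ)×(ℝ×ℝ),
        (r'.1 ∈ S ∧ r'.2 ∈ S ∧ r'.1.1 < r'.2.1 ∧ r'.1.2 < r'.2.2 ∧ dSlope F r'.1 r'.2 = μ) ∧
        r.1.1 ≤ r'.1.1 ∧ r.1.2 ≤ r'.1.2 ∧ r'.2.1 ≤ r.2.1 ∧ r'.2.2 ≤ r.2.2 ∧
        r'.2.1 - r'.1.1 = (r.2.1 - r.1.1)/2 ∧ r'.2.2 - r'.1.2 = (r.2.2 - r.1.2)/2 := by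
    rintro r ⟨m1, m2, l1, l2, sl⟩
    obtain ⟨p', q', n1, n2, n3, n4, s1, s2, s3⟩ :=
      step f F a b hab1 hab2 hF r.1 r.2 m1 m2 l1 l2
    have l1' : p'.1 < q'.1 := by have := s1; nlinarith
    have l2' : p'.2 < q'.2 := by have := s2; nlinarith
    have mp' : p' ∈ S := ⟨⟨le_trans m1.1.1 n1, le_trans (le_trans l1'.le n3) m2.1.2⟩,
      ⟨le_trans m1.2.1 n2, le_trans (le_trans l2'.le n4) m2.2.2⟩⟩
    have mq' : q' ∈ S := ⟨⟨le_trans m1.1.1 (le_trans n1 l1'.le), le_trans n3 m2.1.2⟩,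
      ⟨le_trans m1.2.1 (le_trans n2 l2'.le), le_trans n4 m2.2.2⟩⟩
    exact ⟨(p', q'), ⟨mp', mq', l1', l2', by rw [s3, sl]⟩, n1, n2, n3, n4, s1, s2⟩
  set nxt : (ℝ×ℝ)×(ℝ×ℝ) → (ℝ×ℝ)×(ℝ×ℝ) := fun r =>
    if hr : (r.1 ∈ S ∧ r.2 ∈ S ∧ r.1.1 < r.2.1 ∧ r.1.2 < r.2.2 ∧ dSlope F r.1 r.2 = μ) then
      Classical.choose (hstep r hr) else r with hnxt
  set sq : ℕ → (ℝ×ℝ)×(ℝ×ℝ) := fun n => nxt^[n] (p, q) with hsq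
  have h00 : sq 0 = (p, q) := rfl
  have hsucc : ∀ n, sq (n+1) = nxt (sq n) := fun n => Function.iterate_succ_apply' _ _ _
  have inv : ∀ n, (sq n).1 ∈ S ∧ (sq n).2 ∈ S ∧ (sq n).1.1 < (sq n).2.1 ∧
      (sq n).1.2 < (sq n).2.2 ∧ dSlope F (sq n).1 (sq n).2 = μ := by
    intro n
    induction n with
    | zero => rw [h00]; exact ⟨hp, hq, h1, h2, hμ.symm⟩
    | succ n ih =>
      have hu : nxt (sq n) = Classical.choose (hstep (sq n) ih) := by
        rw [hnxt]; exact dif_pos ih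
      rw [hsucc n, hu]
      exact (Classical.choose_spec (hstep (sq n) ih)).1
  have nest : ∀ n, (sq n).1.1 ≤ (sq (n+1)).1.1 ∧ (sq n).1.2 ≤ (sq (n+1)).1.2 ∧
      (sq (n+1)).2.1 ≤ (sq n).2.1 ∧ (sq (n+1)).2.2 ≤ (sq n).2.2 ∧
      (sq (n+1)).2.1 - (sq (n+1)).1.1 = ((sq n).2.1 - (sq n).1.1)/2 ∧
      (sq (n+1)).2.2 - (sq (n+1)).1.2 = ((sq n).2.2 - (sq n).1.2)/2 := by
    intro n
    have hu : nxt (sq n) = Classical.choose (hstep (sq n) (inv n)) := by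
      rw [hnxt]; exact dif_pos (inv n)
    rw [hsucc n, hu]
    exact (Classical.choose_spec (hstep (sq n) (inv n))).2
  have size : ∀ n, (sq n).2.1 - (sq n).1.1 = (q.1 - p.1)/2^n ∧
      (sq n).2.2 - (sq n).1.2 = (q.2 - p.2)/2^n := by
    intro n
    induction n with
    | zero => rw [h00]; norm_num
    | succ n ih =>
      refine ⟨?_, ?_⟩
      · rw [(nest n).2.2.2.2.1, ih.1]; rw [pow_succ]; ring
      · rw [(nest n).2.2.2.2.2, ih.2]; rw [pow_succ]; ring
  have monoA1 : Monotone (fun n => (sq n).1.1) := monotone_nat_of_le_succ fun n => (nest n).1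
  have monoA2 : Monotone (fun n => (sq n).1.2) := monotone_nat_of_le_succ fun n => (nest n).2.1
  have antiB1 : Antitone (fun n => (sq n).2.1) := antitone_nat_of_succ_le fun n => (nest n).2.2.1
  have antiB2 : Antitone (fun n => (sq n).2.2) := antitone_nat_of_succ_le fun n => (nest n).2.2.2.1
  have hgen1 : ∀ n m, (sq n).1.1 ≤ (sq m).2.1 := by
    intro n m
    rcases le_total n m with hnm | hnm
    · exact le_trans (monoA1 hnm) (inv m).2.2.1.le
    · exact le_trans (inv n).2.2.1.le (antiB1 hnm)
  have hgen2 : ∀ n m, (sq n).1.2 ≤ (sq m).2.2 := by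
    intro n m
    rcases le_total n m with hnm | hnm
    · exact le_trans (monoA2 hnm) (inv m).2.2.2.1.le
    · exact le_trans (inv n).2.2.2.1.le (antiB2 hnm)
  have bdd1 : BddAbove (Set.range fun n => (sq n).1.1) := by
    refine ⟨(sq 0).2.1, ?_⟩
    rintro _ ⟨n, rfl⟩
    exact hgen1 n 0
  have bdd2 : BddAbove (Set.range fun n => (sq n).1.2) := by
    refine ⟨(sq 0).2.2, ?_⟩
    rintro _ ⟨n, rfl⟩
    exact hgen2 n 0
  set c1 : ℝ := ⨆ n, (sq n).1.1 with hc1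
  set c2 : ℝ := ⨆ n, (sq n).1.2 with hc2
  have hc1up : ∀ n, (sq n).1.1 ≤ c1 := fun n => le_ciSup bdd1 n
  have hc2up : ∀ n, (sq n).1.2 ≤ c2 := fun n => le_ciSup bdd2 n
  have hc1dn : ∀ m, c1 ≤ (sq m).2.1 := fun m => ciSup_le fun n => hgen1 n m
  have hc2dn : ∀ m, c2 ≤ (sq m).2.2 := fun m => ciSup_le fun n => hgen2 n m
  set c : ℝ × ℝ := (c1, c2) with hc
  have hcS : c ∈ S := by
    refine ⟨⟨?_, ?_⟩, ?_, ?_⟩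
    · show a.1 ≤ c1; exact le_trans (inv 0).1.1.1 (hc1up 0)
    · show c1 ≤ b.1; exact le_trans (hc1dn 0) (inv 0).2.1.1.2
    · show a.2 ≤ c2; exact le_trans (inv 0).1.2.1 (hc2up 0)
    · show c2 ≤ b.2; exact le_trans (hc2dn 0) (inv 0).2.1.2.2
  have final : ∀ ε : ℝ, 0 < ε → |μ - f c| ≤ 4 * ε := by
    intro ε hε
    obtain ⟨δ, hδ, hest⟩ := rect_est f F (Set.Icc a.1 b.1) (Set.Icc a.2 b.2) c
      (hF c hcS) hε
    set M : ℝ := max (q.1 - p.1) (q.2 - p.2) with hM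
    have hMpos : 0 < M := lt_of_lt_of_le (by linarith) (le_max_left _ _)
    obtain ⟨n, hn⟩ := exists_pow_lt_of_lt_one (div_pos hδ hMpos) (by norm_num : (1/2:ℝ) < 1)
    have hpow : (0:ℝ) < (1/2:ℝ)^n := by positivity
    have hMn : M * (1/2)^n < δ := by
      have := mul_lt_mul_of_pos_left hn hMpos
      rwa [mul_div_cancel₀ _ (ne_of_gt hMpos)] at this
    have conv : ∀ X : ℝ, X ≤ M → X / 2^n < δ := by
      intro X hX
      have e : X / 2^n = X * (1/2)^n := by
        rw [one_div, inv_pow, ← div_eq_mul_inv]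
      rw [e]
      calc X * (1/2)^n ≤ M * (1/2)^n := mul_le_mul_of_nonneg_right hX hpow.le
        _ < δ := hMn
    have s1 : (sq n).2.1 - (sq n).1.1 < δ := by
      rw [(size n).1]; exact conv _ (le_max_left _ _)
    have s2 : (sq n).2.2 - (sq n).1.2 < δ := by
      rw [(size n).2]; exact conv _ (le_max_right _ _)
    have hpos1 : 0 < (sq n).2.1 - (sq n).1.1 := by linarith [(inv n).2.2.1]
    have hpos2 : 0 < (sq n).2.2 - (sq n).1.2 := by linarith [(inv n).2.2.2.1]
    have harea : 0 < ((sq n).2.1 - (sq n).1.1) * ((sq n).2.2 - (sq n).1.2) :=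
      mul_pos hpos1 hpos2
    have hest' := hest (sq n).1 (sq n).2 (inv n).1 (inv n).2.1
      (hc1up n) (hc1dn n) (hc2up n) (hc2dn n) s1 s2
    have hdd : dDiff F (sq n).1 (sq n).2 =
        μ * (((sq n).2.1 - (sq n).1.1) * ((sq n).2.2 - (sq n).1.2)) := by
      have hsl := (inv n).2.2.2.2
      rw [dSlope] at hsl
      rw [← hsl, div_mul_cancel₀ _ (ne_of_gt harea)]
    rw [hdd, ← sub_mul, abs_mul, abs_of_pos harea] at hest'
    exact le_of_mul_le_mul_right hest' harea
  have hfc : f c = μ := by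
    by_contra hne
    have hpos : 0 < |μ - f c| := abs_pos.2 (sub_ne_zero.2 fun hh => hne hh.symm)
    have := final (|μ - f c|/8) (by positivity)
    linarith
  refine ⟨c, ?_, ?_, ?_, ?_, hfc⟩
  · have := hc1up 0; rw [h00] at this; exact this
  · have := hc1dn 0; rw [h00] at this; exact this
  · have := hc2up 0; rw [h00] at this; exact this
  · have := hc2dn 0; rw [h00] at this; exact this

lemma affine_lb (lo A A' t : ℝ) (ht0 : 0 ≤ t) (ht1 : t ≤ 1) (hA : lo < A) (hA' : lo < A') :
    lo < A + t*(A' - A) := by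
  rcases le_total A A' with hc | hc
  · nlinarith
  · nlinarith

lemma affine_ub (hi A A' t : ℝ) (ht0 : 0 ≤ t) (ht1 : t ≤ 1) (hA : A < hi) (hA' : A' < hi) :
    A + t*(A' - A) < hi := by
  rcases le_total A A' with hc | hc
  · nlinarith
  · nlinarith

lemma affine_lb' (lo A A' t : ℝ) (ht0 : 0 ≤ t) (ht1 : t ≤ 1) (hA : lo ≤ A) (hA' : lo ≤ A') :
    lo ≤ A + t*(A' - A) := by
  rcases le_total A A' with hc | hc
  · nlinarith
  · nlinarith

lemma affine_ub' (hi A A' t : ℝ) (ht0 : 0 ≤ t) (ht1 : t ≤ 1) (hA : A ≤ hi) (hA' : A' ≤ hi) :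
    A + t*(A' - A) ≤ hi := by
  rcases le_total A A' with hc | hc
  · nlinarith
  · nlinarith

set_option maxHeartbeats 1000000 in
/-- The slope of every subrectangle is at least the overall slope, if `f` exceeds
the overall slope on the open rectangle. -/
lemma slope_ge (f F : ℝ × ℝ → ℝ) (a b : ℝ × ℝ) (hab1 : a.1 < b.1) (hab2 : a.2 < b.2)
    (hF : ∀ x ∈ Set.Icc a.1 b.1 ×ˢ Set.Icc a.2 b.2,
      HasDoubleDerivWithinAt F (Set.Icc a.1 b.1 ×ˢ Set.Icc a.2 b.2) x (f x))
    (hgt : ∀ x : ℝ × ℝ, a.1 < x.1 → x.1 < b.1 → a.2 < x.2 → x.2 < b.2 →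
      dSlope F a b < f x)
    (p q : ℝ × ℝ) (hp : p ∈ Set.Icc a.1 b.1 ×ˢ Set.Icc a.2 b.2)
    (hq : q ∈ Set.Icc a.1 b.1 ×ˢ Set.Icc a.2 b.2) (h1 : p.1 < q.1) (h2 : p.2 < q.2) :
    dSlope F a b ≤ dSlope F p q := by
  classical
  set S := Set.Icc a.1 b.1 ×ˢ Set.Icc a.2 b.2 with hS
  set m := dSlope F a b with hm
  -- interior rectangles have slope > m
  have hint : ∀ p' q' : ℝ × ℝ, p' ∈ S → q' ∈ S → a.1 < p'.1 → a.2 < p'.2 →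
      q'.1 < b.1 → q'.2 < b.2 → p'.1 < q'.1 → p'.2 < q'.2 → m ≤ dSlope F p' q' := by
    intro p' q' hp' hq' i1 i2 i3 i4 i5 i6
    obtain ⟨c, e1, e2, e3, e4, e5⟩ := exists_point f F a b hab1 hab2 hF p' q' hp' hq' i5 i6
    have := hgt c (lt_of_lt_of_le i1 e1) (lt_of_le_of_lt e2 i3)
      (lt_of_lt_of_le i2 e3) (lt_of_le_of_lt e4 i4)
    rw [e5] at this
    exact this.le
  -- shrink towards the center
  set P1 : ℝ → ℝ := fun t => p.1 + t*((p.1 + (q.1-p.1)/4) - p.1) with hP1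
  set P2 : ℝ → ℝ := fun t => p.2 + t*((p.2 + (q.2-p.2)/4) - p.2) with hP2
  set Q1 : ℝ → ℝ := fun t => q.1 + t*((q.1 - (q.1-p.1)/4) - q.1) with hQ1
  set Q2 : ℝ → ℝ := fun t => q.2 + t*((q.2 - (q.2-p.2)/4) - q.2) with hQ2
  have hmemP1 : ∀ t ∈ Set.Icc (0:ℝ) 1, P1 t ∈ Set.Icc a.1 b.1 := by
    intro t ht
    exact ⟨affine_lb' a.1 _ _ t ht.1 ht.2 hp.1.1 (by linarith [hp.1.1]),
      affine_ub' b.1 _ _ t ht.1 ht.2 hp.1.2 (by linarith [hq.1.2, hp.1.2])⟩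
  have hmemP2 : ∀ t ∈ Set.Icc (0:ℝ) 1, P2 t ∈ Set.Icc a.2 b.2 := by
    intro t ht
    exact ⟨affine_lb' a.2 _ _ t ht.1 ht.2 hp.2.1 (by linarith [hp.2.1]),
      affine_ub' b.2 _ _ t ht.1 ht.2 hp.2.2 (by linarith [hq.2.2, hp.2.2])⟩
  have hmemQ1 : ∀ t ∈ Set.Icc (0:ℝ) 1, Q1 t ∈ Set.Icc a.1 b.1 := by
    intro t ht
    exact ⟨affine_lb' a.1 _ _ t ht.1 ht.2 hq.1.1 (by linarith [hp.1.1, hq.1.1]),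
      affine_ub' b.1 _ _ t ht.1 ht.2 hq.1.2 (by linarith [hq.1.2])⟩
  have hmemQ2 : ∀ t ∈ Set.Icc (0:ℝ) 1, Q2 t ∈ Set.Icc a.2 b.2 := by
    intro t ht
    exact ⟨affine_lb' a.2 _ _ t ht.1 ht.2 hq.2.1 (by linarith [hp.2.1, hq.2.1]),
      affine_ub' b.2 _ _ t ht.1 ht.2 hq.2.2 (by linarith [hq.2.2])⟩
  have hgap1 : ∀ t ∈ Set.Icc (0:ℝ) 1, 0 < Q1 t - P1 t := by
    intro t ht
    have e : (1 - t/2)*(q.1 - p.1) = Q1 t - P1 t := by rw [hQ1, hP1]; ring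
    rw [← e]
    have h0 : 0 < 1 - t/2 := by linarith [ht.2]
    exact mul_pos h0 (by linarith)
  have hgap2 : ∀ t ∈ Set.Icc (0:ℝ) 1, 0 < Q2 t - P2 t := by
    intro t ht
    have e : (1 - t/2)*(q.2 - p.2) = Q2 t - P2 t := by rw [hQ2, hP2]; ring
    rw [← e]
    have h0 : 0 < 1 - t/2 := by linarith [ht.2]
    exact mul_pos h0 (by linarith)
  set φ : ℝ → ℝ := fun t =>
    (dDiff F a (Q1 t, Q2 t) - dDiff F a (Q1 t, P2 t) - dDiff F a (P1 t, Q2 t)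
      + dDiff F a (P1 t, P2 t)) / ((Q1 t - P1 t) * (Q2 t - P2 t)) with hφ
  have hφslope : ∀ t ∈ Set.Icc (0:ℝ) 1, φ t = dSlope F (P1 t, P2 t) (Q1 t, Q2 t) := by
    intro t ht
    rw [hφ, dSlope]
    show _ = dDiff F (P1 t, P2 t) (Q1 t, Q2 t) / ((Q1 t - P1 t) * (Q2 t - P2 t))
    congr 1
    simp only [dDiff]
    ring
  have hHc := Hcont f F a b hab1 hab2 hF
  have hterm : ∀ (g1 g2 : ℝ → ℝ), Continuous g1 → Continuous g2 →
      (∀ t ∈ Set.Icc (0:ℝ) 1, g1 t ∈ Set.Icc a.1 b.1) →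
      (∀ t ∈ Set.Icc (0:ℝ) 1, g2 t ∈ Set.Icc a.2 b.2) →
      ContinuousOn (fun t : ℝ => dDiff F a (g1 t, g2 t)) (Set.Icc 0 1) := by
    intro g1 g2 hg1 hg2 hm1 hm2
    exact hHc.comp (by fun_prop) (fun t ht => ⟨hm1 t ht, hm2 t ht⟩)
  have hcP1 : Continuous P1 := by rw [hP1]; fun_prop
  have hcP2 : Continuous P2 := by rw [hP2]; fun_prop
  have hcQ1 : Continuous Q1 := by rw [hQ1]; fun_prop
  have hcQ2 : Continuous Q2 := by rw [hQ2]; fun_prop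
  have hφcont : ContinuousOn φ (Set.Icc 0 1) := by
    rw [hφ]
    apply ContinuousOn.div
    · apply ContinuousOn.add
      apply ContinuousOn.sub
      apply ContinuousOn.sub
      · exact hterm Q1 Q2 hcQ1 hcQ2 hmemQ1 hmemQ2
      · exact hterm Q1 P2 hcQ1 hcP2 hmemQ1 hmemP2
      · exact hterm P1 Q2 hcP1 hcQ2 hmemP1 hmemQ2
      · exact hterm P1 P2 hcP1 hcP2 hmemP1 hmemP2
    · exact (((hcQ1.sub hcP1).mul (hcQ2.sub hcP2)).continuousOn)
    · intro t ht
      exact ne_of_gt (mul_pos (hgap1 t ht) (hgap2 t ht))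
  -- φ(t) ≥ m for t ∈ (0,1]
  have hφge : ∀ t, 0 < t → t ≤ 1 → m ≤ φ t := by
    intro t ht0 ht1
    have htI : t ∈ Set.Icc (0:ℝ) 1 := ⟨ht0.le, ht1⟩
    rw [hφslope t htI]
    apply hint
    · exact ⟨hmemP1 t htI, hmemP2 t htI⟩
    · exact ⟨hmemQ1 t htI, hmemQ2 t htI⟩
    · show a.1 < P1 t
      have : 0 < t*((q.1-p.1)/4) := mul_pos ht0 (by linarith)
      rw [hP1]; simp only; nlinarith [hp.1.1]
    · show a.2 < P2 t
      have : 0 < t*((q.2-p.2)/4) := mul_pos ht0 (by linarith)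
      rw [hP2]; simp only; nlinarith [hp.2.1]
    · show Q1 t < b.1
      have : 0 < t*((q.1-p.1)/4) := mul_pos ht0 (by linarith)
      rw [hQ1]; simp only; nlinarith [hq.1.2]
    · show Q2 t < b.2
      have : 0 < t*((q.2-p.2)/4) := mul_pos ht0 (by linarith)
      rw [hQ2]; simp only; nlinarith [hq.2.2]
    · show P1 t < Q1 t
      linarith [hgap1 t htI]
    · show P2 t < Q2 t
      linarith [hgap2 t htI]
  -- pass to the limit t → 0⁺
  have hseq : Filter.Tendsto (fun k : ℕ => (1:ℝ)/(k+1)) Filter.atTop (nhds 0) :=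
    tendsto_one_div_add_atTop_nhds_zero_nat
  have hseqI : ∀ k : ℕ, (1:ℝ)/(k+1) ∈ Set.Icc (0:ℝ) 1 := by
    intro k
    constructor
    · positivity
    · rw [div_le_one (by positivity)]
      have : (0:ℝ) ≤ (k:ℝ) := Nat.cast_nonneg k
      linarith
  have hseq' : Filter.Tendsto (fun k : ℕ => (1:ℝ)/(k+1)) Filter.atTop
      (nhdsWithin 0 (Set.Icc (0:ℝ) 1)) :=
    tendsto_nhdsWithin_of_tendsto_nhds_of_eventually_within _ hseq
      (Filter.Eventually.of_forall hseqI)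
  have h0I : (0:ℝ) ∈ Set.Icc (0:ℝ) 1 := ⟨le_refl _, zero_le_one⟩
  have hcomp : Filter.Tendsto (fun k : ℕ => φ ((1:ℝ)/(k+1))) Filter.atTop (nhds (φ 0)) :=
    (hφcont 0 h0I).tendsto.comp hseq'
  have hφ0 : m ≤ φ 0 := by
    apply ge_of_tendsto hcomp
    apply Filter.Eventually.of_forall
    intro k
    exact hφge _ (by positivity) (hseqI k).2
  have hφ0' : φ 0 = dSlope F p q := by
    have := hφslope 0 h0I
    rw [this]
    have e1 : P1 0 = p.1 := by rw [hP1]; ring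
    have e2 : P2 0 = p.2 := by rw [hP2]; ring
    have e3 : Q1 0 = q.1 := by rw [hQ1]; ring
    have e4 : Q2 0 = q.2 := by rw [hQ2]; ring
    rw [e1, e2, e3, e4]
  rw [← hφ0']
  exact hφ0

set_option maxHeartbeats 1000000 in
lemma no_above (f F : ℝ × ℝ → ℝ) (a b : ℝ × ℝ) (hab1 : a.1 < b.1) (hab2 : a.2 < b.2)
    (hF : ∀ x ∈ Set.Icc a.1 b.1 ×ˢ Set.Icc a.2 b.2,
      HasDoubleDerivWithinAt F (Set.Icc a.1 b.1 ×ˢ Set.Icc a.2 b.2) x (f x))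
    (hgt : ∀ x : ℝ × ℝ, a.1 < x.1 → x.1 < b.1 → a.2 < x.2 → x.2 < b.2 →
      dSlope F a b < f x) : False := by
  classical
  set S := Set.Icc a.1 b.1 ×ˢ Set.Icc a.2 b.2 with hS
  set m := dSlope F a b with hm
  have haS : a ∈ S := ⟨⟨le_refl _, hab1.le⟩, ⟨le_refl _, hab2.le⟩⟩
  have hbS : b ∈ S := ⟨⟨hab1.le, le_refl _⟩, ⟨hab2.le, le_refl _⟩⟩
  have harea : 0 < (b.1-a.1)*(b.2-a.2) := mul_pos (by linarith) (by linarith)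
  have hab' : dDiff F a b = m * ((b.1-a.1)*(b.2-a.2)) := by
    rw [hm, dSlope, div_mul_cancel₀ _ (ne_of_gt harea)]
  have hsg := slope_ge f F a b hab1 hab2 hF hgt
  have hineq : ∀ p q : ℝ × ℝ, p ∈ S → q ∈ S → p.1 < q.1 → p.2 < q.2 →
      m * ((q.1-p.1)*(q.2-p.2)) ≤ dDiff F p q := by
    intro p q hp hq l1 l2
    have h := hsg p q hp hq l1 l2
    have ha : 0 < (q.1-p.1)*(q.2-p.2) := mul_pos (by linarith) (by linarith)
    have h2 : dSlope F p q * ((q.1-p.1)*(q.2-p.2)) = dDiff F p q := by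
      rw [dSlope, div_mul_cancel₀ _ (ne_of_gt ha)]
    have h3 : m ≤ dSlope F p q := by rw [hm]; exact h
    calc m * ((q.1-p.1)*(q.2-p.2)) ≤ dSlope F p q * ((q.1-p.1)*(q.2-p.2)) :=
          mul_le_mul_of_nonneg_right h3 ha.le
      _ = dDiff F p q := h2
  have hKeq : ∀ x : ℝ × ℝ, a.1 < x.1 → x.1 < b.1 → a.2 < x.2 → x.2 < b.2 →
      dDiff F a x = m * ((x.1-a.1)*(x.2-a.2)) := by
    intro x i1 i2 i3 i4
    have hxS : x ∈ S := ⟨⟨i1.le, i2.le⟩, ⟨i3.le, i4.le⟩⟩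
    have j1 : m * ((x.1-a.1)*(x.2-a.2)) ≤ dDiff F a x := hineq a x haS hxS i1 i3
    have j2 : m * ((x.1-a.1)*(b.2-x.2)) ≤ dDiff F (a.1, x.2) (x.1, b.2) :=
      hineq (a.1, x.2) (x.1, b.2) ⟨⟨le_refl _, hab1.le⟩, ⟨i3.le, i4.le⟩⟩
        ⟨⟨i1.le, i2.le⟩, ⟨hab2.le, le_refl _⟩⟩ i1 i4
    have j3 : m * ((b.1-x.1)*(x.2-a.2)) ≤ dDiff F (x.1, a.2) (b.1, x.2) :=
      hineq (x.1, a.2) (b.1, x.2) ⟨⟨i1.le, i2.le⟩, ⟨le_refl _, hab2.le⟩⟩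
        ⟨⟨hab1.le, le_refl _⟩, ⟨i3.le, i4.le⟩⟩ i2 i3
    have j4 : m * ((b.1-x.1)*(b.2-x.2)) ≤ dDiff F x b := hineq x b hxS hbS i2 i4
    have e2 : dDiff F (a.1, x.2) (x.1, b.2) = dDiff F a (x.1, b.2) - dDiff F a x := by
      simp only [dDiff]; ring
    have e3 : dDiff F (x.1, a.2) (b.1, x.2) = dDiff F a (b.1, x.2) - dDiff F a x := by
      simp only [dDiff]; ring
    have e4 : dDiff F x b = dDiff F a b - dDiff F a (b.1, x.2) - dDiff F a (x.1, b.2)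
        + dDiff F a x := by
      simp only [dDiff]; ring
    rw [e2] at j2
    rw [e3] at j3
    rw [e4, hab'] at j4
    have ering : m * ((b.1-a.1)*(b.2-a.2)) = m*((x.1-a.1)*(x.2-a.2))
        + m*((x.1-a.1)*(b.2-x.2)) + m*((b.1-x.1)*(x.2-a.2))
        + m*((b.1-x.1)*(b.2-x.2)) := by ring
    linarith [j1, j2, j3, j4, ering]
  set p' : ℝ × ℝ := ((3*a.1+b.1)/4, (3*a.2+b.2)/4) with hp'
  set q' : ℝ × ℝ := ((a.1+3*b.1)/4, (a.2+3*b.2)/4) with hq'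
  have hp'1 : p'.1 = (3*a.1+b.1)/4 := by rw [hp']
  have hp'2 : p'.2 = (3*a.2+b.2)/4 := by rw [hp']
  have hq'1 : q'.1 = (a.1+3*b.1)/4 := by rw [hq']
  have hq'2 : q'.2 = (a.2+3*b.2)/4 := by rw [hq']
  have k1 : a.1 < p'.1 := by rw [hp'1]; linarith
  have k2 : p'.1 < q'.1 := by rw [hp'1, hq'1]; linarith
  have k3 : q'.1 < b.1 := by rw [hq'1]; linarith
  have k4 : a.2 < p'.2 := by rw [hp'2]; linarith
  have k5 : p'.2 < q'.2 := by rw [hp'2, hq'2]; linarith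
  have k6 : q'.2 < b.2 := by rw [hq'2]; linarith
  have hp'S : p' ∈ S := ⟨⟨k1.le, by linarith⟩, ⟨k4.le, by linarith⟩⟩
  have hq'S : q' ∈ S := ⟨⟨by linarith, k3.le⟩, ⟨by linarith, k6.le⟩⟩
  have c1 : dDiff F a p' = m * ((p'.1-a.1)*(p'.2-a.2)) := hKeq p' k1 (by linarith) k4 (by linarith)
  have c2 : dDiff F a q' = m * ((q'.1-a.1)*(q'.2-a.2)) := hKeq q' (by linarith) k3 (by linarith) k6
  have c3 : dDiff F a (q'.1, p'.2) = m * ((q'.1-a.1)*(p'.2-a.2)) :=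
    hKeq (q'.1, p'.2) (by linarith) k3 k4 (by linarith)
  have c4 : dDiff F a (p'.1, q'.2) = m * ((p'.1-a.1)*(q'.2-a.2)) :=
    hKeq (p'.1, q'.2) k1 (by linarith) (by linarith) k6
  have harea' : 0 < (q'.1-p'.1)*(q'.2-p'.2) := mul_pos (by linarith) (by linarith)
  have hslope : dSlope F p' q' = m := by
    rw [dSlope]
    have expand : dDiff F p' q' = dDiff F a q' - dDiff F a (q'.1, p'.2)
        - dDiff F a (p'.1, q'.2) + dDiff F a p' := by
      simp only [dDiff]; ring
    rw [expand, c1, c2, c3, c4]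
    rw [div_eq_iff (ne_of_gt harea')]
    ring
  obtain ⟨c, e1, e2', e3', e4', e5⟩ :=
    exists_point f F a b hab1 hab2 hF p' q' hp'S hq'S k2 k5
  rw [hslope] at e5
  have := hgt c (by linarith) (by linarith) (by linarith) (by linarith)
  rw [e5] at this
  exact lt_irrefl m this

set_option maxHeartbeats 1000000 in
/-- If two strictly interior rectangles have slopes on either side of `M`, then
`f` attains `M` at an interior point. -/
lemma path_slope (f F : ℝ × ℝ → ℝ) (a b : ℝ × ℝ) (hab1 : a.1 < b.1) (hab2 : a.2 < b.2)
    (hF : ∀ x ∈ Set.Icc a.1 b.1 ×ˢ Set.Icc a.2 b.2,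
      HasDoubleDerivWithinAt F (Set.Icc a.1 b.1 ×ˢ Set.Icc a.2 b.2) x (f x))
    (M : ℝ) (p q p2 q2 : ℝ × ℝ)
    (ha1 : a.1 < p.1) (hb1 : q.1 < b.1) (hpq1 : p.1 < q.1)
    (ha2 : a.2 < p.2) (hb2 : q.2 < b.2) (hpq2 : p.2 < q.2)
    (ha1' : a.1 < p2.1) (hb1' : q2.1 < b.1) (hpq1' : p2.1 < q2.1)
    (ha2' : a.2 < p2.2) (hb2' : q2.2 < b.2) (hpq2' : p2.2 < q2.2)
    (hs1 : dSlope F p q ≤ M) (hs2 : M ≤ dSlope F p2 q2) :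
    ∃ c : ℝ × ℝ, (a.1 < c.1 ∧ c.1 < b.1 ∧ a.2 < c.2 ∧ c.2 < b.2) ∧ f c = M := by
  classical
  set P1 : ℝ → ℝ := fun t => p.1 + t*(p2.1 - p.1) with hP1
  set P2 : ℝ → ℝ := fun t => p.2 + t*(p2.2 - p.2) with hP2
  set Q1 : ℝ → ℝ := fun t => q.1 + t*(q2.1 - q.1) with hQ1
  set Q2 : ℝ → ℝ := fun t => q.2 + t*(q2.2 - q.2) with hQ2
  have hintP1 : ∀ t ∈ Set.Icc (0:ℝ) 1, a.1 < P1 t := by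
    intro t ht
    have := affine_lb a.1 p.1 p2.1 t ht.1 ht.2 ha1 ha1'
    rw [hP1]; simp only; linarith
  have hintP2 : ∀ t ∈ Set.Icc (0:ℝ) 1, a.2 < P2 t := by
    intro t ht
    have := affine_lb a.2 p.2 p2.2 t ht.1 ht.2 ha2 ha2'
    rw [hP2]; simp only; linarith
  have hintQ1 : ∀ t ∈ Set.Icc (0:ℝ) 1, Q1 t < b.1 := by
    intro t ht
    have := affine_ub b.1 q.1 q2.1 t ht.1 ht.2 hb1 hb1'
    rw [hQ1]; simp only; linarith
  have hintQ2 : ∀ t ∈ Set.Icc (0:ℝ) 1, Q2 t < b.2 := by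
    intro t ht
    have := affine_ub b.2 q.2 q2.2 t ht.1 ht.2 hb2 hb2'
    rw [hQ2]; simp only; linarith
  have hgap1 : ∀ t ∈ Set.Icc (0:ℝ) 1, 0 < Q1 t - P1 t := by
    intro t ht
    have := affine_lb 0 (q.1-p.1) (q2.1-p2.1) t ht.1 ht.2 (by linarith) (by linarith)
    rw [hQ1, hP1]; simp only; linarith
  have hgap2 : ∀ t ∈ Set.Icc (0:ℝ) 1, 0 < Q2 t - P2 t := by
    intro t ht
    have := affine_lb 0 (q.2-p.2) (q2.2-p2.2) t ht.1 ht.2 (by linarith) (by linarith)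
    rw [hQ2, hP2]; simp only; linarith
  have hmemP1 : ∀ t ∈ Set.Icc (0:ℝ) 1, P1 t ∈ Set.Icc a.1 b.1 := by
    intro t ht
    refine ⟨(hintP1 t ht).le, ?_⟩
    have h3 := hgap1 t ht
    have h4 := hintQ1 t ht
    linarith
  have hmemP2 : ∀ t ∈ Set.Icc (0:ℝ) 1, P2 t ∈ Set.Icc a.2 b.2 := by
    intro t ht
    refine ⟨(hintP2 t ht).le, ?_⟩
    have h3 := hgap2 t ht
    have h4 := hintQ2 t ht
    linarith
  have hmemQ1 : ∀ t ∈ Set.Icc (0:ℝ) 1, Q1 t ∈ Set.Icc a.1 b.1 := by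
    intro t ht
    refine ⟨?_, (hintQ1 t ht).le⟩
    have h3 := hgap1 t ht
    have h4 := hintP1 t ht
    linarith
  have hmemQ2 : ∀ t ∈ Set.Icc (0:ℝ) 1, Q2 t ∈ Set.Icc a.2 b.2 := by
    intro t ht
    refine ⟨?_, (hintQ2 t ht).le⟩
    have h3 := hgap2 t ht
    have h4 := hintP2 t ht
    linarith
  set φ : ℝ → ℝ := fun t =>
    (dDiff F a (Q1 t, Q2 t) - dDiff F a (Q1 t, P2 t) - dDiff F a (P1 t, Q2 t)
      + dDiff F a (P1 t, P2 t)) / ((Q1 t - P1 t) * (Q2 t - P2 t)) with hφ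
  have hφslope : ∀ t ∈ Set.Icc (0:ℝ) 1, φ t = dSlope F (P1 t, P2 t) (Q1 t, Q2 t) := by
    intro t ht
    rw [hφ, dSlope]
    show _ = dDiff F (P1 t, P2 t) (Q1 t, Q2 t) / ((Q1 t - P1 t) * (Q2 t - P2 t))
    congr 1
    simp only [dDiff]
    ring
  have hHc := Hcont f F a b hab1 hab2 hF
  have hterm : ∀ (g1 g2 : ℝ → ℝ), Continuous g1 → Continuous g2 →
      (∀ t ∈ Set.Icc (0:ℝ) 1, g1 t ∈ Set.Icc a.1 b.1) →
      (∀ t ∈ Set.Icc (0:ℝ) 1, g2 t ∈ Set.Icc a.2 b.2) →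
      ContinuousOn (fun t : ℝ => dDiff F a (g1 t, g2 t)) (Set.Icc 0 1) := by
    intro g1 g2 hg1 hg2 hm1 hm2
    exact hHc.comp (by fun_prop) (fun t ht => ⟨hm1 t ht, hm2 t ht⟩)
  have hcP1 : Continuous P1 := by rw [hP1]; fun_prop
  have hcP2 : Continuous P2 := by rw [hP2]; fun_prop
  have hcQ1 : Continuous Q1 := by rw [hQ1]; fun_prop
  have hcQ2 : Continuous Q2 := by rw [hQ2]; fun_prop
  have hφcont : ContinuousOn φ (Set.Icc 0 1) := by
    rw [hφ]
    apply ContinuousOn.div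
    · apply ContinuousOn.add
      apply ContinuousOn.sub
      apply ContinuousOn.sub
      · exact hterm Q1 Q2 hcQ1 hcQ2 hmemQ1 hmemQ2
      · exact hterm Q1 P2 hcQ1 hcP2 hmemQ1 hmemP2
      · exact hterm P1 Q2 hcP1 hcQ2 hmemP1 hmemQ2
      · exact hterm P1 P2 hcP1 hcP2 hmemP1 hmemP2
    · exact ((hcQ1.sub hcP1).mul (hcQ2.sub hcP2)).continuousOn
    · intro t ht
      exact ne_of_gt (mul_pos (hgap1 t ht) (hgap2 t ht))
  have h0I : (0:ℝ) ∈ Set.Icc (0:ℝ) 1 := ⟨le_refl _, zero_le_one⟩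
  have h1I : (1:ℝ) ∈ Set.Icc (0:ℝ) 1 := ⟨zero_le_one, le_refl _⟩
  have hφ0 : φ 0 = dSlope F p q := by
    rw [hφslope 0 h0I]
    have e1 : P1 0 = p.1 := by rw [hP1]; simp
    have e2 : P2 0 = p.2 := by rw [hP2]; simp
    have e3 : Q1 0 = q.1 := by rw [hQ1]; simp
    have e4 : Q2 0 = q.2 := by rw [hQ2]; simp
    rw [e1, e2, e3, e4]
  have hφ1 : φ 1 = dSlope F p2 q2 := by
    rw [hφslope 1 h1I]
    have e1 : P1 1 = p2.1 := by rw [hP1]; simp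
    have e2 : P2 1 = p2.2 := by rw [hP2]; simp
    have e3 : Q1 1 = q2.1 := by rw [hQ1]; simp
    have e4 : Q2 1 = q2.2 := by rw [hQ2]; simp
    rw [e1, e2, e3, e4]
  have hIVT := intermediate_value_Icc (zero_le_one (α := ℝ)) hφcont
  have hMmem : M ∈ Set.Icc (φ 0) (φ 1) := by
    rw [hφ0, hφ1]; exact ⟨hs1, hs2⟩
  obtain ⟨t, htI, htM⟩ := hIVT hMmem
  have hPQslope : dSlope F (P1 t, P2 t) (Q1 t, Q2 t) = M := by
    rw [← hφslope t htI, htM]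
  have hPmem : ((P1 t, P2 t) : ℝ × ℝ) ∈ Set.Icc a.1 b.1 ×ˢ Set.Icc a.2 b.2 :=
    ⟨hmemP1 t htI, hmemP2 t htI⟩
  have hQmem : ((Q1 t, Q2 t) : ℝ × ℝ) ∈ Set.Icc a.1 b.1 ×ˢ Set.Icc a.2 b.2 :=
    ⟨hmemQ1 t htI, hmemQ2 t htI⟩
  obtain ⟨c, e1, e2, e3, e4, e5⟩ := exists_point f F a b hab1 hab2 hF
    (P1 t, P2 t) (Q1 t, Q2 t) hPmem hQmem
    (show (P1 t, P2 t).1 < (Q1 t, Q2 t).1 by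
      show P1 t < Q1 t; linarith [hgap1 t htI])
    (show (P1 t, P2 t).2 < (Q1 t, Q2 t).2 by
      show P2 t < Q2 t; linarith [hgap2 t htI])
  rw [hPQslope] at e5
  refine ⟨c, ⟨?_, ?_, ?_, ?_⟩, e5⟩
  · exact lt_of_lt_of_le (hintP1 t htI) e1
  · exact lt_of_le_of_lt e2 (hintQ1 t htI)
  · exact lt_of_lt_of_le (hintP2 t htI) e3
  · exact lt_of_le_of_lt e4 (hintQ2 t htI)

lemma small_rect (f F : ℝ × ℝ → ℝ) (a b : ℝ × ℝ)
    (hF : ∀ x ∈ Set.Icc a.1 b.1 ×ˢ Set.Icc a.2 b.2,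
      HasDoubleDerivWithinAt F (Set.Icc a.1 b.1 ×ˢ Set.Icc a.2 b.2) x (f x))
    (c : ℝ × ℝ) (h1 : a.1 < c.1) (h2 : c.1 < b.1) (h3 : a.2 < c.2) (h4 : c.2 < b.2)
    {ε : ℝ} (hε : 0 < ε) :
    ∃ x : ℝ × ℝ, c.1 < x.1 ∧ x.1 < b.1 ∧ c.2 < x.2 ∧ x.2 < b.2 ∧
      |dSlope F c x - f c| < ε := by
  have hcS : c ∈ Set.Icc a.1 b.1 ×ˢ Set.Icc a.2 b.2 := ⟨⟨h1.le, h2.le⟩, ⟨h3.le, h4.le⟩⟩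
  obtain ⟨δ₁, d1, δ₂, d2, hh⟩ := hF c hcS ε hε
  set u1 : ℝ := min (δ₁/2) ((b.1 - c.1)/2) with hu1
  set u2 : ℝ := min (δ₂/2) ((b.2 - c.2)/2) with hu2
  have hu1p : 0 < u1 := lt_min (by linarith) (by linarith)
  have hu2p : 0 < u2 := lt_min (by linarith) (by linarith)
  have hu1b : u1 ≤ (b.1 - c.1)/2 := min_le_right _ _
  have hu2b : u2 ≤ (b.2 - c.2)/2 := min_le_right _ _
  have hu1d : u1 < δ₁ := lt_of_le_of_lt (min_le_left _ _) (by linarith)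
  have hu2d : u2 < δ₂ := lt_of_le_of_lt (min_le_left _ _) (by linarith)
  refine ⟨(c.1 + u1, c.2 + u2), by show c.1 < c.1 + u1; linarith,
    by show c.1 + u1 < b.1; linarith, by show c.2 < c.2 + u2; linarith,
    by show c.2 + u2 < b.2; linarith, ?_⟩
  have hxS : ((c.1 + u1, c.2 + u2) : ℝ × ℝ) ∈ Set.Icc a.1 b.1 ×ˢ Set.Icc a.2 b.2 :=
    ⟨⟨by show a.1 ≤ c.1 + u1; linarith, by show c.1 + u1 ≤ b.1; linarith⟩,
     ⟨by show a.2 ≤ c.2 + u2; linarith, by show c.2 + u2 ≤ b.2; linarith⟩⟩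
  have habs1 : |(c.1 + u1, c.2 + u2).1 - c.1| = u1 := by
    show |c.1 + u1 - c.1| = u1
    rw [show c.1 + u1 - c.1 = u1 by ring, abs_of_pos hu1p]
  have habs2 : |(c.1 + u1, c.2 + u2).2 - c.2| = u2 := by
    show |c.2 + u2 - c.2| = u2
    rw [show c.2 + u2 - c.2 = u2 by ring, abs_of_pos hu2p]
  have := hh (c.1 + u1, c.2 + u2) hxS (by rw [habs1]; exact hu1p)
    (by rw [habs1]; exact hu1d) (by rw [habs2]; exact hu2p) (by rw [habs2]; exact hu2d)
  exact this

lemma negDD (f F : ℝ × ℝ → ℝ) (a b : ℝ × ℝ)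
    (hF : ∀ x ∈ Set.Icc a.1 b.1 ×ˢ Set.Icc a.2 b.2,
      HasDoubleDerivWithinAt F (Set.Icc a.1 b.1 ×ˢ Set.Icc a.2 b.2) x (f x)) :
    ∀ x ∈ Set.Icc a.1 b.1 ×ˢ Set.Icc a.2 b.2,
      HasDoubleDerivWithinAt (fun z => -F z) (Set.Icc a.1 b.1 ×ˢ Set.Icc a.2 b.2) x
        ((fun z => -f z) x) := by
  intro x hx ε hε
  obtain ⟨δ₁, h1, δ₂, h2, hh⟩ := hF x hx ε hε
  refine ⟨δ₁, h1, δ₂, h2, fun z hz p1 p2 p3 p4 => ?_⟩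
  have hzz := hh z hz p1 p2 p3 p4
  show |dSlope (fun z => -F z) x z - -f x| < ε
  have e : dSlope (fun z => -F z) x z = -dSlope F x z := by
    simp only [dSlope, dDiff]; ring
  rw [e, show -dSlope F x z - -f x = -(dSlope F x z - f x) by ring, abs_neg]
  exact hzz

end Stmt17Aux

/-- mean value theorem for double Newton integrals:
`∫_a^b f = Δ_a^b(F) = f(c)(b₁−a₁)(b₂−a₂)` for some `c ∈ (a,b)`. -/
theorem stmt17 (f F : ℝ × ℝ → ℝ) (a b : ℝ × ℝ)
    (hab1 : a.1 < b.1) (hab2 : a.2 < b.2)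
    (hF : ∀ x ∈ Set.Icc a.1 b.1 ×ˢ Set.Icc a.2 b.2,
      HasDoubleDerivWithinAt F (Set.Icc a.1 b.1 ×ˢ Set.Icc a.2 b.2) x (f x)) :
    ∃ c ∈ Set.Ioo a.1 b.1 ×ˢ Set.Ioo a.2 b.2,
      dDiff F a b = f c * ((b.1 - a.1) * (b.2 - a.2)) := by
    classical
  set m := dSlope F a b with hm
  have harea : 0 < (b.1-a.1)*(b.2-a.2) := mul_pos (by linarith) (by linarith)
  have key : ∃ c : ℝ × ℝ, (a.1 < c.1 ∧ c.1 < b.1 ∧ a.2 < c.2 ∧ c.2 < b.2) ∧ f c = m := by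
    by_cases heq : ∃ c : ℝ × ℝ, (a.1 < c.1 ∧ c.1 < b.1 ∧ a.2 < c.2 ∧ c.2 < b.2) ∧ f c = m
    · exact heq
    push_neg at heq
    by_cases hup : ∃ c : ℝ × ℝ, (a.1 < c.1 ∧ c.1 < b.1 ∧ a.2 < c.2 ∧ c.2 < b.2) ∧ f c < m
    · by_cases hdn : ∃ c : ℝ × ℝ, (a.1 < c.1 ∧ c.1 < b.1 ∧ a.2 < c.2 ∧ c.2 < b.2) ∧ m < f c
      · obtain ⟨cm, hcmI, hcm⟩ := hup
        obtain ⟨cp, hcpI, hcp⟩ := hdn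
        obtain ⟨x, hx1, hx2, hx3, hx4, hxe⟩ := Stmt17Aux.small_rect f F a b hF cm
          hcmI.1 hcmI.2.1 hcmI.2.2.1 hcmI.2.2.2 (show (0:ℝ) < (m - f cm)/2 by linarith)
        obtain ⟨y, hy1, hy2, hy3, hy4, hye⟩ := Stmt17Aux.small_rect f F a b hF cp
          hcpI.1 hcpI.2.1 hcpI.2.2.1 hcpI.2.2.2 (show (0:ℝ) < (f cp - m)/2 by linarith)
        have hsx : dSlope F cm x ≤ m := by
          have h5 := (abs_lt.1 hxe).2
          linarith
        have hsy : m ≤ dSlope F cp y := by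
          have h5 := (abs_lt.1 hye).1
          linarith
        exact Stmt17Aux.path_slope f F a b hab1 hab2 hF m cm x cp y
          hcmI.1 hx2 hx1 hcmI.2.2.1 hx4 hx3
          hcpI.1 hy2 hy1 hcpI.2.2.1 hy4 hy3 hsx hsy
      · push_neg at hdn
        exfalso
        apply Stmt17Aux.no_above (fun z => -f z) (fun z => -F z) a b hab1 hab2
          (Stmt17Aux.negDD f F a b hF)
        intro x i1 i2 i3 i4
        show dSlope (fun z => -F z) a b < -f x
        have e : dSlope (fun z => -F z) a b = -m := by
          rw [hm]; simp only [dSlope, dDiff]; ring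
        rw [e]
        have h5 := hdn x ⟨i1, i2, i3, i4⟩
        have h6 := heq x ⟨i1, i2, i3, i4⟩
        have : f x < m := lt_of_le_of_ne h5 h6
        linarith
    · push_neg at hup
      exfalso
      apply Stmt17Aux.no_above f F a b hab1 hab2 hF
      intro x i1 i2 i3 i4
      have h5 := hup x ⟨i1, i2, i3, i4⟩
      have h6 := heq x ⟨i1, i2, i3, i4⟩
      show dSlope F a b < f x
      rw [← hm]
      exact lt_of_le_of_ne h5 (Ne.symm h6)
  obtain ⟨c, ⟨i1, i2, i3, i4⟩, hfc⟩ := key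
  refine ⟨c, ⟨⟨i1, i2⟩, ⟨i3, i4⟩⟩, ?_⟩
  rw [hfc, hm, dSlope, div_mul_cancel₀ _ (ne_of_gt harea)]
end
end

section
/- (First double fundamental theorem of calculus) Let a, b ∈ ℝ² with a < b and let f : [a,b] → ℝ be continuous (in the ordinary sense). Define G : [a,b] → ℝ by G(x) := ∬_{[a,x]} f(t₁,t₂) dt₁ dt₂, the two-dimensional Riemann integral over the rectangle [a₁,x₁] × [a₂,x₂]. Then G is double differentiable on [a,b] (with one-sided signed double derivatives at boundary points) and G'(x) = f(x) for every x ∈ [a,b]. -/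
open Set Filter Topology MeasureTheory

noncomputable section

/-- If `t ∈ Ι c d` then `|t - c| ≤ |d - c|`. -/
lemma abs_sub_le_of_mem_uIoc {c d t : ℝ} (ht : t ∈ Set.uIoc c d) : |t - c| ≤ |d - c| := by
  rcases le_total c d with h | h
  · rw [Set.uIoc_of_le h, Set.mem_Ioc] at ht
    rw [abs_of_nonneg (by linarith), abs_of_nonneg (by linarith)]
    linarith
  · rw [Set.uIoc_of_ge h, Set.mem_Ioc] at ht
    rw [abs_of_nonpos (by linarith), abs_of_nonpos (by linarith)]
    linarith

/-- Main auxiliary: for a globally continuous `F`, `G(y) = ∬_{[a,y]} F` has signed double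
derivative `F x` at any `x` with `a ≤ x` coordinatewise, within the quadrant `{y | a ≤ y}`. -/
lemma aux_main (F : ℝ × ℝ → ℝ) (hF : Continuous F) (a x : ℝ × ℝ)
    (hx1 : a.1 ≤ x.1) (hx2 : a.2 ≤ x.2) :
    HasDoubleDerivWithinAt (fun y : ℝ × ℝ => ∫ t in Set.Icc a.1 y.1 ×ˢ Set.Icc a.2 y.2, F t)
      {y : ℝ × ℝ | a.1 ≤ y.1 ∧ a.2 ≤ y.2} x (F x) := by
  have hFc2 : ∀ t1 : ℝ, Continuous fun t2 => F (t1, t2) :=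
    fun t1 => hF.comp (Continuous.prodMk_right t1)
  have hunc : Continuous (Function.uncurry fun t1 t2 : ℝ => F (t1, t2)) :=
    hF.comp (continuous_fst.prodMk continuous_snd)
  have hgc : ∀ c d : ℝ, Continuous fun t1 => ∫ t2 in c..d, F (t1, t2) := fun c d =>
    intervalIntegral.continuous_parametric_intervalIntegral_of_continuous' (μ := volume) hunc c d
  -- Fubini on the rectangle
  have hfub : ∀ u v : ℝ, a.1 ≤ u → a.2 ≤ v →
      (∫ t in Set.Icc a.1 u ×ˢ Set.Icc a.2 v, F t)
        = ∫ t1 in a.1..u, ∫ t2 in a.2..v, F (t1, t2) := by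
    intro u v hu hv
    have hint : MeasureTheory.IntegrableOn F (Set.Icc a.1 u ×ˢ Set.Icc a.2 v)
        ((volume : Measure ℝ).prod (volume : Measure ℝ)) := by
      rw [← MeasureTheory.Measure.volume_eq_prod]
      exact hF.continuousOn.integrableOn_compact (isCompact_Icc.prod isCompact_Icc)
    rw [MeasureTheory.Measure.volume_eq_prod, MeasureTheory.setIntegral_prod _ hint,
      MeasureTheory.integral_Icc_eq_integral_Ioc, ← intervalIntegral.integral_of_le hu]
    refine intervalIntegral.integral_congr fun t1 _ => ?_
    rw [MeasureTheory.integral_Icc_eq_integral_Ioc, ← intervalIntegral.integral_of_le hv]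
  -- the double difference is the iterated integral over the small rectangle
  have hdd : ∀ y : ℝ × ℝ, a.1 ≤ y.1 → a.2 ≤ y.2 →
      dDiff (fun y : ℝ × ℝ => ∫ t in Set.Icc a.1 y.1 ×ˢ Set.Icc a.2 y.2, F t) x y
        = ∫ t1 in x.1..y.1, ∫ t2 in x.2..y.2, F (t1, t2) := by
    intro y hy1 hy2
    simp only [dDiff]
    rw [hfub y.1 y.2 hy1 hy2, hfub y.1 x.2 hy1 hx2, hfub x.1 y.2 hx1 hy2,
      hfub x.1 x.2 hx1 hx2]
    have hsub : ∀ u : ℝ,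
        (∫ t1 in a.1..u, ∫ t2 in a.2..y.2, F (t1, t2))
          - (∫ t1 in a.1..u, ∫ t2 in a.2..x.2, F (t1, t2))
          = ∫ t1 in a.1..u, ∫ t2 in x.2..y.2, F (t1, t2) := by
      intro u
      rw [← intervalIntegral.integral_sub ((hgc a.2 y.2).intervalIntegrable _ _)
        ((hgc a.2 x.2).intervalIntegrable _ _)]
      refine intervalIntegral.integral_congr fun t1 _ => ?_
      exact intervalIntegral.integral_interval_sub_left
        ((hFc2 t1).intervalIntegrable _ _) ((hFc2 t1).intervalIntegrable _ _)
    have h2 := hsub y.1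
    have h3 := hsub x.1
    have h4 := intervalIntegral.integral_interval_sub_left
      ((hgc x.2 y.2).intervalIntegrable (μ := volume) a.1 y.1) ((hgc x.2 y.2).intervalIntegrable (μ := volume) a.1 x.1)
    linarith
  -- the ε-δ estimate
  intro ε hε
  obtain ⟨δ, hδpos, hδ⟩ := Metric.continuousAt_iff.mp hF.continuousAt (ε / 2) (by positivity)
  refine ⟨δ, hδpos, δ, hδpos, ?_⟩
  intro y hy h1pos h1lt h2pos h2lt
  have hne1 : y.1 - x.1 ≠ 0 := by intro h; rw [h] at h1pos; simp at h1pos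
  have hne2 : y.2 - x.2 ≠ 0 := by intro h; rw [h] at h2pos; simp at h2pos
  have key : (∫ t1 in x.1..y.1, ∫ t2 in x.2..y.2, (F (t1, t2) - F x))
      = dDiff (fun y : ℝ × ℝ => ∫ t in Set.Icc a.1 y.1 ×ˢ Set.Icc a.2 y.2, F t) x y
        - (y.1 - x.1) * ((y.2 - x.2) * F x) := by
    have e1 : ∀ t1 : ℝ, (∫ t2 in x.2..y.2, (F (t1, t2) - F x))
        = (∫ t2 in x.2..y.2, F (t1, t2)) - (y.2 - x.2) * F x := by
      intro t1
      rw [intervalIntegral.integral_sub ((hFc2 t1).intervalIntegrable _ _)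
        (intervalIntegrable_const), intervalIntegral.integral_const, smul_eq_mul]
    rw [hdd y hy.1 hy.2]
    calc (∫ t1 in x.1..y.1, ∫ t2 in x.2..y.2, (F (t1, t2) - F x))
        = ∫ t1 in x.1..y.1, ((∫ t2 in x.2..y.2, F (t1, t2)) - (y.2 - x.2) * F x) :=
          intervalIntegral.integral_congr fun t1 _ => e1 t1
      _ = (∫ t1 in x.1..y.1, ∫ t2 in x.2..y.2, F (t1, t2))
            - (y.1 - x.1) * ((y.2 - x.2) * F x) := by
          rw [intervalIntegral.integral_sub ((hgc x.2 y.2).intervalIntegrable _ _)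
            (intervalIntegrable_const), intervalIntegral.integral_const, smul_eq_mul]
  have hb : ‖∫ t1 in x.1..y.1, ∫ t2 in x.2..y.2, (F (t1, t2) - F x)‖
      ≤ ε / 2 * |y.2 - x.2| * |y.1 - x.1| := by
    apply intervalIntegral.norm_integral_le_of_norm_le_const
    intro t1 ht1
    apply intervalIntegral.norm_integral_le_of_norm_le_const
    intro t2 ht2
    have h1 : |t1 - x.1| ≤ |y.1 - x.1| := abs_sub_le_of_mem_uIoc ht1
    have h2 : |t2 - x.2| ≤ |y.2 - x.2| := abs_sub_le_of_mem_uIoc ht2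
    have hdist : dist (t1, t2) x < δ := by
      rw [Prod.dist_eq]
      refine max_lt ?_ ?_ <;> rw [Real.dist_eq]
      · exact lt_of_le_of_lt h1 h1lt
      · exact lt_of_le_of_lt h2 h2lt
    have := hδ hdist
    rw [Real.dist_eq] at this
    rw [Real.norm_eq_abs]
    exact le_of_lt this
  show |dSlope _ x y - F x| < ε
  have hnum : dSlope (fun y : ℝ × ℝ => ∫ t in Set.Icc a.1 y.1 ×ˢ Set.Icc a.2 y.2, F t) x y - F x
      = (∫ t1 in x.1..y.1, ∫ t2 in x.2..y.2, (F (t1, t2) - F x))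
          / ((y.1 - x.1) * (y.2 - x.2)) := by
    rw [key, dSlope]
    field_simp
  rw [Real.norm_eq_abs] at hb
  rw [hnum, abs_div, abs_mul]
  have hpos : 0 < |y.1 - x.1| * |y.2 - x.2| := by positivity
  rw [div_lt_iff₀ hpos]
  calc |∫ t1 in x.1..y.1, ∫ t2 in x.2..y.2, (F (t1, t2) - F x)|
      ≤ ε / 2 * |y.2 - x.2| * |y.1 - x.1| := hb
    _ < ε * (|y.1 - x.1| * |y.2 - x.2|) := by nlinarith [abs_pos.2 hne1, abs_pos.2 hne2]

/-- first double fundamental theorem of calculus: for continuous `f`,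
`G(x) = ∬_{[a,x]} f` is double differentiable on `[a,b]` (one-sided signed double
derivatives at boundary points) with `G' = f`. -/
theorem stmt18 (f : ℝ × ℝ → ℝ) (a b : ℝ × ℝ)
    (hab1 : a.1 < b.1) (hab2 : a.2 < b.2)
    (hf : ContinuousOn f (Set.Icc a.1 b.1 ×ˢ Set.Icc a.2 b.2)) :
    ∀ x ∈ Set.Icc a.1 b.1 ×ˢ Set.Icc a.2 b.2,
      HasDoubleDerivWithinAt
        (fun y : ℝ × ℝ => ∫ t in Set.Icc a.1 y.1 ×ˢ Set.Icc a.2 y.2, f t)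
        (Set.Icc a.1 b.1 ×ˢ Set.Icc a.2 b.2) x (f x)  := by
  intro x hx
  set q : ℝ × ℝ → ℝ × ℝ := fun p => (max a.1 (min p.1 b.1), max a.2 (min p.2 b.2)) with hq
  have hqc : Continuous q := by
    apply Continuous.prodMk
    · exact continuous_const.max (continuous_fst.min continuous_const)
    · exact continuous_const.max (continuous_snd.min continuous_const)
  have hqmem : ∀ p : ℝ × ℝ, q p ∈ Set.Icc a.1 b.1 ×ˢ Set.Icc a.2 b.2 := by
    intro p
    refine ⟨⟨le_max_left _ _, max_le hab1.le (min_le_right _ _)⟩,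
      ⟨le_max_left _ _, max_le hab2.le (min_le_right _ _)⟩⟩
  have hqeq : ∀ p ∈ Set.Icc a.1 b.1 ×ˢ Set.Icc a.2 b.2, q p = p := by
    rintro p ⟨⟨p1, p2⟩, ⟨p3, p4⟩⟩
    simp only [hq, min_eq_left p2, max_eq_right p1, min_eq_left p4, max_eq_right p3]
  set F : ℝ × ℝ → ℝ := fun p => f (q p) with hFdef
  have hFc : Continuous F := hf.comp_continuous hqc hqmem
  have hFeq : ∀ p ∈ Set.Icc a.1 b.1 ×ˢ Set.Icc a.2 b.2, F p = f p := by
    intro p hp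
    simp only [hFdef, hqeq p hp]
  have hGeq : ∀ u v : ℝ, u ∈ Set.Icc a.1 b.1 → v ∈ Set.Icc a.2 b.2 →
      (∫ t in Set.Icc a.1 u ×ˢ Set.Icc a.2 v, f t)
        = ∫ t in Set.Icc a.1 u ×ˢ Set.Icc a.2 v, F t := by
    intro u v hu hv
    refine MeasureTheory.setIntegral_congr_fun (measurableSet_Icc.prod measurableSet_Icc) ?_
    intro t ht
    exact (hFeq t ⟨Set.Icc_subset_Icc_right hu.2 ht.1, Set.Icc_subset_Icc_right hv.2 ht.2⟩).symm
  have key := aux_main F hFc a x hx.1.1 hx.2.1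
  intro ε hε
  obtain ⟨δ₁, hδ₁, δ₂, hδ₂, hkey⟩ := key ε hε
  refine ⟨δ₁, hδ₁, δ₂, hδ₂, ?_⟩
  intro y hy h1 h2 h3 h4
  have hthis := hkey y ⟨hy.1.1, hy.2.1⟩ h1 h2 h3 h4
  simp only [dSlope, dDiff] at hthis ⊢
  rw [hGeq y.1 y.2 hy.1 hy.2, hGeq y.1 x.2 hy.1 hx.2, hGeq x.1 y.2 hx.1 hy.2,
    hGeq x.1 x.2 hx.1 hx.2, ← hFeq x hx]
  exact hthis
end
end

section
/- (Second double fundamental theorem of calculus) Let a, b ∈ ℝ² with a < b, let f : [a,b] → ℝ be continuous, and suppose f has a double primitive function F on [a,b]. Then the two-dimensional Riemann integral of f over [a,b] equals Δ_a^b(F), i.e. ∬_{[a,b]} f(x₁,x₂) dx₁ dx₂ = F(b₁,b₂) − F(b₁,a₂) − F(a₁,b₂) + F(a₁,a₂). -/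
open Set Filter Topology MeasureTheory

noncomputable section

lemma dDiff_quarter_sum (H : ℝ × ℝ → ℝ) (p q m : ℝ × ℝ) :
    dDiff H p q = dDiff H p m + dDiff H (m.1, p.2) (q.1, m.2)
      + dDiff H (p.1, m.2) (m.1, q.2) + dDiff H m q := by
  simp only [dDiff]; ring

lemma dDiff_corner (H : ℝ × ℝ → ℝ) (p q x : ℝ × ℝ) :
    dDiff H p q = dDiff H x q - dDiff H x (q.1, p.2) - dDiff H x (p.1, q.2) + dDiff H x p := by
  simp only [dDiff]; ring

lemma dDiff_eq_zero_left (H : ℝ × ℝ → ℝ) (x y : ℝ × ℝ) (h : y.1 = x.1) : dDiff H x y = 0 := by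
  simp only [dDiff, h]; ring

lemma dDiff_eq_zero_right (H : ℝ × ℝ → ℝ) (x y : ℝ × ℝ) (h : y.2 = x.2) : dDiff H x y = 0 := by
  simp only [dDiff, h]; ring

lemma quarter_ex (H : ℝ × ℝ → ℝ) (p q : ℝ × ℝ) : ∃ r : (ℝ × ℝ) × (ℝ × ℝ),
    (r.1.1 = p.1 ∨ r.1.1 = (p.1 + q.1) / 2) ∧ (r.1.2 = p.2 ∨ r.1.2 = (p.2 + q.2) / 2) ∧
    r.2.1 = r.1.1 + (q.1 - p.1) / 2 ∧ r.2.2 = r.1.2 + (q.2 - p.2) / 2 ∧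
    |dDiff H p q| ≤ 4 * |dDiff H r.1 r.2| := by
  set m : ℝ × ℝ := ((p.1 + q.1) / 2, (p.2 + q.2) / 2) with hm
  have hq := dDiff_quarter_sum H p q m
  set s₁ := dDiff H p m with hs₁
  set s₂ := dDiff H (m.1, p.2) (q.1, m.2) with hs₂
  set s₃ := dDiff H (p.1, m.2) (m.1, q.2) with hs₃
  set s₄ := dDiff H m q with hs₄
  have key : |dDiff H p q| ≤ 4 * |s₁| ∨ |dDiff H p q| ≤ 4 * |s₂| ∨
      |dDiff H p q| ≤ 4 * |s₃| ∨ |dDiff H p q| ≤ 4 * |s₄| := by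
    by_contra hcon
    push_neg at hcon
    obtain ⟨h1, h2, h3, h4⟩ := hcon
    have A := abs_add_le (s₁ + s₂ + s₃) s₄
    have B := abs_add_le (s₁ + s₂) s₃
    have C := abs_add_le s₁ s₂
    rw [hq] at h1 h2 h3 h4
    linarith [abs_nonneg (s₁ + s₂ + s₃ + s₄)]
  rcases key with h | h | h | h
  · exact ⟨(p, m), Or.inl rfl, Or.inl rfl, by simp [hm]; ring, by simp [hm]; ring, h⟩
  · exact ⟨((m.1, p.2), (q.1, m.2)), Or.inr (by simp [hm]), Or.inl rfl,
      by simp [hm]; ring, by simp [hm]; ring, h⟩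
  · exact ⟨((p.1, m.2), (m.1, q.2)), Or.inl rfl, Or.inr (by simp [hm]),
      by simp [hm]; ring, by simp [hm]; ring, h⟩
  · exact ⟨(m, q), Or.inr (by simp [hm]), Or.inr (by simp [hm]),
      by simp [hm]; ring, by simp [hm]; ring, h⟩

def qstep (H : ℝ × ℝ → ℝ) : (ℝ × ℝ) × (ℝ × ℝ) → (ℝ × ℝ) × (ℝ × ℝ) :=
  fun r => (quarter_ex H r.1 r.2).choose

lemma qstep_spec (H : ℝ × ℝ → ℝ) (r : (ℝ × ℝ) × (ℝ × ℝ)) :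
    ((qstep H r).1.1 = r.1.1 ∨ (qstep H r).1.1 = (r.1.1 + r.2.1) / 2) ∧
    ((qstep H r).1.2 = r.1.2 ∨ (qstep H r).1.2 = (r.1.2 + r.2.2) / 2) ∧
    (qstep H r).2.1 = (qstep H r).1.1 + (r.2.1 - r.1.1) / 2 ∧
    (qstep H r).2.2 = (qstep H r).1.2 + (r.2.2 - r.1.2) / 2 ∧
    |dDiff H r.1 r.2| ≤ 4 * |dDiff H (qstep H r).1 (qstep H r).2| :=
  (quarter_ex H r.1 r.2).choose_spec

lemma dDiff_le_of_deriv (H : ℝ × ℝ → ℝ) (S : Set (ℝ × ℝ)) (x : ℝ × ℝ) {ε δ₁ δ₂ : ℝ}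
    (hε : 0 < ε)
    (hkey : ∀ y ∈ S, 0 < |y.1 - x.1| → |y.1 - x.1| < δ₁ → 0 < |y.2 - x.2| → |y.2 - x.2| < δ₂ →
      |dSlope H x y - 0| < ε)
    (y : ℝ × ℝ) (hy : y ∈ S) (hy1 : |y.1 - x.1| < δ₁) (hy2 : |y.2 - x.2| < δ₂) :
    |dDiff H x y| ≤ ε * (|y.1 - x.1| * |y.2 - x.2|) := by
  by_cases e1 : y.1 = x.1
  · rw [dDiff_eq_zero_left H x y e1, abs_zero]
    positivity
  by_cases e2 : y.2 = x.2
  · rw [dDiff_eq_zero_right H x y e2, abs_zero]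
    positivity
  have hp1 : 0 < |y.1 - x.1| := abs_pos.mpr (sub_ne_zero.mpr e1)
  have hp2 : 0 < |y.2 - x.2| := abs_pos.mpr (sub_ne_zero.mpr e2)
  have h := hkey y hy hp1 hy1 hp2 hy2
  rw [sub_zero] at h
  have hds : dSlope H x y = dDiff H x y / ((y.1 - x.1) * (y.2 - x.2)) := rfl
  rw [hds, abs_div, abs_mul] at h
  have hprod : 0 < |y.1 - x.1| * |y.2 - x.2| := mul_pos hp1 hp2
  exact le_of_lt ((div_lt_iff₀ hprod).mp h)

lemma dDiff_eq_zero_of_deriv_zero (H : ℝ × ℝ → ℝ) (a b : ℝ × ℝ)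
    (h1 : a.1 ≤ b.1) (h2 : a.2 ≤ b.2)
    (hH : ∀ x ∈ Set.Icc a.1 b.1 ×ˢ Set.Icc a.2 b.2,
      HasDoubleDerivWithinAt H (Set.Icc a.1 b.1 ×ˢ Set.Icc a.2 b.2) x 0) :
    dDiff H a b = 0 := by
  rcases eq_or_lt_of_le h1 with h1e | h1s
  · exact dDiff_eq_zero_left H a b h1e.symm
  rcases eq_or_lt_of_le h2 with h2e | h2s
  · exact dDiff_eq_zero_right H a b h2e.symm
  by_contra hc0
  set c := |dDiff H a b| with hcdef
  have hc : 0 < c := abs_pos.mpr hc0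
  set R : ℕ → (ℝ × ℝ) × (ℝ × ℝ) := fun n => (qstep H)^[n] (a, b) with hRdef
  have hR0 : R 0 = (a, b) := rfl
  have hRs : ∀ n, R (n + 1) = qstep H (R n) := fun n =>
    Function.iterate_succ_apply' (qstep H) n (a, b)
  have main : ∀ n, (a.1 ≤ (R n).1.1 ∧ (R n).1.1 ≤ (R n).2.1 ∧ (R n).2.1 ≤ b.1) ∧
      (a.2 ≤ (R n).1.2 ∧ (R n).1.2 ≤ (R n).2.2 ∧ (R n).2.2 ≤ b.2) ∧
      ((R n).2.1 - (R n).1.1 = (b.1 - a.1) / 2 ^ n) ∧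
      ((R n).2.2 - (R n).1.2 = (b.2 - a.2) / 2 ^ n) ∧
      c ≤ 4 ^ n * |dDiff H (R n).1 (R n).2| := by
    intro n
    induction n with
    | zero =>
      rw [hR0]
      refine ⟨⟨le_refl _, h1, le_refl _⟩, ⟨le_refl _, h2, le_refl _⟩, by norm_num, by norm_num,
        by rw [hcdef]; norm_num⟩
    | succ n ih =>
      obtain ⟨⟨ha1, hpq1, hb1⟩, ⟨ha2, hpq2, hb2⟩, hw1, hw2, hcle⟩ := ih
      have hs := qstep_spec H (R n)
      rw [← hRs n] at hs
      obtain ⟨hL1, hL2, hU1, hU2, hd⟩ := hs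
      have k1a : a.1 ≤ (R (n + 1)).1.1 := by rcases hL1 with h | h <;> rw [h] <;> linarith
      have k1b : (R (n + 1)).2.1 ≤ b.1 := by
        rw [hU1]; rcases hL1 with h | h <;> rw [h] <;> linarith
      have k2a : a.2 ≤ (R (n + 1)).1.2 := by rcases hL2 with h | h <;> rw [h] <;> linarith
      have k2b : (R (n + 1)).2.2 ≤ b.2 := by
        rw [hU2]; rcases hL2 with h | h <;> rw [h] <;> linarith
      have kw1 : (R (n + 1)).2.1 - (R (n + 1)).1.1 = (b.1 - a.1) / 2 ^ (n + 1) := by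
        rw [hU1, hw1, pow_succ]
        ring
      have kw2 : (R (n + 1)).2.2 - (R (n + 1)).1.2 = (b.2 - a.2) / 2 ^ (n + 1) := by
        rw [hU2, hw2, pow_succ]
        ring
      have k12 : (R (n + 1)).1.1 ≤ (R (n + 1)).2.1 := by
        rw [hU1]; linarith
      have k22 : (R (n + 1)).1.2 ≤ (R (n + 1)).2.2 := by
        rw [hU2]; linarith
      refine ⟨⟨k1a, k12, k1b⟩, ⟨k2a, k22, k2b⟩, kw1, kw2, ?_⟩
      have h4 : (0:ℝ) ≤ 4 ^ n := by positivity
      calc c ≤ 4 ^ n * |dDiff H (R n).1 (R n).2| := hcle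
        _ ≤ 4 ^ n * (4 * |dDiff H (R (n + 1)).1 (R (n + 1)).2|) :=
          mul_le_mul_of_nonneg_left hd h4
        _ = 4 ^ (n + 1) * |dDiff H (R (n + 1)).1 (R (n + 1)).2| := by rw [pow_succ]; ring
  have stepm : ∀ n, (R n).1.1 ≤ (R (n + 1)).1.1 ∧ (R (n + 1)).2.1 ≤ (R n).2.1 ∧
      (R n).1.2 ≤ (R (n + 1)).1.2 ∧ (R (n + 1)).2.2 ≤ (R n).2.2 := by
    intro n
    obtain ⟨⟨_, hpq1, _⟩, ⟨_, hpq2, _⟩, _, _, _⟩ := main n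
    have hs := qstep_spec H (R n)
    rw [← hRs n] at hs
    obtain ⟨hL1, hL2, hU1, hU2, _⟩ := hs
    refine ⟨?_, ?_, ?_, ?_⟩
    · rcases hL1 with h | h <;> rw [h] <;> linarith
    · rw [hU1]; rcases hL1 with h | h <;> rw [h] <;> linarith
    · rcases hL2 with h | h <;> rw [h] <;> linarith
    · rw [hU2]; rcases hL2 with h | h <;> rw [h] <;> linarith
  have mono1 : Monotone fun n => (R n).1.1 := monotone_nat_of_le_succ fun n => (stepm n).1
  have anti1 : Antitone fun n => (R n).2.1 := antitone_nat_of_succ_le fun n => (stepm n).2.1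
  have mono2 : Monotone fun n => (R n).1.2 := monotone_nat_of_le_succ fun n => (stepm n).2.2.1
  have anti2 : Antitone fun n => (R n).2.2 := antitone_nat_of_succ_le fun n => (stepm n).2.2.2
  set x₁ := sSup (Set.range fun n => (R n).1.1) with hx1def
  set x₂ := sSup (Set.range fun n => (R n).1.2) with hx2def
  have cross1 : ∀ m n, (R m).1.1 ≤ (R n).2.1 := by
    intro m n
    rcases le_total m n with h | h
    · exact le_trans (mono1 h) (main n).1.2.1
    · exact le_trans (main m).1.2.1 (anti1 h)
  have cross2 : ∀ m n, (R m).1.2 ≤ (R n).2.2 := by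
    intro m n
    rcases le_total m n with h | h
    · exact le_trans (mono2 h) (main n).2.1.2.1
    · exact le_trans (main m).2.1.2.1 (anti2 h)
  have hx1le : ∀ n, (R n).1.1 ≤ x₁ := fun n =>
    le_csSup ⟨b.1, by rintro _ ⟨k, rfl⟩; exact le_trans (main k).1.2.1 (main k).1.2.2⟩ ⟨n, rfl⟩
  have hx1ge : ∀ n, x₁ ≤ (R n).2.1 := fun n =>
    csSup_le (Set.range_nonempty _) (by rintro _ ⟨k, rfl⟩; exact cross1 k n)
  have hx2le : ∀ n, (R n).1.2 ≤ x₂ := fun n =>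
    le_csSup ⟨b.2, by rintro _ ⟨k, rfl⟩; exact le_trans (main k).2.1.2.1 (main k).2.1.2.2⟩ ⟨n, rfl⟩
  have hx2ge : ∀ n, x₂ ≤ (R n).2.2 := fun n =>
    csSup_le (Set.range_nonempty _) (by rintro _ ⟨k, rfl⟩; exact cross2 k n)
  have hx : (x₁, x₂) ∈ Set.Icc a.1 b.1 ×ˢ Set.Icc a.2 b.2 := by
    constructor
    · exact ⟨le_trans (main 0).1.1 (hx1le 0), le_trans (hx1ge 0) (main 0).1.2.2⟩
    · exact ⟨le_trans (main 0).2.1.1 (hx2le 0), le_trans (hx2ge 0) (main 0).2.1.2.2⟩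
  set A := (b.1 - a.1) * (b.2 - a.2) with hAdef
  have hA : 0 < A := mul_pos (by linarith) (by linarith)
  have hε : 0 < c / (2 * A) := by positivity
  obtain ⟨δ₁, hδ₁, δ₂, hδ₂, hkey⟩ := hH (x₁, x₂) hx (c / (2 * A)) hε
  obtain ⟨n, hn⟩ := exists_pow_lt_of_lt_one
    (show 0 < min (δ₁ / (b.1 - a.1)) (δ₂ / (b.2 - a.2)) by
      exact lt_min (div_pos hδ₁ (by linarith)) (div_pos hδ₂ (by linarith)))
    (by norm_num : (1:ℝ) / 2 < 1)
  have h2n : (0:ℝ) < 2 ^ n := by positivity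
  have hn1 : (b.1 - a.1) / 2 ^ n < δ₁ := by
    have hA1 : (1:ℝ) / 2 ^ n < δ₁ / (b.1 - a.1) := by
      have := hn.trans_le (min_le_left _ _); rwa [div_pow, one_pow] at this
    rw [div_lt_iff₀ h2n]
    have := (div_lt_div_iff₀ h2n (by linarith : (0:ℝ) < b.1 - a.1)).mp hA1
    linarith
  have hn2 : (b.2 - a.2) / 2 ^ n < δ₂ := by
    have hA2 : (1:ℝ) / 2 ^ n < δ₂ / (b.2 - a.2) := by
      have := hn.trans_le (min_le_right _ _); rwa [div_pow, one_pow] at this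
    rw [div_lt_iff₀ h2n]
    have := (div_lt_div_iff₀ h2n (by linarith : (0:ℝ) < b.2 - a.2)).mp hA2
    linarith
  obtain ⟨⟨ha1, hpq1, hb1⟩, ⟨ha2, hpq2, hb2⟩, hw1, hw2, hcle⟩ := main n
  set p := (R n).1 with hpdef
  set q := (R n).2 with hqdef
  -- bounds on distances of corners from (x₁, x₂)
  have d1 : |q.1 - x₁| ≤ (b.1 - a.1) / 2 ^ n := by
    rw [abs_of_nonneg (by linarith [hx1ge n])]; linarith [hx1le n]
  have d1' : |p.1 - x₁| ≤ (b.1 - a.1) / 2 ^ n := by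
    rw [abs_of_nonpos (by linarith [hx1le n])]; linarith [hx1ge n]
  have d2 : |q.2 - x₂| ≤ (b.2 - a.2) / 2 ^ n := by
    rw [abs_of_nonneg (by linarith [hx2ge n])]; linarith [hx2le n]
  have d2' : |p.2 - x₂| ≤ (b.2 - a.2) / 2 ^ n := by
    rw [abs_of_nonpos (by linarith [hx2le n])]; linarith [hx2ge n]
  have hε' : (0:ℝ) < c / (2 * A) := hε
  have memq : q ∈ Set.Icc a.1 b.1 ×ˢ Set.Icc a.2 b.2 := ⟨⟨by linarith, hb1⟩, ⟨by linarith, hb2⟩⟩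
  have memqp : ((q.1, p.2) : ℝ × ℝ) ∈ Set.Icc a.1 b.1 ×ˢ Set.Icc a.2 b.2 :=
    ⟨⟨by linarith, hb1⟩, ⟨ha2, by linarith⟩⟩
  have mempq : ((p.1, q.2) : ℝ × ℝ) ∈ Set.Icc a.1 b.1 ×ˢ Set.Icc a.2 b.2 :=
    ⟨⟨ha1, by linarith⟩, ⟨by linarith, hb2⟩⟩
  have memp : p ∈ Set.Icc a.1 b.1 ×ˢ Set.Icc a.2 b.2 := ⟨⟨ha1, by linarith⟩, ⟨ha2, by linarith⟩⟩
  have c1 := dDiff_le_of_deriv H _ (x₁, x₂) hε' hkey q memq (lt_of_le_of_lt d1 hn1)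
    (lt_of_le_of_lt d2 hn2)
  have c2 := dDiff_le_of_deriv H _ (x₁, x₂) hε' hkey (q.1, p.2) memqp (lt_of_le_of_lt d1 hn1)
    (lt_of_le_of_lt d2' hn2)
  have c3 := dDiff_le_of_deriv H _ (x₁, x₂) hε' hkey (p.1, q.2) mempq (lt_of_le_of_lt d1' hn1)
    (lt_of_le_of_lt d2 hn2)
  have c4 := dDiff_le_of_deriv H _ (x₁, x₂) hε' hkey p memp (lt_of_le_of_lt d1' hn1)
    (lt_of_le_of_lt d2' hn2)
  have habs1 : |q.1 - x₁| = q.1 - x₁ := abs_of_nonneg (by linarith [hx1ge n])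
  have habs1' : |p.1 - x₁| = x₁ - p.1 := by
    rw [abs_of_nonpos (by linarith [hx1le n])]; ring
  have habs2 : |q.2 - x₂| = q.2 - x₂ := abs_of_nonneg (by linarith [hx2ge n])
  have habs2' : |p.2 - x₂| = x₂ - p.2 := by
    rw [abs_of_nonpos (by linarith [hx2le n])]; ring
  rw [habs1, habs2] at c1
  rw [habs1, habs2'] at c2
  rw [habs1', habs2] at c3
  rw [habs1', habs2'] at c4
  have hcor := dDiff_corner H p q (x₁, x₂)
  have htri : |dDiff H p q| ≤ |dDiff H (x₁, x₂) q| + |dDiff H (x₁, x₂) (q.1, p.2)| +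
      |dDiff H (x₁, x₂) (p.1, q.2)| + |dDiff H (x₁, x₂) p| := by
    rw [hcor]
    have t1 := abs_sub (dDiff H (x₁, x₂) q) (dDiff H (x₁, x₂) (q.1, p.2))
    have t2 := abs_sub (dDiff H (x₁, x₂) q - dDiff H (x₁, x₂) (q.1, p.2))
      (dDiff H (x₁, x₂) (p.1, q.2))
    have t3 := abs_add_le (dDiff H (x₁, x₂) q - dDiff H (x₁, x₂) (q.1, p.2) -
      dDiff H (x₁, x₂) (p.1, q.2)) (dDiff H (x₁, x₂) p)
    linarith
  have hsum : |dDiff H p q| ≤ c / (2 * A) * ((q.1 - p.1) * (q.2 - p.2)) := by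
    have : c / (2 * A) * ((q.1 - x₁) * (q.2 - x₂)) + c / (2 * A) * ((q.1 - x₁) * (x₂ - p.2)) +
        c / (2 * A) * ((x₁ - p.1) * (q.2 - x₂)) + c / (2 * A) * ((x₁ - p.1) * (x₂ - p.2)) =
        c / (2 * A) * ((q.1 - p.1) * (q.2 - p.2)) := by ring
    linarith
  rw [hw1, hw2] at hsum
  have h4n : (4:ℝ) ^ n = 2 ^ n * 2 ^ n := by rw [← mul_pow]; norm_num
  have hfin : 4 ^ n * |dDiff H p q| ≤ c / 2 := by
    have e1 : 4 ^ n * (c / (2 * A) * ((b.1 - a.1) / 2 ^ n * ((b.2 - a.2) / 2 ^ n))) = c / 2 := by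
      rw [h4n, hAdef]
      field_simp
    have h4 : (0:ℝ) ≤ 4 ^ n := by positivity
    calc 4 ^ n * |dDiff H p q| ≤
        4 ^ n * (c / (2 * A) * ((b.1 - a.1) / 2 ^ n * ((b.2 - a.2) / 2 ^ n))) :=
          mul_le_mul_of_nonneg_left hsum h4
      _ = c / 2 := e1
  linarith

lemma abs_sub_le_of_mem_uIoc_s19 {p y u : ℝ} (hu : u ∈ Set.uIoc p y) : |u - p| ≤ |y - p| := by
  rcases Set.mem_uIoc.mp hu with ⟨h1, h2⟩ | ⟨h1, h2⟩
  · rw [abs_of_nonneg (by linarith), abs_of_nonneg (by linarith)]; linarith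
  · rw [abs_of_nonpos (by linarith), abs_of_nonpos (by linarith)]; linarith

/-- second double fundamental theorem of calculus: if continuous `f`
has a double primitive `F` on `[a,b]`, then `∬_{[a,b]} f = Δ_a^b(F)`. -/
theorem stmt19 (f F : ℝ × ℝ → ℝ) (a b : ℝ × ℝ)
    (hab1 : a.1 < b.1) (hab2 : a.2 < b.2)
    (hf : ContinuousOn f (Set.Icc a.1 b.1 ×ˢ Set.Icc a.2 b.2))
    (hF : ∀ x ∈ Set.Icc a.1 b.1 ×ˢ Set.Icc a.2 b.2,
      HasDoubleDerivWithinAt F (Set.Icc a.1 b.1 ×ˢ Set.Icc a.2 b.2) x (f x)) :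
    ∫ t in Set.Icc a.1 b.1 ×ˢ Set.Icc a.2 b.2, f t =
      F (b.1, b.2) - F (b.1, a.2) - F (a.1, b.2) + F (a.1, a.2) := by
  -- the clamped (continuous, global) extension of `f`
  set g : ℝ × ℝ → ℝ := fun t => f (max a.1 (min t.1 b.1), max a.2 (min t.2 b.2)) with hgdef
  have hmem : ∀ t : ℝ × ℝ,
      ((max a.1 (min t.1 b.1), max a.2 (min t.2 b.2)) : ℝ × ℝ) ∈
        Set.Icc a.1 b.1 ×ˢ Set.Icc a.2 b.2 := by
    intro t
    exact Set.mem_prod.mpr ⟨Set.mem_Icc.mpr ⟨le_max_left _ _, max_le hab1.le (min_le_right _ _)⟩,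
      Set.mem_Icc.mpr ⟨le_max_left _ _, max_le hab2.le (min_le_right _ _)⟩⟩
  have hg : Continuous g := by
    apply hf.comp_continuous (by fun_prop) hmem
  have hg_eq : ∀ t ∈ Set.Icc a.1 b.1 ×ˢ Set.Icc a.2 b.2, g t = f t := by
    rintro ⟨t1, t2⟩ ⟨⟨ht1a, ht1b⟩, ⟨ht2a, ht2b⟩⟩
    show f (max a.1 (min t1 b.1), max a.2 (min t2 b.2)) = f (t1, t2)
    rw [min_eq_left ht1b, max_eq_right ht1a, min_eq_left ht2b, max_eq_right ht2a]
  -- basic integrability facts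
  have hgi : ∀ (u c d : ℝ), IntervalIntegrable (fun v => g (u, v)) volume c d := fun u c d =>
    (hg.comp (by fun_prop : Continuous fun v : ℝ => ((u, v) : ℝ × ℝ))).intervalIntegrable c d
  have huncurry : Continuous (Function.uncurry fun u v => g (u, v)) := by
    exact hg
  have hIcont : ∀ (c d : ℝ), Continuous fun u => ∫ v in c..d, g (u, v) := fun c d =>
    intervalIntegral.continuous_parametric_intervalIntegral_of_continuous' huncurry c d
  have hIint : ∀ (c d e e' : ℝ),
      IntervalIntegrable (fun u => ∫ v in c..d, g (u, v)) volume e e' := fun c d e e' =>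
    (hIcont c d).intervalIntegrable e e'
  -- the double primitive given by the iterated integral
  set G : ℝ × ℝ → ℝ := fun x => ∫ u in a.1..x.1, ∫ v in a.2..x.2, g (u, v) with hGdef
  have haveA : ∀ p x : ℝ × ℝ, dDiff G p x = ∫ u in p.1..x.1, ∫ v in p.2..x.2, g (u, v) := by
    intro p x
    have key : dDiff G p x =
        ((∫ u in a.1..x.1, ∫ v in a.2..x.2, g (u, v)) -
          ∫ u in a.1..p.1, ∫ v in a.2..x.2, g (u, v)) -
        ((∫ u in a.1..x.1, ∫ v in a.2..p.2, g (u, v)) -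
          ∫ u in a.1..p.1, ∫ v in a.2..p.2, g (u, v)) := by
      simp only [dDiff, hGdef]
      ring
    rw [key, intervalIntegral.integral_interval_sub_left (hIint _ _ _ _) (hIint _ _ _ _),
      intervalIntegral.integral_interval_sub_left (hIint _ _ _ _) (hIint _ _ _ _),
      ← intervalIntegral.integral_sub (hIint _ _ _ _) (hIint _ _ _ _)]
    apply intervalIntegral.integral_congr
    intro u _
    exact intervalIntegral.integral_interval_sub_left (hgi u _ _) (hgi u _ _)
  -- G is a double primitive of f on the rectangle
  have haveB : ∀ p ∈ Set.Icc a.1 b.1 ×ˢ Set.Icc a.2 b.2,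
      HasDoubleDerivWithinAt G (Set.Icc a.1 b.1 ×ˢ Set.Icc a.2 b.2) p (f p) := by
    intro p hp ε hε
    obtain ⟨δ, hδ, hδ'⟩ := Metric.continuousAt_iff.mp hg.continuousAt (ε / 2) (by linarith)
    refine ⟨δ, hδ, δ, hδ, ?_⟩
    intro y _ h1p h1δ h2p h2δ
    have hbound : ∀ u ∈ Set.uIoc p.1 y.1,
        ‖∫ v in p.2..y.2, (g (u, v) - g p)‖ ≤ ε / 2 * |y.2 - p.2| := by
      intro u hu
      have hu' : |u - p.1| ≤ |y.1 - p.1| := abs_sub_le_of_mem_uIoc_s19 hu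
      apply intervalIntegral.norm_integral_le_of_norm_le_const
      intro v hv
      have hv' : |v - p.2| ≤ |y.2 - p.2| := abs_sub_le_of_mem_uIoc_s19 hv
      have hdist : dist ((u, v) : ℝ × ℝ) p < δ := by
        rw [Prod.dist_eq]
        apply max_lt
        · rw [Real.dist_eq]; exact lt_of_le_of_lt hu' h1δ
        · rw [Real.dist_eq]; exact lt_of_le_of_lt hv' h2δ
      have := hδ' hdist
      rw [Real.dist_eq] at this
      rw [Real.norm_eq_abs]
      exact le_of_lt this
    have houter : ‖∫ u in p.1..y.1, ∫ v in p.2..y.2, (g (u, v) - g p)‖ ≤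
        ε / 2 * |y.2 - p.2| * |y.1 - p.1| :=
      intervalIntegral.norm_integral_le_of_norm_le_const hbound
    have hid : (∫ u in p.1..y.1, ∫ v in p.2..y.2, (g (u, v) - g p)) =
        dDiff G p y - g p * ((y.1 - p.1) * (y.2 - p.2)) := by
      rw [haveA p y]
      have inner : ∀ u : ℝ, (∫ v in p.2..y.2, (g (u, v) - g p)) =
          (∫ v in p.2..y.2, g (u, v)) - (y.2 - p.2) * g p := by
        intro u
        rw [intervalIntegral.integral_sub (hgi u _ _) intervalIntegrable_const,
          intervalIntegral.integral_const, smul_eq_mul]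
      rw [intervalIntegral.integral_congr (fun u _ => inner u),
        intervalIntegral.integral_sub (hIint _ _ _ _) intervalIntegrable_const,
        intervalIntegral.integral_const, smul_eq_mul]
      ring
    have hfp : g p = f p := hg_eq p hp
    have hy1 : 0 < |y.1 - p.1| := h1p
    have hy2 : 0 < |y.2 - p.2| := h2p
    show |dSlope G p y - f p| < ε
    have hds : dSlope G p y = dDiff G p y / ((y.1 - p.1) * (y.2 - p.2)) := rfl
    have hfrac : dDiff G p y / ((y.1 - p.1) * (y.2 - p.2)) - g p =
        (dDiff G p y - g p * ((y.1 - p.1) * (y.2 - p.2))) / ((y.1 - p.1) * (y.2 - p.2)) := by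
      rw [sub_div, mul_div_cancel_right₀ _ (mul_ne_zero (abs_pos.mp hy1) (abs_pos.mp hy2))]
    have hle : |dSlope G p y - f p| ≤ ε / 2 := by
      rw [hds, ← hfp, hfrac, abs_div, ← hid, abs_mul]
      rw [div_le_iff₀ (mul_pos hy1 hy2)]
      calc |∫ u in p.1..y.1, ∫ v in p.2..y.2, (g (u, v) - g p)| ≤
          ε / 2 * |y.2 - p.2| * |y.1 - p.1| := by
            simpa [Real.norm_eq_abs] using houter
        _ = ε / 2 * (|y.1 - p.1| * |y.2 - p.2|) := by ring
    linarith
  -- F - G has double derivative zero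
  set Hd : ℝ × ℝ → ℝ := fun t => F t - G t with hHdef
  have hH0 : ∀ x ∈ Set.Icc a.1 b.1 ×ˢ Set.Icc a.2 b.2,
      HasDoubleDerivWithinAt Hd (Set.Icc a.1 b.1 ×ˢ Set.Icc a.2 b.2) x 0 := by
    intro p hp ε hε
    obtain ⟨δ₁, hδ₁, δ₂, hδ₂, k₁⟩ := hF p hp (ε / 2) (by linarith)
    obtain ⟨δ₁', hδ₁', δ₂', hδ₂', k₂⟩ := haveB p hp (ε / 2) (by linarith)
    refine ⟨min δ₁ δ₁', lt_min hδ₁ hδ₁', min δ₂ δ₂', lt_min hδ₂ hδ₂', ?_⟩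
    intro y hy p1 l1 p2 l2
    have e1 : |dSlope F p y - f p| < ε / 2 :=
      k₁ y hy p1 (lt_of_lt_of_le l1 (min_le_left _ _)) p2 (lt_of_lt_of_le l2 (min_le_left _ _))
    have e2 : |dSlope G p y - f p| < ε / 2 :=
      k₂ y hy p1 (lt_of_lt_of_le l1 (min_le_right _ _)) p2 (lt_of_lt_of_le l2 (min_le_right _ _))
    show |dSlope Hd p y - 0| < ε
    have hsplit : dSlope Hd p y - 0 = (dSlope F p y - f p) - (dSlope G p y - f p) := by
      simp only [dSlope, dDiff, hHdef]
      ring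
    rw [hsplit]
    have := abs_sub (dSlope F p y - f p) (dSlope G p y - f p)
    linarith
  have hzero : dDiff Hd a b = 0 :=
    dDiff_eq_zero_of_deriv_zero Hd a b hab1.le hab2.le hH0
  have hdF : dDiff F a b = dDiff G a b := by
    have hsub : dDiff Hd a b = dDiff F a b - dDiff G a b := by
      simp only [dDiff, hHdef]; ring
    rw [hzero] at hsub
    linarith
  -- compute the two-dimensional integral as an iterated integral
  have hgint : IntegrableOn g (Set.Icc a.1 b.1 ×ˢ Set.Icc a.2 b.2)
      ((volume : Measure ℝ).prod volume) := by
    rw [← MeasureTheory.Measure.volume_eq_prod]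
    exact hg.continuousOn.integrableOn_compact (isCompact_Icc.prod isCompact_Icc)
  have hint : (∫ t in Set.Icc a.1 b.1 ×ˢ Set.Icc a.2 b.2, f t) =
      ∫ u in a.1..b.1, ∫ v in a.2..b.2, g (u, v) := by
    rw [setIntegral_congr_fun (measurableSet_Icc.prod measurableSet_Icc)
      (fun t ht => (hg_eq t ht).symm)]
    rw [MeasureTheory.Measure.volume_eq_prod, MeasureTheory.setIntegral_prod _ hgint]
    rw [MeasureTheory.integral_Icc_eq_integral_Ioc, ← intervalIntegral.integral_of_le hab1.le]
    apply intervalIntegral.integral_congr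
    intro u _
    show (∫ v in Set.Icc a.2 b.2, g (u, v)) = ∫ v in a.2..b.2, g (u, v)
    rw [MeasureTheory.integral_Icc_eq_integral_Ioc, ← intervalIntegral.integral_of_le hab2.le]
  rw [hint, ← haveA a b, ← hdF]
  rfl
end
end
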